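/- arXiv:1911.02343 — 8 statements merged into one kernel-verified Lean document; each statement's English description precedes it below -/
import Mathlib

section
/- For every n ≥ 3 with n ≠ 5, the cycle C_n has a star edge coloring with 3 colors; consequently χ'_s(C_n) = 3 for n ≡ 0 (mod 3) and χ'_s(C_n) ≤ 4 in general, with χ'_s(C_5) = 4. -/
/-!
Reading the colours along the cycle, an edge colouring of `C_n` is an `n`-periodic sequence `f`,
`f i` colouring the edge `{i, i + 1}`; it is a star edge colouring exactly when consecutive terms
differ and no four consecutive terms read `xyxy`. Every `n ≥ 3` other than `5` is `3a + 4b`, and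
the cyclic word `(012)^a (0121)^b` has neither defect: it is a prefix of the infinite word
`(012)^a (0121)^∞`, which has none, and it closes up correctly because both blocks begin with
`012`. Two colours never suffice, since a proper two-coloured sequence alternates, and an
exhaustive check rules out three colours on `C_5`, while `01213` uses four.
-/

open SimpleGraph Finset

/-- A star edge coloring: a proper edge coloring with no bi-colored path or
cycle on four edges. -/
def IsStarEdgeColoring {V : Type*} (G : SimpleGraph V) (c : Sym2 V → ℕ) : Prop :=
  (∀ ⦃u v w : V⦄, G.Adj u v → G.Adj u w → v ≠ w → c s(u, v) ≠ c s(u, w)) ∧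
  (∀ v₀ v₁ v₂ v₃ v₄ : V, G.Adj v₀ v₁ → G.Adj v₁ v₂ → G.Adj v₂ v₃ → G.Adj v₃ v₄ →
    v₀ ≠ v₁ → v₀ ≠ v₂ → v₀ ≠ v₃ → v₁ ≠ v₂ → v₁ ≠ v₃ → v₂ ≠ v₃ →
    v₄ ≠ v₁ → v₄ ≠ v₂ → v₄ ≠ v₃ →
    ¬(c s(v₀, v₁) = c s(v₂, v₃) ∧ c s(v₁, v₂) = c s(v₃, v₄)))

/-- `G` has a star edge coloring using colors `0, …, k-1`. -/
def StarColorable {V : Type*} (G : SimpleGraph V) (k : ℕ) : Prop :=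
  ∃ c : Sym2 V → ℕ, (∀ ⦃u v : V⦄, G.Adj u v → c s(u, v) < k) ∧ IsStarEdgeColoring G c

/-- The star chromatic index of `G`. -/
noncomputable def starChromaticIndex {V : Type*} (G : SimpleGraph V) : ℕ :=
  sInf {k | StarColorable G k}

/-- A cactus: every edge belongs to at most one cycle, i.e. any two cycles
through a common edge have the same edge set. -/
def IsCactus {V : Type*} (G : SimpleGraph V) : Prop :=
  ∀ ⦃u w : V⦄ (p : G.Walk u u) (q : G.Walk w w), p.IsCycle → q.IsCycle →
    ∀ e : Sym2 V, e ∈ p.edges → e ∈ q.edges →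
      {e' | e' ∈ p.edges} = {e' | e' ∈ q.edges}

open Function Fin.NatCast

/-- `f i` is the colour of the edge `{i, i + 1}` of a cycle. -/
def IsStarSeq (f : ℕ → ℕ) : Prop :=
  ∀ i, f i ≠ f (i + 1) ∧ ¬(f i = f (i + 2) ∧ f (i + 1) = f (i + 3))

theorem IsStarSeq.exists_two_le {f : ℕ → ℕ} (hf : IsStarSeq f) : ∃ i, 2 ≤ f i := by
  by_contra! h
  have h₀ : f 0 ≠ f 1 ∧ ¬(f 0 = f 2 ∧ f 1 = f 3) := hf 0
  have h₁ : f 1 ≠ f 2 := (hf 1).1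
  have h₂ : f 2 ≠ f 3 := (hf 2).1
  have := h 0; have := h 1; have := h 2; have := h 3
  omega

theorem IsStarSeq.exists_three_le_of_periodic_five {f : ℕ → ℕ} (hf : IsStarSeq f)
    (hper : Periodic f 5) : ∃ i, 3 ≤ f i := by
  by_contra! h
  have key : ∀ a b c d e : Fin 3,
      ¬(a ≠ b ∧ b ≠ c ∧ c ≠ d ∧ d ≠ e ∧ e ≠ a ∧ ¬(a = c ∧ b = d) ∧ ¬(b = d ∧ c = e) ∧
        ¬(c = e ∧ d = a) ∧ ¬(d = a ∧ e = b) ∧ ¬(e = b ∧ a = c)) := by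
    decide
  have h₅ : f 5 = f 0 := hper 0
  have h₆ : f 6 = f 1 := hper 1
  have h₇ : f 7 = f 2 := hper 2
  have := hf 0; have := hf 1; have := hf 2; have := hf 3; have := hf 4
  exact key ⟨f 0, h 0⟩ ⟨f 1, h 1⟩ ⟨f 2, h 2⟩ ⟨f 3, h 3⟩ ⟨f 4, h 4⟩ (by simp_all [Fin.ext_iff])

/-- `hwrap` says that `s` continues past `n - 1` as the cyclic word `s 0, …, s (n - 1)` does. -/
theorem isStarSeq_comp_mod {n : ℕ} (hn : 3 ≤ n) {s : ℕ → ℕ} (hwrap : ∀ r < 3, s (n + r) = s r)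
    (hs : ∀ i < n, s i ≠ s (i + 1) ∧ ¬(s i = s (i + 2) ∧ s (i + 1) = s (i + 3))) :
    IsStarSeq fun i => s (i % n) := by
  intro i
  have key (k : ℕ) (hk : k ≤ 3) : s ((i + k) % n) = s (i % n + k) := by
    rw [← Nat.mod_add_mod]
    have hj : i % n < n := Nat.mod_lt _ (by omega)
    rcases lt_or_ge (i % n + k) n with h | h
    · rw [Nat.mod_eq_of_lt h]
    · obtain ⟨r, hr, hjr⟩ : ∃ r < 3, i % n + k = n + r := ⟨i % n + k - n, by omega, by omega⟩
      rw [hjr, Nat.add_mod_left, Nat.mod_eq_of_lt (by omega), hwrap r hr]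
  simpa only [key 1 (by norm_num), key 2 (by norm_num), key 3 (by norm_num)] using
    hs (i % n) (Nat.mod_lt _ (by omega))

/-- The infinite word `(012)^a 0121 0121 …`. -/
def blockSeq (a r : ℕ) : ℕ :=
  if r < 3 * a then r % 3 else if (r - 3 * a) % 4 = 3 then 1 else (r - 3 * a) % 4

theorem isStarSeq_blockSeq (a : ℕ) : IsStarSeq (blockSeq a) := by
  intro i
  simp only [blockSeq]
  split_ifs <;> omega

theorem blockSeq_lt_three (a r : ℕ) : blockSeq a r < 3 := by
  simp only [blockSeq]
  split_ifs <;> omega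

theorem blockSeq_of_lt_three (a : ℕ) {r : ℕ} (hr : r < 3) : blockSeq a r = r := by
  rcases Nat.eq_zero_or_pos a with rfl | ha
  · simp only [blockSeq]
    split_ifs <;> omega
  · rw [blockSeq, if_pos (by omega), Nat.mod_eq_of_lt hr]

theorem blockSeq_three_mul_add_four_mul (a b : ℕ) {r : ℕ} (hr : r < 3) :
    blockSeq a (3 * a + 4 * b + r) = r := by
  simp only [blockSeq]
  split_ifs <;> omega

theorem exists_eq_three_mul_add_four_mul {n : ℕ} (hn : 3 ≤ n) (h5 : n ≠ 5) :
    ∃ a b, n = 3 * a + 4 * b := by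
  obtain h | h | h : n % 3 = 0 ∨ n % 3 = 1 ∨ n % 3 = 2 := by omega
  · exact ⟨n / 3, 0, by omega⟩
  · exact ⟨(n - 4) / 3, 1, by omega⟩
  · exact ⟨(n - 8) / 3, 2, by omega⟩

theorem StarColorable.mono {V : Type*} {G : SimpleGraph V} {k l : ℕ} (hkl : k ≤ l)
    (h : StarColorable G k) : StarColorable G l :=
  let ⟨c, hc, hs⟩ := h
  ⟨c, fun _ _ huv => (hc huv).trans_le hkl, hs⟩

theorem starChromaticIndex_eq_succ {V : Type*} {G : SimpleGraph V} {k : ℕ}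
    (hk : StarColorable G (k + 1)) (hk' : ¬StarColorable G k) :
    starChromaticIndex G = k + 1 := by
  refine (Nat.sInf_le hk).antisymm (not_lt.mp fun h => hk' ?_)
  exact (Nat.sInf_mem (s := {k | StarColorable G k}) ⟨_, hk⟩).mono (Nat.lt_succ_iff.mp h)

section CycleGraph

variable {n : ℕ} [NeZero n]

theorem cycleGraph_adj_iff (hn : 2 ≤ n) {u v : Fin n} :
    (cycleGraph n).Adj u v ↔ v = u + 1 ∨ u = v + 1 := by
  have h1 : ∀ x : Fin n, x.val = 1 ↔ x = 1 := fun x => by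
    rw [Fin.ext_iff, Fin.val_one', Nat.mod_eq_of_lt hn]
  rw [cycleGraph_adj', h1, h1, sub_eq_iff_eq_add, sub_eq_iff_eq_add, add_comm 1 v, add_comm 1 u]
  exact or_comm

theorem cycleGraph_adj_natCast_succ (hn : 2 ≤ n) (i : ℕ) :
    (cycleGraph n).Adj (i : Fin n) ((i + 1 : ℕ) : Fin n) :=
  (cycleGraph_adj_iff hn).mpr (Or.inl (Nat.cast_succ i))

theorem cycleGraph_succ_of_succ (hn : 2 ≤ n) {u v w : Fin n} (hvw : (cycleGraph n).Adj v w)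
    (huw : u ≠ w) (huv : v = u + 1) : w = v + 1 :=
  ((cycleGraph_adj_iff hn).mp hvw).resolve_right fun h => huw (add_right_cancel (huv.symm.trans h))

theorem cycleGraph_succ_of_succ' (hn : 2 ≤ n) {u v w : Fin n} (huv : (cycleGraph n).Adj u v)
    (huw : u ≠ w) (hvw : w = v + 1) : v = u + 1 :=
  ((cycleGraph_adj_iff hn).mp huv).resolve_right fun h => huw (h.trans hvw.symm)

theorem Fin.exists_natCast_eq (u : Fin n) : ∃ i : ℕ, (i : Fin n) = u :=
  ⟨u.val, Fin.cast_val_eq_self u⟩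

theorem Fin.natCast_ne_natCast {a b : ℕ} (hab : a < b) (hba : b - a < n) :
    (a : Fin n) ≠ (b : Fin n) := by
  rw [Ne, Fin.ext_iff, Fin.val_natCast, Fin.val_natCast]
  intro h
  have := Nat.le_of_dvd (by omega) ((Nat.modEq_iff_dvd' hab.le).mp h)
  omega

theorem Fin.add_one_add_one_ne (hn : 3 ≤ n) (u : Fin n) : u + 1 + 1 ≠ u := by
  rw [add_assoc, Ne, add_eq_left, Fin.ext_iff]
  simp only [Fin.val_add, Fin.val_one', Fin.val_zero, Nat.add_mod_mod, Nat.mod_add_mod]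
  rw [Nat.mod_eq_of_lt (by omega)]
  omega

/-- Colours the edge `{u, u + 1}` by `f u`. Summing over both orientations makes the definition
symmetric; for `3 ≤ n` at most one summand is nonzero. -/
def cycleEdgeColoring (f : ℕ → ℕ) : Sym2 (Fin n) → ℕ :=
  Sym2.lift ⟨fun u v => (if v = u + 1 then f u else 0) + (if u = v + 1 then f v else 0),
    fun _ _ => add_comm _ _⟩

theorem cycleEdgeColoring_natCast (hn : 3 ≤ n) {f : ℕ → ℕ} (hf : Periodic f n) (i : ℕ) :
    cycleEdgeColoring f s((i : Fin n), ((i + 1 : ℕ) : Fin n)) = f i := by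
  simp only [cycleEdgeColoring, Sym2.lift_mk, Nat.cast_succ, if_true,
    if_neg (Fin.add_one_add_one_ne hn _).symm, add_zero, Fin.val_natCast, hf.map_mod_nat]

end CycleGraph

theorem starColorable_cycleGraph_of_isStarSeq {n : ℕ} (hn : 3 ≤ n) {f : ℕ → ℕ} {k : ℕ}
    (hper : Periodic f n) (hf : IsStarSeq f) (hk : ∀ i, f i < k) :
    StarColorable (cycleGraph n) k := by
  have : NeZero n := ⟨by omega⟩
  have hn2 : 2 ≤ n := by omega
  set c := cycleEdgeColoring (n := n) f
  have hc (i : ℕ) : c s((i : Fin n), ((i + 1 : ℕ) : Fin n)) = f i :=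
    cycleEdgeColoring_natCast hn hper i
  have hc' (i : ℕ) : c s(((i + 1 : ℕ) : Fin n), (i : Fin n)) = f i := Sym2.eq_swap ▸ hc i
  refine ⟨c, fun u v huv => ?_, fun u v w huv huw hvw => ?_, ?_⟩
  · rcases (cycleGraph_adj_iff hn2).mp huv with rfl | rfl
    · obtain ⟨i, rfl⟩ := Fin.exists_natCast_eq u
      simpa only [← Nat.cast_succ, hc] using hk i
    · obtain ⟨i, rfl⟩ := Fin.exists_natCast_eq v
      simpa only [← Nat.cast_succ, hc'] using hk i
  · wlog hvu : u = v + 1 generalizing v w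
    · have hwu : u = w + 1 := cycleGraph_succ_of_succ' hn2 huw.symm hvw.symm
        (((cycleGraph_adj_iff hn2).mp huv).resolve_right hvu)
      exact (this w v huw huv hvw.symm hwu).symm
    have hwu : w = u + 1 := cycleGraph_succ_of_succ hn2 huw hvw hvu
    subst hvu hwu
    obtain ⟨i, rfl⟩ := Fin.exists_natCast_eq v
    simpa only [← Nat.cast_succ, hc, hc'] using (hf i).1
  · intro v₀ v₁ v₂ v₃ v₄ h₀₁ h₁₂ h₂₃ h₃₄ _ h₀₂ _ _ h₁₃ _ _ h₄₂ _
    rcases (cycleGraph_adj_iff hn2).mp h₀₁ with h₁ | h₀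
    · have h₂ := cycleGraph_succ_of_succ hn2 h₁₂ h₀₂ h₁
      have h₃ := cycleGraph_succ_of_succ hn2 h₂₃ h₁₃ h₂
      have h₄ := cycleGraph_succ_of_succ hn2 h₃₄ h₄₂.symm h₃
      subst h₁ h₂ h₃ h₄
      obtain ⟨i, rfl⟩ := Fin.exists_natCast_eq v₀
      simpa only [← Nat.cast_succ, hc] using (hf i).2
    · have h₁ := cycleGraph_succ_of_succ' hn2 h₁₂.symm h₀₂.symm h₀
      have h₂ := cycleGraph_succ_of_succ' hn2 h₂₃.symm h₁₃.symm h₁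
      have h₃ := cycleGraph_succ_of_succ' hn2 h₃₄.symm h₄₂ h₂
      subst h₀ h₁ h₂ h₃
      obtain ⟨i, rfl⟩ := Fin.exists_natCast_eq v₄
      simp only [← Nat.cast_succ, hc']
      exact fun h => (hf i).2 ⟨h.2.symm, h.1.symm⟩

theorem exists_isStarSeq_of_starColorable {n : ℕ} (hn : 3 ≤ n) {k : ℕ}
    (h : StarColorable (cycleGraph n) k) :
    ∃ f : ℕ → ℕ, Periodic f n ∧ IsStarSeq f ∧ ∀ i, f i < k := by
  have : NeZero n := ⟨by omega⟩
  obtain ⟨c, hk, hp, hs⟩ := h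
  have hadj (i : ℕ) := cycleGraph_adj_natCast_succ (n := n) (by omega) i
  have hne {a b : ℕ} (hab : a < b) (hba : b - a < n) := Fin.natCast_ne_natCast (n := n) hab hba
  set f : ℕ → ℕ := fun i => c s((i : Fin n), ((i + 1 : ℕ) : Fin n))
  have hper : Periodic f n := fun i => by
    simp only [f, Nat.cast_add, Fin.natCast_self, add_zero]
  have hproper (i : ℕ) : f i ≠ f (i + 1) := by
    have := hp (hadj i).symm (hadj (i + 1)) (hne (by omega : i < i + 2) (by omega))
    rwa [Sym2.eq_swap] at this
  refine ⟨f, hper, fun i => ⟨hproper i, ?_⟩, fun i => hk (hadj i)⟩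
  rcases hn.eq_or_lt with rfl | hn4
  · -- a triangle has no path on four edges, but there `f (i + 3) = f i`
    rintro ⟨h, -⟩
    exact hproper (i + 2) (h ▸ hper i).symm
  · exact hs _ _ _ _ _ (hadj i) (hadj (i + 1)) (hadj (i + 2)) (hadj (i + 3))
      (hne (by omega) (by omega)) (hne (by omega) (by omega)) (hne (by omega) (by omega))
      (hne (by omega) (by omega)) (hne (by omega) (by omega)) (hne (by omega) (by omega))
      (hne (by omega) (by omega)).symm (hne (by omega) (by omega)).symm
      (hne (by omega) (by omega)).symm

theorem starColorable_cycleGraph_iff {n : ℕ} (hn : 3 ≤ n) {k : ℕ} :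
    StarColorable (cycleGraph n) k ↔ ∃ f : ℕ → ℕ, Periodic f n ∧ IsStarSeq f ∧ ∀ i, f i < k :=
  ⟨exists_isStarSeq_of_starColorable hn,
    fun ⟨_, hper, hf, hk⟩ => starColorable_cycleGraph_of_isStarSeq hn hper hf hk⟩

theorem starColorable_cycleGraph_three_mul_add_four_mul {a b : ℕ} (hn : 3 ≤ 3 * a + 4 * b) :
    StarColorable (cycleGraph (3 * a + 4 * b)) 3 :=
  starColorable_cycleGraph_of_isStarSeq hn (fun i => by simp only [Nat.add_mod_right])
    (isStarSeq_comp_mod hn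
      (fun _ hr => by rw [blockSeq_three_mul_add_four_mul a b hr, blockSeq_of_lt_three a hr])
      (fun i _ => isStarSeq_blockSeq a i))
    (fun _ => blockSeq_lt_three a _)

theorem starColorable_cycleGraph_three {n : ℕ} (hn : 3 ≤ n) (h5 : n ≠ 5) :
    StarColorable (cycleGraph n) 3 := by
  obtain ⟨a, b, rfl⟩ := exists_eq_three_mul_add_four_mul hn h5
  exact starColorable_cycleGraph_three_mul_add_four_mul hn

theorem not_starColorable_cycleGraph_two {n : ℕ} (hn : 3 ≤ n) :
    ¬StarColorable (cycleGraph n) 2 := by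
  intro h
  obtain ⟨f, -, hf, hk⟩ := exists_isStarSeq_of_starColorable hn h
  obtain ⟨i, hi⟩ := hf.exists_two_le
  exact (hk i).not_ge hi

theorem starChromaticIndex_cycleGraph {n : ℕ} (hn : 3 ≤ n) (h5 : n ≠ 5) :
    starChromaticIndex (cycleGraph n) = 3 :=
  starChromaticIndex_eq_succ (starColorable_cycleGraph_three hn h5)
    (not_starColorable_cycleGraph_two hn)

theorem starColorable_cycleGraph_five_four : StarColorable (cycleGraph 5) 4 := by
  set s : ℕ → ℕ := fun r => [0, 1, 2, 1, 3, 0, 1, 2].getD r 0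
  refine starColorable_cycleGraph_of_isStarSeq (f := fun i => s (i % 5)) (by norm_num)
    (fun i => by simp only [Nat.add_mod_right]) (isStarSeq_comp_mod (by norm_num) ?_ ?_)
    (fun i => ?_)
  · decide
  · decide
  · have : ∀ r < 5, s r < 4 := by decide
    exact this _ (Nat.mod_lt _ (by norm_num))

theorem not_starColorable_cycleGraph_five_three : ¬StarColorable (cycleGraph 5) 3 := by
  intro h
  obtain ⟨f, hper, hf, hk⟩ := exists_isStarSeq_of_starColorable (by norm_num) h
  obtain ⟨i, hi⟩ := hf.exists_three_le_of_periodic_five hper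
  exact (hk i).not_ge hi

theorem starChromaticIndex_cycleGraph_five : starChromaticIndex (cycleGraph 5) = 4 :=
  starChromaticIndex_eq_succ starColorable_cycleGraph_five_four
    not_starColorable_cycleGraph_five_three

/-- For every `n ≥ 3` with `n ≠ 5`, `C_n` has a star edge coloring with 3 colors;
consequently `χ'ₛ(C_n) = 3` when `3 ∣ n`, `χ'ₛ(C_n) ≤ 4` in general, and `χ'ₛ(C_5) = 4`. -/
theorem starChromaticIndex_cycles :
    (∀ n : ℕ, 3 ≤ n → n ≠ 5 → StarColorable (SimpleGraph.cycleGraph n) 3) ∧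
    (∀ n : ℕ, 3 ≤ n → n % 3 = 0 → starChromaticIndex (SimpleGraph.cycleGraph n) = 3) ∧
    (∀ n : ℕ, 3 ≤ n → starChromaticIndex (SimpleGraph.cycleGraph n) ≤ 4) ∧
    starChromaticIndex (SimpleGraph.cycleGraph 5) = 4 := by
  refine ⟨fun n hn h5 => starColorable_cycleGraph_three hn h5,
    fun n hn h3 => starChromaticIndex_cycleGraph hn (by omega), fun n hn => ?_,
    starChromaticIndex_cycleGraph_five⟩
  rcases eq_or_ne n 5 with rfl | h5
  · exact starChromaticIndex_cycleGraph_five.le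
  · exact (starChromaticIndex_cycleGraph hn h5).trans_le (by norm_num)
end

section
/- If G is a unicyclic graph (a connected graph with exactly one cycle) with maximum degree Δ, then χ'_s(G) ≤ ⌊3Δ/2⌋ + 1. -/
open SimpleGraph Finset

/-- A unicyclic graph: connected, with exactly one cycle. -/
def IsUnicyclic {V : Type*} (G : SimpleGraph V) : Prop :=
  G.Connected ∧ (∃ (v : V) (p : G.Walk v v), p.IsCycle) ∧
    ∀ ⦃u w : V⦄ (p : G.Walk u u) (q : G.Walk w w), p.IsCycle → q.IsCycle →
      {e | e ∈ p.edges} = {e | e ∈ q.edges}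

/-!
The cycle `C` is coloured `0, 1, 2, 0, 1, 2, …` with a fourth colour on its last edge when
`3 ∤ |C|`; this uses at most 4 colours and has no bicoloured path on four edges. Every other edge
joins a vertex `v` to its parent (the next vertex towards `C`) and gets a label `c v`, chosen level
by level away from `C`. The labels of the children of `u` are distinct and avoid
* the four cycle colours within distance one of `u`, if `u` lies on `C`;
* otherwise the label of `u`, the colours of the edges at the parent of `u` that go up or along
  `C`, and the labels of the siblings that `u` beats in a balanced tournament on its siblings.
As `u` beats at most half of its siblings, `⌊3Δ/2⌋ + 1` colours leave room for all children.

Then the end edges of a path `x y z w` get different colours unless the path lies on `C` or both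
`x` and `w` are children of `y` and `z`. Hence a bicoloured path on four edges lies on `C`, which
the cycle colouring excludes, or climbs two levels and descends again between two siblings, which
the tournament excludes.
-/

theorem Finset.exists_tournament_card_le_half {α : Type*} [DecidableEq α] (s : Finset α) :
    ∃ B : α → Finset α, (∀ v, B v ⊆ s) ∧ (∀ v, #(B v) ≤ #s / 2) ∧
      ∀ v ∈ s, ∀ w ∈ s, v ≠ w → w ∈ B v ∨ v ∈ B w := by
  obtain rfl | hs := s.eq_empty_or_nonempty
  · exact ⟨fun _ => ∅, by simp⟩
  have : NeZero #s := ⟨hs.card_pos.ne'⟩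
  obtain ⟨e⟩ : Nonempty (s ≃ ZMod #s) := Fintype.card_eq.mp (by simp)
  set ι : α → ZMod #s := fun v => if h : v ∈ s then e ⟨v, h⟩ else 0
  have hι : Set.InjOn ι s := fun v hv w hw h => by
    rw [show ι v = e ⟨v, hv⟩ from dif_pos hv, show ι w = e ⟨w, hw⟩ from dif_pos hw] at h
    exact congrArg Subtype.val (e.injective h)
  -- `v` beats the next `#s / 2` elements of `s` in the cyclic order given by `ι`
  refine ⟨fun v => {w ∈ s | (ι w - ι v).val ∈ Icc 1 (#s / 2)}, fun v => filter_subset _ _,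
    fun v => ?_, fun v hv w hw hvw => ?_⟩
  · calc #{w ∈ s | (ι w - ι v).val ∈ Icc 1 (#s / 2)} ≤ #(Icc 1 (#s / 2)) := by
          refine card_le_card_of_injOn (fun w => (ι w - ι v).val)
            (fun w hw => (mem_filter.1 hw).2)
            fun w₁ hw₁ w₂ hw₂ h => hι (mem_filter.1 hw₁).1 (mem_filter.1 hw₂).1 ?_
          simpa using ZMod.val_injective _ h
      _ = #s / 2 := by simp
  · have hne : ι w - ι v ≠ 0 := sub_ne_zero.2 fun h => hvw (hι hw hv h).symm
    have hpos := (ZMod.val_pos (n := #s)).2 hne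
    have hneg := ZMod.neg_val (ι w - ι v)
    rw [if_neg hne, neg_sub] at hneg
    have hlt := ZMod.val_lt (ι w - ι v)
    simp only [mem_filter, mem_Icc, hv, hw, true_and]
    omega

theorem Finset.exists_mapsTo_injOn_of_card_le {α β : Type*} [Nonempty β] {s : Finset α}
    {t : Finset β} (h : #s ≤ #t) : ∃ g : α → β, Set.MapsTo g s t ∧ Set.InjOn g s := by
  refine Set.Finite.exists_injOn_of_encard_le (t := (t : Set β)) (finite_toSet s) ?_
  rw [Set.encard_coe_eq_coe_finsetCard, Set.encard_coe_eq_coe_finsetCard]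
  exact_mod_cast h

theorem exists_greedy_labelling {V : Type*} [Fintype V] [DecidableEq V]
    (depth : V → ℕ) (parent : V → V)
    (depth_parent : ∀ v, depth v ≠ 0 → depth (parent v) + 1 = depth v)
    (P : ℕ) (forb : (V → ℕ) → V → Finset ℕ)
    (forb_congr : ∀ c c' u, (∀ w, depth w ≤ depth u → c w = c' w) → forb c u = forb c' u)
    (card_le : ∀ c u, #{v | depth v ≠ 0 ∧ parent v = u} + #(forb c u) ≤ P) :
    ∃ c : V → ℕ, ∀ v, depth v ≠ 0 → c v ∈ range P \ forb c (parent v) ∧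
      ∀ w, depth w ≠ 0 → parent w = parent v → c w = c v → w = v := by
  have depth_eq {v w} (hv : depth v ≠ 0) (hw : depth w ≠ 0) (h : parent w = parent v) :
      depth w = depth v := by
    have := depth_parent v hv; have := depth_parent w hw; rw [h] at *; omega
  suffices ∀ k, ∃ c : V → ℕ, ∀ v, depth v ≠ 0 → depth v ≤ k →
      c v ∈ range P \ forb c (parent v) ∧
        ∀ w, depth w ≠ 0 → parent w = parent v → c w = c v → w = v by
    obtain ⟨c, hc⟩ := this (univ.sup depth)
    exact ⟨c, fun v hv => hc v hv (le_sup (mem_univ v))⟩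
  intro k
  induction k with
  | zero => exact ⟨0, fun v hv hk => absurd (Nat.le_zero.1 hk) hv⟩
  | succ k ih =>
    obtain ⟨c, hc⟩ := ih
    have hinj (u : V) := Finset.exists_mapsTo_injOn_of_card_le
      (s := {v | depth v ≠ 0 ∧ parent v = u}) (t := range P \ forb c u) (by
        have := le_card_sdiff (forb c u) (range P)
        have := card_le c u
        simp only [card_range] at *
        omega)
    choose g hg hgi using hinj
    -- only level `k + 1` is relabelled, so `forb` is unchanged at the parents of its vertices
    set c' : V → ℕ := fun v => if depth v = k + 1 then g (parent v) v else c v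
    have hagree : ∀ u, depth u ≤ k → forb c' u = forb c u := fun u hu =>
      forb_congr _ _ u fun w hw => if_neg (by omega)
    refine ⟨c', fun v hv hvk => ?_⟩
    rw [hagree _ (by have := depth_parent v hv; omega)]
    obtain hvk | hvk := Nat.lt_or_eq_of_le hvk
    · have hcv : ∀ w, depth w = depth v → c' w = c w := fun w hw => if_neg (by omega)
      refine ⟨by rw [hcv v rfl]; exact (hc v hv (by omega)).1, fun w hw hwv h => ?_⟩
      rw [hcv w (depth_eq hv hw hwv), hcv v rfl] at h
      exact (hc v hv (by omega)).2 w hw hwv h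
    · have hcv : ∀ w, depth w = depth v → c' w = g (parent w) w := fun w hw => if_pos (by omega)
      refine ⟨by rw [hcv v rfl]; exact hg _ (by simp [hv]), fun w hw hwv h => ?_⟩
      rw [hcv w (depth_eq hv hw hwv), hcv v rfl, hwv] at h
      exact hgi (parent v) (by simp [hw, hwv]) (by simp [hv]) h

def cycleColor (n : ℕ) (i : ZMod n) : ℕ := if i.val + 1 = n ∧ ¬ 3 ∣ n then 3 else i.val % 3

theorem cycleColor_lt_four (n : ℕ) (i : ZMod n) : cycleColor n i < 4 := by
  unfold cycleColor; split_ifs <;> omega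

section CycleColor

variable {n : ℕ} [NeZero n]

theorem ZMod.val_add_natCast_of_le (i : ZMod n) {k : ℕ} (hk : k ≤ n) :
    (i + k).val = if i.val + k < n then i.val + k else i.val + k - n := by
  have := i.val_lt
  rw [ZMod.val_add, ZMod.val_natCast, Nat.add_mod_mod]
  split_ifs with h
  · exact Nat.mod_eq_of_lt h
  · rw [Nat.mod_eq_sub_mod (by omega), Nat.mod_eq_of_lt (by omega)]

theorem cycleColor_add_one_ne (hn : 3 ≤ n) (i : ZMod n) :
    cycleColor n (i + 1) ≠ cycleColor n i := by
  have h := i.val_add_natCast_of_le (k := 1) (by omega)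
  have := i.val_lt
  rw [Nat.cast_one] at h
  unfold cycleColor
  rw [h]
  split_ifs <;> omega

theorem cycleColor_not_bicolored (hn : 3 ≤ n) (i : ZMod n) :
    ¬(cycleColor n i = cycleColor n (i + 2) ∧ cycleColor n (i + 1) = cycleColor n (i + 3)) := by
  have h1 := i.val_add_natCast_of_le (k := 1) (by omega)
  have h2 := i.val_add_natCast_of_le (k := 2) (by omega)
  have h3 := i.val_add_natCast_of_le (k := 3) (by omega)
  have := i.val_lt
  rw [Nat.cast_one] at h1
  rw [Nat.cast_ofNat] at h2 h3
  unfold cycleColor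
  rw [h1, h2, h3]
  split_ifs <;> omega

end CycleColor

namespace SimpleGraph

variable {V : Type*} (G : SimpleGraph V)

/-- The length of a shortest walk from `v` into `C` (`0` if there is none). -/
noncomputable def distToSet (C : Set V) (v : V) : ℕ :=
  sInf {k | ∃ c ∈ C, ∃ W : G.Walk v c, W.length = k}

variable {G} {C : Set V} {v x y c : V}

theorem distToSet_le (hc : c ∈ C) (W : G.Walk v c) : G.distToSet C v ≤ W.length :=
  Nat.sInf_le ⟨c, hc, W, rfl⟩

theorem Connected.exists_walk_length_eq_distToSet (hG : G.Connected) (hC : C.Nonempty) (v : V) :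
    ∃ c ∈ C, ∃ W : G.Walk v c, W.length = G.distToSet C v := by
  obtain ⟨c, hc⟩ := hC
  exact Nat.sInf_mem (s := {k | ∃ c ∈ C, ∃ W : G.Walk v c, W.length = k})
    ⟨_, c, hc, (hG v c).some, rfl⟩

theorem Connected.distToSet_eq_zero_iff (hG : G.Connected) (hC : C.Nonempty) :
    G.distToSet C v = 0 ↔ v ∈ C := by
  refine ⟨fun h => ?_, fun h => Nat.le_zero.1 (distToSet_le h Walk.nil)⟩
  obtain ⟨c, hc, W, hW⟩ := hG.exists_walk_length_eq_distToSet hC v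
  rwa [W.eq_of_length_eq_zero (hW.trans h)]

theorem Adj.distToSet_le_add_one (h : G.Adj x y) (hG : G.Connected) (hC : C.Nonempty) :
    G.distToSet C x ≤ G.distToSet C y + 1 := by
  obtain ⟨c, hc, W, hW⟩ := hG.exists_walk_length_eq_distToSet hC y
  simpa [hW] using distToSet_le hc (Walk.cons h W)

theorem distToSet_lt_of_mem_support (hc : c ∈ C) (W : G.Walk v c)
    (hW : W.length = G.distToSet C v) (hx : x ∈ W.support) (hxv : x ≠ v) :
    G.distToSet C x < G.distToSet C v := by
  classical
  have h1 := distToSet_le hc (W.dropUntil x hx)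
  have h2 := congrArg Walk.length (W.take_spec hx)
  have h3 : (W.takeUntil x hx).length ≠ 0 := fun h =>
    hxv ((W.takeUntil x hx).eq_of_length_eq_zero h).symm
  rw [Walk.length_append] at h2
  omega

theorem Connected.exists_adj_distToSet_add_one (hG : G.Connected) (hC : C.Nonempty)
    (hv : G.distToSet C v ≠ 0) : ∃ u, G.Adj v u ∧ G.distToSet C u + 1 = G.distToSet C v := by
  obtain ⟨c, hc, W, hW⟩ := hG.exists_walk_length_eq_distToSet hC v
  have hnil : ¬ W.Nil := by rw [← Walk.length_eq_zero_iff]; omega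
  refine ⟨W.snd, W.adj_snd hnil, le_antisymm ?_ ?_⟩
  · have := distToSet_le hc W.tail
    have := W.length_tail_add_one hnil
    omega
  · exact (W.adj_snd hnil).distToSet_le_add_one hG hC

theorem Walk.exists_walk_edges_subset {u u' : V} (p : G.Walk u u') (hx : x ∈ p.support)
    (hy : y ∈ p.support) : ∃ q : G.Walk x y, ∀ e ∈ q.edges, e ∈ p.edges := by
  classical
  exact ⟨(p.takeUntil x hx).reverse.append (p.takeUntil y hy), fun e he => by
    rw [Walk.edges_append, List.mem_append, Walk.edges_reverse, List.mem_reverse] at he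
    exact he.elim (fun h => p.edges_takeUntil_subset_edges hx h)
      (fun h => p.edges_takeUntil_subset_edges hy h)⟩

end SimpleGraph

namespace IsUnicyclic

variable {V : Type*} {G : SimpleGraph V} {w : V} {p : G.Walk w w}

theorem isBridge (hG : IsUnicyclic G) (hp : p.IsCycle) {a b : V} (hab : G.Adj a b)
    (he : s(a, b) ∉ p.edges) : G.IsBridge s(a, b) :=
  (isBridge_iff_forall_cycle_notMem hab).2 fun _ q hq hq' =>
    he ((Set.ext_iff.1 (hG.2.2 q p hq hp) _).1 hq')

theorem distToSet_ne_zero_and_parent_eq (hG : IsUnicyclic G) (hp : p.IsCycle) {par : V → V}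
    (hpar : ∀ v, G.distToSet {x | x ∈ p.support} v ≠ 0 →
      G.Adj v (par v) ∧ G.distToSet {x | x ∈ p.support} (par v) + 1 =
        G.distToSet {x | x ∈ p.support} v)
    {a b : V} (hab : G.Adj a b) (he : s(a, b) ∉ p.edges)
    (hba : G.distToSet {x | x ∈ p.support} b ≤ G.distToSet {x | x ∈ p.support} a) :
    G.distToSet {x | x ∈ p.support} a ≠ 0 ∧ par a = b := by
  have hC : {x | x ∈ p.support}.Nonempty := ⟨w, p.start_mem_support⟩
  by_contra hne
  -- otherwise `a` and `b` are joined through the cycle without using the edge `ab`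
  obtain ⟨c, hc, Wa, hWa⟩ :
      ∃ c ∈ {x | x ∈ p.support}, ∃ Wa : G.Walk a c, s(a, b) ∉ Wa.edges := by
    by_cases ha : G.distToSet {x | x ∈ p.support} a = 0
    · exact ⟨a, (hG.1.distToSet_eq_zero_iff hC).1 ha, Walk.nil, by simp⟩
    obtain ⟨c, hc, W, hW⟩ := hG.1.exists_walk_length_eq_distToSet hC (par a)
    refine ⟨c, hc, Walk.cons (hpar a ha).1 W, ?_⟩
    rw [Walk.edges_cons, List.mem_cons, not_or]
    refine ⟨fun h => hne ⟨ha, (Sym2.congr_right.1 h).symm⟩, fun h => ?_⟩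
    have := distToSet_lt_of_mem_support hc W hW (W.fst_mem_support_of_mem_edges h)
      (hpar a ha).1.ne
    have := (hpar a ha).2
    omega
  obtain ⟨c', hc', Wb, hWb⟩ := hG.1.exists_walk_length_eq_distToSet hC b
  have hWb' : s(a, b) ∉ Wb.edges := fun h => by
    have := distToSet_lt_of_mem_support hc' Wb hWb (Wb.fst_mem_support_of_mem_edges h) hab.ne
    omega
  obtain ⟨M, hM⟩ := p.exists_walk_edges_subset hc hc'
  have := isBridge_iff_forall_walk_mem_edges.1 (hG.isBridge hp hab he)
    (Wa.append (M.append Wb.reverse))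
  simp only [Walk.edges_append, Walk.edges_reverse, List.mem_append, List.mem_reverse] at this
  exact this.elim hWa fun h => h.elim (fun h => he (hM _ h)) hWb'

end IsUnicyclic

/-- A unicyclic graph seen as a cycle `cyc : ZMod n → V` with a rooted tree hanging from each
cycle vertex; `depth` is the distance to the cycle. -/
structure UnicyclicDecomposition {V : Type*} (G : SimpleGraph V) where
  n : ℕ
  three_le : 3 ≤ n
  cyc : ZMod n → V
  cyc_injective : Function.Injective cyc
  adj_cyc : ∀ i, G.Adj (cyc i) (cyc (i + 1))
  depth : V → ℕ
  depth_eq_zero_iff : ∀ v, depth v = 0 ↔ ∃ i, cyc i = v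
  parent : V → V
  adj_parent : ∀ v, depth v ≠ 0 → G.Adj v (parent v)
  depth_parent : ∀ v, depth v ≠ 0 → depth (parent v) + 1 = depth v
  adj_cases : ∀ a b, G.Adj a b → (∃ i, s(a, b) = s(cyc i, cyc (i + 1))) ∨
    (depth a ≠ 0 ∧ parent a = b) ∨ (depth b ≠ 0 ∧ parent b = a)

theorem IsUnicyclic.nonempty_unicyclicDecomposition {V : Type*} {G : SimpleGraph V}
    (hG : IsUnicyclic G) : Nonempty (UnicyclicDecomposition G) := by
  obtain ⟨w, p, hp⟩ := hG.2.1
  have hn := hp.three_le_length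
  have : NeZero p.length := ⟨by omega⟩
  set cyc : ZMod p.length → V := fun i => p.getVert i.val
  have cyc_natCast (k : ℕ) (hk : k ≤ p.length) : cyc k = p.getVert k := by
    change p.getVert (k : ZMod p.length).val = _
    rw [ZMod.val_natCast]
    obtain hk | rfl := hk.lt_or_eq
    · rw [Nat.mod_eq_of_lt hk]
    · rw [Nat.mod_self, p.getVert_zero, p.getVert_length]
  have cyc_add_one (i : ZMod p.length) : cyc (i + 1) = p.getVert (i.val + 1) := by
    rw [← cyc_natCast _ i.val_lt, Nat.cast_add_one, ZMod.natCast_zmod_val]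
  set C : Set V := {x | x ∈ p.support}
  have hC : C.Nonempty := ⟨w, p.start_mem_support⟩
  choose! parent hparent using fun v (hv : G.distToSet C v ≠ 0) =>
    hG.1.exists_adj_distToSet_add_one hC hv
  refine ⟨⟨p.length, hn, cyc, fun i j h => ZMod.val_injective _ ?_, fun i => ?_,
    G.distToSet C, fun v => ?_, parent, fun v hv => (hparent v hv).1,
    fun v hv => (hparent v hv).2, fun a b hab => ?_⟩⟩
  · have := i.val_lt; have := j.val_lt
    exact hp.getVert_injOn' (by simp; omega) (by simp; omega) h
  · rw [cyc_add_one]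
    exact p.adj_getVert_succ i.val_lt
  · rw [hG.1.distToSet_eq_zero_iff hC]
    refine ⟨fun hv => ?_, fun ⟨i, hi⟩ => hi ▸ p.getVert_mem_support _⟩
    obtain ⟨k, rfl, hk⟩ := Walk.mem_support_iff_exists_getVert.1 hv
    exact ⟨k, cyc_natCast k hk⟩
  by_cases he : s(a, b) ∈ p.edges
  · obtain ⟨k, hk, h⟩ := (Walk.mk_mem_edges_iff_exists p).1 he
    refine Or.inl ⟨k, ?_⟩
    rw [← h, ← cyc_natCast k hk.le, ← cyc_natCast (k + 1) hk, Nat.cast_add_one]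
  obtain hba | hab' := le_total (G.distToSet C b) (G.distToSet C a)
  · exact Or.inr (Or.inl (hG.distToSet_ne_zero_and_parent_eq hp hparent hab he hba))
  · rw [Sym2.eq_swap] at he
    exact Or.inr (Or.inr (hG.distToSet_ne_zero_and_parent_eq hp hparent hab.symm he hab'))

namespace UnicyclicDecomposition

variable {V : Type*} {G : SimpleGraph V} (S : UnicyclicDecomposition G)

instance : NeZero S.n := ⟨by have := S.three_le; omega⟩

theorem two_ne_zero : (2 : ZMod S.n) ≠ 0 := by
  intro h
  have h2 := (ZMod.natCast_eq_zero_iff 2 S.n).1 (by exact_mod_cast h)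
  have := Nat.le_of_dvd (by norm_num) h2
  have := S.three_le
  omega

theorem depth_cyc (i : ZMod S.n) : S.depth (S.cyc i) = 0 := (S.depth_eq_zero_iff _).2 ⟨i, rfl⟩

theorem neighbor_cases {u x : V} (h : G.Adj u x) :
    (∃ j, u = S.cyc j ∧ (x = S.cyc (j + 1) ∨ x = S.cyc (j - 1))) ∨
      (S.depth u ≠ 0 ∧ x = S.parent u) ∨ (S.depth x ≠ 0 ∧ S.parent x = u) := by
  rcases S.adj_cases u x h with ⟨i, hi⟩ | ⟨hu, rfl⟩ | hx
  · rcases Sym2.eq_iff.1 hi with ⟨rfl, rfl⟩ | ⟨rfl, rfl⟩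
    · exact Or.inl ⟨i, rfl, Or.inl rfl⟩
    · exact Or.inl ⟨i + 1, rfl, Or.inr (by rw [add_sub_cancel_right])⟩
  · exact Or.inr (Or.inl ⟨hu, rfl⟩)
  · exact Or.inr (Or.inr hx)

noncomputable def idx (v : V) : ZMod S.n := Function.invFun S.cyc v

@[simp] theorem idx_cyc (i : ZMod S.n) : S.idx (S.cyc i) = i :=
  Function.leftInverse_invFun S.cyc_injective i

open Classical in
/-- The cycle edge `cyc i — cyc (i + 1)` gets colour `cycleColor S.n i` and the tree edge
`v — parent v` gets colour `c v`; non-edges get `0`. -/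
noncomputable def edgeColor (c : V → ℕ) (e : Sym2 V) : ℕ :=
  if h : ∃ i, e = s(S.cyc i, S.cyc (i + 1)) then cycleColor S.n h.choose
  else if h : ∃ v, S.depth v ≠ 0 ∧ e = s(v, S.parent v) then c h.choose else 0

variable {S} {c : V → ℕ}

theorem edgeColor_cyc (i : ZMod S.n) :
    S.edgeColor c s(S.cyc i, S.cyc (i + 1)) = cycleColor S.n i := by
  have h : ∃ j, s(S.cyc i, S.cyc (i + 1)) = s(S.cyc j, S.cyc (j + 1)) := ⟨i, rfl⟩
  rw [edgeColor, dif_pos h]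
  congr
  rcases Sym2.eq_iff.1 h.choose_spec with ⟨h1, -⟩ | ⟨h1, h2⟩
  · exact S.cyc_injective h1.symm
  · exact absurd (by linear_combination S.cyc_injective h2 - S.cyc_injective h1) S.two_ne_zero

theorem edgeColor_cyc_sub (i : ZMod S.n) :
    S.edgeColor c s(S.cyc i, S.cyc (i - 1)) = cycleColor S.n (i - 1) := by
  rw [Sym2.eq_swap, ← edgeColor_cyc, sub_add_cancel]

theorem edgeColor_parent {v : V} (hv : S.depth v ≠ 0) :
    S.edgeColor c s(v, S.parent v) = c v := by
  have h1 : ¬ ∃ i, s(v, S.parent v) = s(S.cyc i, S.cyc (i + 1)) := by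
    rintro ⟨i, hi⟩
    have hmem := Sym2.mem_mk_left v (S.parent v)
    rw [hi, Sym2.mem_iff] at hmem
    rcases hmem with rfl | rfl <;> exact hv (S.depth_cyc _)
  have h2 : ∃ w, S.depth w ≠ 0 ∧ s(v, S.parent v) = s(w, S.parent w) := ⟨v, hv, rfl⟩
  rw [edgeColor, dif_neg h1, dif_pos h2]
  obtain ⟨hw, he⟩ := h2.choose_spec
  rcases Sym2.eq_iff.1 he with ⟨h, -⟩ | ⟨h, h'⟩
  · rw [← h]
  · have := S.depth_parent _ hv; have := S.depth_parent _ hw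
    rw [← h, ← h'] at *
    omega

theorem edgeColor_parent' {v : V} (hv : S.depth v ≠ 0) :
    S.edgeColor c s(S.parent v, v) = c v := by
  rw [Sym2.eq_swap, edgeColor_parent hv]

theorem cyc_step {a : ZMod S.n} {z : V} (h : G.Adj (S.cyc a) z) (hz : S.depth z = 0) :
    ∃ ε : ZMod S.n, (ε = 1 ∨ ε = -1) ∧ z = S.cyc (a + ε) := by
  rcases S.neighbor_cases h with ⟨j, hj, rfl | rfl⟩ | ⟨hd, -⟩ | ⟨hd, -⟩
  · exact ⟨1, Or.inl rfl, by rw [S.cyc_injective hj]⟩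
  · exact ⟨-1, Or.inr rfl, by rw [S.cyc_injective hj, sub_eq_add_neg]⟩
  · exact absurd (S.depth_cyc a) hd
  · exact absurd hz hd

theorem cyc_step_of_ne {a ε : ZMod S.n} {z : V} (hε : ε = 1 ∨ ε = -1)
    (h : G.Adj (S.cyc (a + ε)) z) (hz : S.depth z = 0) (hza : z ≠ S.cyc a) :
    z = S.cyc (a + ε + ε) := by
  obtain ⟨δ, hδ, rfl⟩ := cyc_step h hz
  rcases hε with rfl | rfl <;> rcases hδ with rfl | rfl
  · rfl
  · exact absurd (by rw [add_neg_cancel_right]) hza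
  · exact absurd (by rw [neg_add_cancel_right]) hza
  · rfl

theorem not_bicolored_of_depth_eq_zero {v₀ v₁ v₂ v₃ v₄ : V}
    (hd : S.depth v₀ = 0 ∧ S.depth v₁ = 0 ∧ S.depth v₂ = 0 ∧ S.depth v₃ = 0 ∧ S.depth v₄ = 0)
    (h₀₁ : G.Adj v₀ v₁) (h₁₂ : G.Adj v₁ v₂) (h₂₃ : G.Adj v₂ v₃) (h₃₄ : G.Adj v₃ v₄)
    (n₀₂ : v₀ ≠ v₂) (n₁₃ : v₁ ≠ v₃) (n₂₄ : v₂ ≠ v₄) :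
    ¬(S.edgeColor c s(v₀, v₁) = S.edgeColor c s(v₂, v₃) ∧
      S.edgeColor c s(v₁, v₂) = S.edgeColor c s(v₃, v₄)) := by
  obtain ⟨d₀, d₁, d₂, d₃, d₄⟩ := hd
  obtain ⟨a, rfl⟩ := (S.depth_eq_zero_iff v₀).1 d₀
  obtain ⟨ε, hε, rfl⟩ := cyc_step h₀₁ d₁
  obtain rfl := cyc_step_of_ne hε h₁₂ d₂ n₀₂.symm
  obtain rfl := cyc_step_of_ne hε h₂₃ d₃ n₁₃.symm
  obtain rfl := cyc_step_of_ne hε h₃₄ d₄ n₂₄.symm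
  rcases hε with rfl | rfl
  · simp only [edgeColor_cyc]
    rw [show a + 1 + 1 = a + 2 by ring, show a + 2 + 1 = a + 3 by ring]
    exact cycleColor_not_bicolored S.three_le a
  · simp only [← sub_eq_add_neg, edgeColor_cyc_sub]
    rintro ⟨h₁, h₂⟩
    refine cycleColor_not_bicolored S.three_le (a - 1 - 1 - 1 - 1) ⟨?_, ?_⟩
    · rw [show a - 1 - 1 - 1 - 1 + 2 = a - 1 - 1 by ring, h₂]
    · rw [show a - 1 - 1 - 1 - 1 + 1 = a - 1 - 1 - 1 by ring,
        show a - 1 - 1 - 1 - 1 + 3 = a - 1 by ring, h₁]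

theorem edgeColor_lt {P : ℕ} (hP : 4 ≤ P) (hc : ∀ v, S.depth v ≠ 0 → c v < P) {u v : V}
    (h : G.Adj u v) : S.edgeColor c s(u, v) < P := by
  rcases S.neighbor_cases h with ⟨j, rfl, rfl | rfl⟩ | ⟨hu, rfl⟩ | ⟨hv, rfl⟩
  · rw [edgeColor_cyc]; exact (cycleColor_lt_four _ _).trans_le hP
  · rw [edgeColor_cyc_sub]; exact (cycleColor_lt_four _ _).trans_le hP
  · rw [edgeColor_parent hu]; exact hc u hu
  · rw [edgeColor_parent' hv]; exact hc v hv

section Labelling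

variable (S) [Fintype V] [DecidableEq V]

def children (u : V) : Finset V := {v | S.depth v ≠ 0 ∧ S.parent v = u}

theorem mem_children {u v : V} : v ∈ S.children u ↔ S.depth v ≠ 0 ∧ S.parent v = u := by
  simp [children]

noncomputable def tournament (u : V) : V → Finset V :=
  (S.children u).exists_tournament_card_le_half.choose

noncomputable def beaten (v : V) : Finset V := S.tournament (S.parent v) v

theorem beaten_subset (v : V) : S.beaten v ⊆ S.children (S.parent v) :=
  (S.children (S.parent v)).exists_tournament_card_le_half.choose_spec.1 v

theorem card_beaten_le (v : V) : #(S.beaten v) ≤ #(S.children (S.parent v)) / 2 :=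
  (S.children (S.parent v)).exists_tournament_card_le_half.choose_spec.2.1 v

theorem mem_beaten_or_mem_beaten {v w : V} (hv : S.depth v ≠ 0) (hw : S.depth w ≠ 0)
    (h : S.parent v = S.parent w) (hvw : v ≠ w) : w ∈ S.beaten v ∨ v ∈ S.beaten w := by
  rw [beaten, beaten, ← h]
  exact (S.children (S.parent v)).exists_tournament_card_le_half.choose_spec.2.2 v
    (S.mem_children.2 ⟨hv, rfl⟩) w (S.mem_children.2 ⟨hw, h.symm⟩) hvw

/-- The cycle colours within distance one of the cycle vertex `u`. -/
noncomputable def nearColors (u : V) : Finset ℕ :=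
  {cycleColor S.n (S.idx u - 2), cycleColor S.n (S.idx u - 1), cycleColor S.n (S.idx u),
    cycleColor S.n (S.idx u + 1)}

/-- The colours of the edges at `parent u` that lead up the tree or along the cycle. -/
noncomputable def upColors (c : V → ℕ) (u : V) : Finset ℕ :=
  if S.depth (S.parent u) = 0 then
    {cycleColor S.n (S.idx (S.parent u) - 1), cycleColor S.n (S.idx (S.parent u))}
  else {c (S.parent u)}

/-- The colours that the edges from `u` down to its children must avoid. -/
noncomputable def forbidden (c : V → ℕ) (u : V) : Finset ℕ :=
  if S.depth u = 0 then S.nearColors u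
  else insert (c u) (S.upColors c u ∪ (S.beaten u).image c)

structure IsStarLabelling (c : V → ℕ) : Prop where
  not_mem_forbidden : ∀ v, S.depth v ≠ 0 → c v ∉ S.forbidden c (S.parent v)
  injOn_siblings : ∀ v w, S.depth v ≠ 0 → S.depth w ≠ 0 → S.parent v = S.parent w →
    c v = c w → v = w

variable {S} {c : V → ℕ}

theorem forbidden_of_depth_eq_zero {u : V} (hu : S.depth u = 0) :
    S.forbidden c u = S.nearColors u := if_pos hu

theorem mem_forbidden_self {u : V} (hu : S.depth u ≠ 0) : c u ∈ S.forbidden c u := by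
  rw [forbidden, if_neg hu]; exact mem_insert_self _ _

theorem upColors_subset_forbidden {u : V} (hu : S.depth u ≠ 0) :
    S.upColors c u ⊆ S.forbidden c u := by
  rw [forbidden, if_neg hu]; exact subset_union_left.trans (subset_insert _ _)

theorem mem_forbidden_of_mem_beaten {u w : V} (hu : S.depth u ≠ 0) (hw : w ∈ S.beaten u) :
    c w ∈ S.forbidden c u := by
  rw [forbidden, if_neg hu]
  exact mem_insert_of_mem (mem_union_right _ (mem_image_of_mem c hw))

namespace IsStarLabelling

theorem not_mem_nearColors (h : S.IsStarLabelling c) {v : V} {j : ZMod S.n}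
    (hv : S.depth v ≠ 0) (hj : S.parent v = S.cyc j) : c v ∉ S.nearColors (S.cyc j) := by
  have := h.not_mem_forbidden v hv
  rwa [hj, forbidden_of_depth_eq_zero (S.depth_cyc j)] at this

theorem edgeColor_ne_of_child (h : S.IsStarLabelling c) {x y : V} (hx : S.depth x ≠ 0)
    (hy : G.Adj (S.parent x) y) (hyx : y ≠ x) : c x ≠ S.edgeColor c s(S.parent x, y) := by
  rcases S.neighbor_cases hy with ⟨j, hj, rfl | rfl⟩ | ⟨hu, rfl⟩ | ⟨hy', hpy⟩
  · rw [hj, edgeColor_cyc]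
    exact fun heq => h.not_mem_nearColors hx hj (by simp [nearColors, heq])
  · rw [hj, edgeColor_cyc_sub]
    exact fun heq => h.not_mem_nearColors hx hj (by simp [nearColors, heq])
  · rw [edgeColor_parent hu]
    exact fun heq => h.not_mem_forbidden x hx (heq ▸ mem_forbidden_self hu)
  · rw [← hpy, edgeColor_parent' hy']
    exact fun heq => hyx (h.injOn_siblings y x hy' hx hpy heq.symm)

theorem edgeColor_ne_of_adj (h : S.IsStarLabelling c) {u v w : V} (huv : G.Adj u v)
    (huw : G.Adj u w) (hvw : v ≠ w) : S.edgeColor c s(u, v) ≠ S.edgeColor c s(u, w) := by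
  rcases S.neighbor_cases huv with ⟨j, rfl, hv⟩ | ⟨hu, rfl⟩ | ⟨hv, rfl⟩
  · rcases S.neighbor_cases huw with ⟨i, hi, hw⟩ | ⟨hu, -⟩ | hw
    · obtain rfl := S.cyc_injective hi
      have hne := cycleColor_add_one_ne S.three_le (j - 1)
      rw [sub_add_cancel] at hne
      rcases hv with rfl | rfl <;> rcases hw with rfl | rfl
      · exact absurd rfl hvw
      · rw [edgeColor_cyc, edgeColor_cyc_sub]; exact hne
      · rw [edgeColor_cyc, edgeColor_cyc_sub]; exact hne.symm
      · exact absurd rfl hvw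
    · exact absurd (S.depth_cyc j) hu
    · rw [← hw.2, edgeColor_parent' hw.1]
      exact (h.edgeColor_ne_of_child hw.1 (hw.2 ▸ huv) hvw).symm
  · rcases S.neighbor_cases huw with ⟨i, rfl, -⟩ | ⟨-, rfl⟩ | ⟨hw, rfl⟩
    · exact absurd (S.depth_cyc i) hu
    · exact absurd rfl hvw
    · rw [edgeColor_parent' hw]; exact (h.edgeColor_ne_of_child hw huv hvw).symm
  · rw [edgeColor_parent' hv]; exact h.edgeColor_ne_of_child hv huw hvw.symm

theorem edgeColor_ne_of_path_up (h : S.IsStarLabelling c) {x y w : V} (hy : S.depth y ≠ 0)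
    (hxy : G.Adj x y) (hxz : x ≠ S.parent y) (hzw : G.Adj (S.parent y) w)
    (hchild : ¬(S.depth x ≠ 0 ∧ S.parent x = y ∧ S.depth w ≠ 0 ∧ S.parent w = S.parent y)) :
    S.edgeColor c s(x, y) ≠ S.edgeColor c s(S.parent y, w) := by
  obtain ⟨hx, rfl⟩ : S.depth x ≠ 0 ∧ S.parent x = y := by
    rcases S.neighbor_cases hxy.symm with ⟨j, rfl, -⟩ | ⟨-, rfl⟩ | hx
    · exact absurd (S.depth_cyc j) hy
    · exact absurd rfl hxz
    · exact hx
  have hup : S.edgeColor c s(S.parent (S.parent x), w) ∈ S.upColors c (S.parent x) := by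
    rcases S.neighbor_cases hzw with ⟨j, hj, rfl | rfl⟩ | ⟨hz, rfl⟩ | ⟨hw, hpw⟩
    · rw [hj, edgeColor_cyc]; simp [upColors, hj, S.depth_cyc]
    · rw [hj, edgeColor_cyc_sub]; simp [upColors, hj, S.depth_cyc]
    · rw [edgeColor_parent hz]; simp [upColors, hz]
    · exact absurd ⟨hx, rfl, hw, hpw⟩ hchild
  rw [edgeColor_parent hx]
  exact fun heq => h.not_mem_forbidden x hx (heq ▸ upColors_subset_forbidden hy hup)

theorem edgeColor_ne_of_path_cyc (h : S.IsStarLabelling c) {x w : V} (j : ZMod S.n)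
    (hxy : G.Adj x (S.cyc j)) (hxz : x ≠ S.cyc (j + 1)) (hzw : G.Adj (S.cyc (j + 1)) w)
    (hyw : w ≠ S.cyc j) (hcyc : ¬(S.depth x = 0 ∧ S.depth w = 0))
    (hchild : ¬(S.depth x ≠ 0 ∧ S.parent x = S.cyc j ∧ S.depth w ≠ 0 ∧
      S.parent w = S.cyc (j + 1))) :
    S.edgeColor c s(x, S.cyc j) ≠ S.edgeColor c s(S.cyc (j + 1), w) := by
  have hx : x = S.cyc (j - 1) ∨ S.depth x ≠ 0 ∧ S.parent x = S.cyc j := by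
    rcases S.neighbor_cases hxy.symm with ⟨i, hi, rfl | rfl⟩ | ⟨hd, -⟩ | hx
    · obtain rfl := S.cyc_injective hi; exact absurd rfl hxz
    · obtain rfl := S.cyc_injective hi; exact Or.inl rfl
    · exact absurd (S.depth_cyc j) hd
    · exact Or.inr hx
  have hw : w = S.cyc (j + 1 + 1) ∨ S.depth w ≠ 0 ∧ S.parent w = S.cyc (j + 1) := by
    rcases S.neighbor_cases hzw with ⟨i, hi, rfl | rfl⟩ | ⟨hd, -⟩ | hw
    · obtain rfl := S.cyc_injective hi; exact Or.inl rfl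
    · obtain rfl := S.cyc_injective hi; exact absurd (by rw [add_sub_cancel_right]) hyw
    · exact absurd (S.depth_cyc _) hd
    · exact Or.inr hw
  rcases hx with rfl | ⟨hx, hpx⟩ <;> rcases hw with rfl | ⟨hw, hpw⟩
  · exact absurd ⟨S.depth_cyc _, S.depth_cyc _⟩ hcyc
  · rw [← hpw, edgeColor_parent' hw]
    conv_lhs => rw [Sym2.eq_swap, edgeColor_cyc_sub]
    intro heq
    refine h.not_mem_nearColors hw hpw ?_
    simp [nearColors, ← heq, show j + 1 - 2 = j - 1 by ring]
  · rw [← hpx, edgeColor_parent hx, edgeColor_cyc]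
    intro heq
    exact h.not_mem_nearColors hx hpx (by simp [nearColors, heq])
  · exact absurd ⟨hx, hpx, hw, hpw⟩ hchild

theorem edgeColor_ne_of_path (h : S.IsStarLabelling c) {x y z w : V} (hxy : G.Adj x y)
    (hyz : G.Adj y z) (hzw : G.Adj z w) (hxz : x ≠ z) (hyw : y ≠ w)
    (hcyc : ¬(S.depth x = 0 ∧ S.depth y = 0 ∧ S.depth z = 0 ∧ S.depth w = 0))
    (hchild : ¬(S.depth x ≠ 0 ∧ S.parent x = y ∧ S.depth w ≠ 0 ∧ S.parent w = z)) :
    S.edgeColor c s(x, y) ≠ S.edgeColor c s(z, w) := by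
  rcases S.adj_cases y z hyz with ⟨j, hj⟩ | ⟨hy, rfl⟩ | ⟨hz, rfl⟩
  · rcases Sym2.eq_iff.1 hj with ⟨rfl, rfl⟩ | ⟨rfl, rfl⟩
    · exact h.edgeColor_ne_of_path_cyc j hxy hxz hzw (Ne.symm hyw)
        (fun ⟨hx, hw⟩ => hcyc ⟨hx, S.depth_cyc _, S.depth_cyc _, hw⟩) hchild
    · rw [Sym2.eq_swap (a := x), Sym2.eq_swap (b := w)]
      exact (h.edgeColor_ne_of_path_cyc j hzw.symm (Ne.symm hyw) hxy.symm hxz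
        (fun ⟨hw, hx⟩ => hcyc ⟨hx, S.depth_cyc _, S.depth_cyc _, hw⟩)
        (fun ⟨hw, hpw, hx, hpx⟩ => hchild ⟨hx, hpx, hw, hpw⟩)).symm
  · exact h.edgeColor_ne_of_path_up hy hxy hxz hzw hchild
  · rw [Sym2.eq_swap (a := x), Sym2.eq_swap (b := w)]
    exact (h.edgeColor_ne_of_path_up hz hzw.symm (Ne.symm hyw) hxy.symm
      (fun ⟨hw, hpw, hx, hpx⟩ => hchild ⟨hx, hpx, hw, hpw⟩)).symm

theorem not_bicolored_of_siblings (h : S.IsStarLabelling c) {v₀ v₁ v₃ v₄ : V}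
    (h₀ : S.depth v₀ ≠ 0) (h₁ : S.depth v₁ ≠ 0) (h₃ : S.depth v₃ ≠ 0) (h₄ : S.depth v₄ ≠ 0)
    (hp₀ : S.parent v₀ = v₁) (hp₄ : S.parent v₄ = v₃) (hp : S.parent v₁ = S.parent v₃)
    (hne : v₁ ≠ v₃) : ¬(c v₀ = c v₃ ∧ c v₁ = c v₄) := by
  rintro ⟨h₀₃, h₁₄⟩
  rcases S.mem_beaten_or_mem_beaten h₁ h₃ hp hne with hm | hm
  · exact h.not_mem_forbidden v₀ h₀ (hp₀ ▸ h₀₃ ▸ mem_forbidden_of_mem_beaten h₁ hm)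
  · exact h.not_mem_forbidden v₄ h₄ (hp₄ ▸ h₁₄ ▸ mem_forbidden_of_mem_beaten h₃ hm)

end IsStarLabelling

theorem forbidden_congr {c c' : V → ℕ} {u : V}
    (h : ∀ w, S.depth w ≤ S.depth u → c w = c' w) : S.forbidden c u = S.forbidden c' u := by
  by_cases hu : S.depth u = 0
  · rw [forbidden_of_depth_eq_zero hu, forbidden_of_depth_eq_zero hu]
  have hpu := S.depth_parent u hu
  have himage : (S.beaten u).image c = (S.beaten u).image c' := image_congr fun w hw => by
    obtain ⟨hw, hpw⟩ := S.mem_children.1 (S.beaten_subset u hw)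
    have := S.depth_parent w hw
    rw [hpw] at this
    exact h w (by omega)
  rw [forbidden, forbidden, if_neg hu, if_neg hu, upColors, upColors, h u le_rfl,
    h (S.parent u) (by omega), himage]

theorem IsStarLabelling.isStarEdgeColoring (h : S.IsStarLabelling c) :
    IsStarEdgeColoring G (S.edgeColor c) := by
  refine ⟨fun u v w huv huw hvw => h.edgeColor_ne_of_adj huv huw hvw,
    fun v₀ v₁ v₂ v₃ v₄ h₀₁ h₁₂ h₂₃ h₃₄ _ n₀₂ _ _ n₁₃ _ _ n₄₂ _ => ?_⟩
  by_cases hA : (S.depth v₀ = 0 ∧ S.depth v₁ = 0 ∧ S.depth v₂ = 0 ∧ S.depth v₃ = 0) ∨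
      (S.depth v₀ ≠ 0 ∧ S.parent v₀ = v₁ ∧ S.depth v₃ ≠ 0 ∧ S.parent v₃ = v₂)
  swap
  · exact fun hc => h.edgeColor_ne_of_path h₀₁ h₁₂ h₂₃ n₀₂ n₁₃ (fun h' => hA (Or.inl h'))
      (fun h' => hA (Or.inr h')) hc.1
  by_cases hB : (S.depth v₁ = 0 ∧ S.depth v₂ = 0 ∧ S.depth v₃ = 0 ∧ S.depth v₄ = 0) ∨
      (S.depth v₁ ≠ 0 ∧ S.parent v₁ = v₂ ∧ S.depth v₄ ≠ 0 ∧ S.parent v₄ = v₃)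
  swap
  · exact fun hc => h.edgeColor_ne_of_path h₁₂ h₂₃ h₃₄ n₁₃ (Ne.symm n₄₂)
      (fun h' => hB (Or.inl h')) (fun h' => hB (Or.inr h')) hc.2
  rcases hA with ⟨d₀, d₁, d₂, d₃⟩ | ⟨d₀, rfl, d₃, rfl⟩ <;>
    rcases hB with ⟨d₁', -, d₃', d₄⟩ | ⟨d₁', p₁, d₄, rfl⟩
  · exact not_bicolored_of_depth_eq_zero ⟨d₀, d₁, d₂, d₃, d₄⟩ h₀₁ h₁₂ h₂₃ h₃₄ n₀₂ n₁₃
      (Ne.symm n₄₂)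
  · exact absurd d₁ d₁'
  · exact absurd d₃' d₃
  · rw [edgeColor_parent d₀, edgeColor_parent' d₃, ← p₁, edgeColor_parent d₁',
      edgeColor_parent' d₄]
    exact h.not_bicolored_of_siblings d₀ d₁' d₃ d₄ rfl rfl p₁ n₁₃

variable [DecidableRel G.Adj]

theorem card_children_add_one_le {u : V} (hu : S.depth u ≠ 0) :
    #(S.children u) + 1 ≤ G.degree u := by
  have hnot : S.parent u ∉ S.children u := fun hm => by
    obtain ⟨hd, hpu⟩ := S.mem_children.1 hm
    have := S.depth_parent u hu
    have := S.depth_parent _ hd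
    rw [hpu] at this
    omega
  rw [← card_insert_of_notMem hnot, ← card_neighborFinset_eq_degree]
  refine card_le_card fun x hx => mem_neighborFinset _ _ _ |>.2 ?_
  rcases mem_insert.1 hx with rfl | hx
  · exact S.adj_parent u hu
  · obtain ⟨hd, hpx⟩ := S.mem_children.1 hx
    exact hpx ▸ (S.adj_parent x hd).symm

theorem card_children_add_two_le (i : ZMod S.n) :
    #(S.children (S.cyc i)) + 2 ≤ G.degree (S.cyc i) := by
  have hnot (j : ZMod S.n) : S.cyc j ∉ S.children (S.cyc i) := fun hm =>
    (S.mem_children.1 hm).1 (S.depth_cyc j)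
  have hne : S.cyc (i + 1) ≠ S.cyc (i - 1) := fun h =>
    S.two_ne_zero (by linear_combination S.cyc_injective h)
  calc #(S.children (S.cyc i)) + 2
      = #(insert (S.cyc (i + 1)) (insert (S.cyc (i - 1)) (S.children (S.cyc i)))) := by
        rw [card_insert_of_notMem (by simp [hne, hnot]), card_insert_of_notMem (hnot _)]
    _ ≤ G.degree (S.cyc i) := by
      rw [← card_neighborFinset_eq_degree]
      refine card_le_card fun x hx => mem_neighborFinset _ _ _ |>.2 ?_
      rcases mem_insert.1 hx with rfl | hx
      · exact S.adj_cyc i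
      rcases mem_insert.1 hx with rfl | hx
      · simpa using (S.adj_cyc (i - 1)).symm
      · obtain ⟨hd, hpx⟩ := S.mem_children.1 hx
        exact hpx ▸ (S.adj_parent x hd).symm

theorem card_children_add_card_forbidden_le {Δ : ℕ} (hΔ : ∀ v, G.degree v ≤ Δ) (c : V → ℕ)
    (u : V) : #(S.children u) + #(S.forbidden c u) ≤ 3 * Δ / 2 + 1 := by
  by_cases hu : S.depth u = 0
  · obtain ⟨i, rfl⟩ := (S.depth_eq_zero_iff u).1 hu
    have := S.card_children_add_two_le i
    have := hΔ (S.cyc i)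
    have : #(S.nearColors (S.cyc i)) ≤ 4 := card_le_four
    rw [forbidden_of_depth_eq_zero hu]
    omega
  rw [forbidden, if_neg hu]
  have := card_insert_le (c u) (S.upColors c u ∪ (S.beaten u).image c)
  have := card_union_le (S.upColors c u) ((S.beaten u).image c)
  have := card_image_le (s := S.beaten u) (f := c)
  have := S.card_beaten_le u
  have := S.card_children_add_one_le hu
  have := hΔ u
  by_cases hp : S.depth (S.parent u) = 0
  · obtain ⟨i, hi⟩ := (S.depth_eq_zero_iff _).1 hp
    have := hi ▸ S.card_children_add_two_le i
    have := hΔ (S.parent u)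
    have : #(S.upColors c u) ≤ 2 := by rw [upColors, if_pos hp]; exact card_le_two
    omega
  · have := S.card_children_add_one_le hp
    have := hΔ (S.parent u)
    have : #(S.upColors c u) = 1 := by rw [upColors, if_neg hp, card_singleton]
    omega

end Labelling

end UnicyclicDecomposition

/-- If `G` is unicyclic with maximum degree `Δ`, then `χ'ₛ(G) ≤ ⌊3Δ/2⌋ + 1`. -/
theorem starChromaticIndex_unicyclic_le {V : Type*} [Fintype V] (G : SimpleGraph V)
    [DecidableRel G.Adj] (Δ : ℕ) (hΔ : ∀ v : V, G.degree v ≤ Δ)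
    (hG : IsUnicyclic G) :
    starChromaticIndex G ≤ 3 * Δ / 2 + 1 := by
  classical
  obtain ⟨S⟩ := hG.nonempty_unicyclicDecomposition
  have hΔ₂ : 2 ≤ Δ := (Nat.le_add_left 2 _).trans ((S.card_children_add_two_le 0).trans (hΔ _))
  obtain ⟨c, hc⟩ := exists_greedy_labelling S.depth S.parent S.depth_parent (3 * Δ / 2 + 1)
    S.forbidden (fun _ _ _ => S.forbidden_congr) (S.card_children_add_card_forbidden_le hΔ)
  have hstar : S.IsStarLabelling c :=
    ⟨fun v hv => (mem_sdiff.1 (hc v hv).1).2, fun v w hv hw hvw h => (hc w hw).2 v hv hvw h⟩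
  exact Nat.sInf_le ⟨S.edgeColor c, fun u v huv => S.edgeColor_lt (by omega)
    (fun v hv => mem_range.1 (mem_sdiff.1 (hc v hv).1).1) huv, hstar.isStarEdgeColoring⟩
end

section
/- Let Δ ≥ 3 be odd and let T_v be a rooted tree of height two with root v in which every non-leaf vertex has degree Δ. In any star edge coloring of T_v with color set {1, …, ⌊3Δ/2⌋}, for any two neighbors x and y of the root v, the sets of colors appearing on edges incident to x and to y intersect in at least (Δ+1)/2 colors. -/
open SimpleGraph Finset

/-- Lemma 4.1(a), first part: in any star edge coloring of a `Δ`-semiregular rooted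
tree of height two with `⌊3Δ/2⌋` colors (`Δ ≥ 3` odd), the color sets of any two
neighbors of the root intersect in at least `(Δ+1)/2` colors. -/
theorem color_sets_intersect {V : Type*} [Fintype V] [DecidableEq V] (G : SimpleGraph V)
    [DecidableRel G.Adj] (v : V) (Δ : ℕ) (hΔ3 : 3 ≤ Δ) (hodd : Odd Δ)
    (htree : G.IsTree) (hheight : ∀ u : V, G.dist v u ≤ 2)
    (hdegv : G.degree v = Δ) (hdeg : ∀ u : V, G.Adj v u → G.degree u = Δ)
    (c : Sym2 V → ℕ) (hc : IsStarEdgeColoring G c)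
    (hlt : ∀ ⦃a b : V⦄, G.Adj a b → c s(a, b) < 3 * Δ / 2)
    (x y : V) (hx : G.Adj v x) (hy : G.Adj v y) (hxy : x ≠ y) :
    (Δ + 1) / 2 ≤
      (((G.neighborFinset x).image fun w => c s(x, w)) ∩
        ((G.neighborFinset y).image fun w => c s(y, w))).card := by
  set A := (G.neighborFinset x).image fun w => c s(x, w) with hA
  set B := (G.neighborFinset y).image fun w => c s(y, w) with hB
  have hcardA : A.card = Δ := by
    rw [hA, Finset.card_image_of_injOn, SimpleGraph.card_neighborFinset_eq_degree, hdeg x hx]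
    intro w hw w' hw' h
    by_contra hne
    exact hc.1 (by simpa using hw)
      (by simpa using hw') hne h
  have hcardB : B.card = Δ := by
    rw [hB, Finset.card_image_of_injOn, SimpleGraph.card_neighborFinset_eq_degree, hdeg y hy]
    intro w hw w' hw' h
    by_contra hne
    exact hc.1 (by simpa using hw)
      (by simpa using hw') hne h
  have hsub : A ∪ B ⊆ Finset.range (3 * Δ / 2) := by
    intro a ha
    rw [Finset.mem_union] at ha
    rw [Finset.mem_range]
    rcases ha with ha | ha
    · obtain ⟨w, hw, hwa⟩ := Finset.mem_image.mp ha
      exact hwa ▸ hlt ((SimpleGraph.mem_neighborFinset _ _ _).mp hw)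
    · obtain ⟨w, hw, hwa⟩ := Finset.mem_image.mp ha
      exact hwa ▸ hlt ((SimpleGraph.mem_neighborFinset _ _ _).mp hw)
  have hunion : (A ∪ B).card ≤ 3 * Δ / 2 := by
    simpa using Finset.card_le_card hsub
  have hie : (A ∩ B).card + (A ∪ B).card = A.card + B.card :=
    Finset.card_inter_add_card_union A B
  obtain ⟨k, hk⟩ := hodd
  omega
end

section
/- Let Δ ≥ 3 be odd and T_v a Δ-semiregular rooted tree of height two (root of degree Δ, every non-leaf vertex of degree Δ). In any star edge coloring of T_v with ⌊3Δ/2⌋ colors, every color not appearing on an edge incident to the root v appears on edges incident to every neighbor of v. -/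
open SimpleGraph Finset

/-- Lemma 4.1(a), second part: every color not appearing at the root appears at
every neighbor of the root. -/
theorem missing_colors_at_root_appear_at_neighbors {V : Type*} [Fintype V] [DecidableEq V] (G : SimpleGraph V)
    [DecidableRel G.Adj] (v : V) (Δ : ℕ) (hΔ3 : 3 ≤ Δ) (hodd : Odd Δ)
    (htree : G.IsTree) (hheight : ∀ u : V, G.dist v u ≤ 2)
    (hdegv : G.degree v = Δ) (hdeg : ∀ u : V, G.Adj v u → G.degree u = Δ)
    (c : Sym2 V → ℕ) (hc : IsStarEdgeColoring G c)
    (hlt : ∀ ⦃a b : V⦄, G.Adj a b → c s(a, b) < 3 * Δ / 2) :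
    ∀ i : ℕ, i < 3 * Δ / 2 →
      i ∉ (G.neighborFinset v).image (fun w => c s(v, w)) →
      ∀ x : V, G.Adj v x →
        i ∈ (G.neighborFinset x).image (fun w => c s(x, w)) := by
  classical
  intro i hik hiCv x hvx
  obtain ⟨t, ht⟩ := hodd
  have hk : 3 * Δ / 2 = 3 * t + 1 := by omega
  have ht1 : 1 ≤ t := by omega
  -- no triangles through v
  have htri : ∀ ⦃y y' : V⦄, G.Adj v y → G.Adj v y' → ¬ G.Adj y y' := by
    intro y y' hy hy' hyy'
    have hne : y ≠ y' := hyy'.ne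
    have hyv : y ≠ v := fun h => G.irrefl (h ▸ hy)
    have hy'v : y' ≠ v := fun h => G.irrefl (h ▸ hy')
    have hvy'ne : v ≠ y' := fun h => hy'v h.symm
    have hpq := htree.IsAcyclic.path_unique
      (⟨SimpleGraph.Walk.cons hyy' SimpleGraph.Walk.nil, by simp [hne]⟩ : G.Path y y')
      ⟨SimpleGraph.Walk.cons hy.symm (SimpleGraph.Walk.cons hy' SimpleGraph.Walk.nil), by
        simp [SimpleGraph.Walk.isPath_def, hyv, hne, hvy'ne]⟩
    have hlen := congrArg (fun p : G.Path y y' => p.1.length) hpq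
    simp at hlen
  -- properness: injectivity of colors around a vertex
  have hinj : ∀ y : V, Set.InjOn (fun w => c s(y, w)) ↑(G.neighborFinset y) := by
    intro y a ha b hb hab
    by_contra hne
    exact hc.1 (by simpa using ha) (by simpa using hb) hne hab
  set N := G.neighborFinset v with hN
  have hNcard : N.card = Δ := hdegv
  have hxN : x ∈ N := by simpa [hN] using hvx
  set Cv := N.image (fun w => c s(v, w)) with hCv
  have hCvcard : Cv.card = Δ := by
    rw [hCv, Finset.card_image_of_injOn (hinj v), hNcard]
  have hCvsub : Cv ⊆ Finset.range (3 * t + 1) := by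
    intro j hj
    rw [hCv, Finset.mem_image] at hj
    obtain ⟨w, hw, rfl⟩ := hj
    rw [Finset.mem_range, ← hk]
    exact hlt (by simpa [hN] using hw)
  -- A y : colors on edges from y to its non-v neighbors
  set A : V → Finset ℕ := fun y => ((G.neighborFinset y).erase v).image (fun w => c s(y, w))
    with hA
  have hvmem : ∀ y ∈ N, v ∈ G.neighborFinset y := by
    intro y hy; rw [SimpleGraph.mem_neighborFinset]
    exact (by simpa [hN] using hy : G.Adj v y).symm
  have hAcard : ∀ y ∈ N, (A y).card = 2 * t := by
    intro y hy
    rw [hA, Finset.card_image_of_injOn (Set.InjOn.mono (by simp [Finset.erase_subset]) (hinj y)),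
      Finset.card_erase_of_mem (hvmem y hy), SimpleGraph.card_neighborFinset_eq_degree,
      hdeg y (by simpa [hN] using hy)]
    omega
  have hAnotv : ∀ y ∈ N, c s(v, y) ∉ A y := by
    intro y hy hmem
    rw [hA, Finset.mem_image] at hmem
    obtain ⟨w, hw, hcw⟩ := hmem
    rw [Finset.mem_erase] at hw
    have hadjw : G.Adj y w := by simpa using hw.2
    have hadjv : G.Adj y v := (by simpa [hN] using hy : G.Adj v y).symm
    exact hc.1 hadjw hadjv hw.1 (by rw [hcw, Sym2.eq_swap])
  have hAsub : ∀ y ∈ N, A y ⊆ (Finset.range (3 * t + 1)).erase (c s(v, y)) := by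
    intro y hy j hj
    rw [Finset.mem_erase, Finset.mem_range]
    constructor
    · intro h; exact hAnotv y hy (h ▸ hj)
    · rw [hA, Finset.mem_image] at hj
      obtain ⟨w, hw, rfl⟩ := hj
      rw [← hk]
      exact hlt (by simpa using (Finset.mem_erase.mp hw).2 : G.Adj y w)
  -- the key star-condition constraint on pairs of neighbors
  have pair : ∀ y ∈ N, ∀ y' ∈ N, y ≠ y' → c s(v, y') ∈ A y → c s(v, y) ∉ A y' := by
    intro y hy y' hy' hne h1 h2
    have hvy : G.Adj v y := by simpa [hN] using hy
    have hvy' : G.Adj v y' := by simpa [hN] using hy'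
    rw [hA, Finset.mem_image] at h1 h2
    obtain ⟨a, ha, hca⟩ := h1
    obtain ⟨b, hb, hcb⟩ := h2
    rw [Finset.mem_erase] at ha hb
    have hya : G.Adj y a := by simpa using ha.2
    have hy'b : G.Adj y' b := by simpa using hb.2
    have hay' : a ≠ y' := by
      intro h; exact htri hvy hvy' (h ▸ hya)
    have hby : b ≠ y := by
      intro h; exact htri hvy' hvy (h ▸ hy'b)
    refine hc.2 a y v y' b hya.symm hvy.symm hvy' hy'b hya.ne' ha.1 hay'
      hvy.ne' hne hvy'.ne hby hb.1 hy'b.ne' ?_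
    constructor
    · rw [Sym2.eq_swap]; exact hca
    · rw [Sym2.eq_swap, hcb, Sym2.eq_swap]
  -- F y : neighbors y' whose root-edge color appears at y
  set F : V → Finset V := fun y => (N.erase y).filter (fun y' => c s(v, y') ∈ A y) with hF
  have hFcard : ∀ y ∈ N, (F y).card = ((A y) ∩ (Cv.erase (c s(v, y)))).card := by
    intro y hy
    have himg : (F y).image (fun y' => c s(v, y')) = (A y) ∩ (Cv.erase (c s(v, y))) := by
      ext j
      simp only [Finset.mem_image, hF, Finset.mem_filter, Finset.mem_erase, Finset.mem_inter]
      constructor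
      · rintro ⟨y', ⟨⟨hne, hy'N⟩, hmem⟩, rfl⟩
        refine ⟨hmem, ?_, Finset.mem_image_of_mem _ hy'N⟩
        intro h
        exact hne (hinj v (Finset.mem_coe.mpr hy'N) (Finset.mem_coe.mpr hy) h)
      · rintro ⟨hmem, hne, hjCv⟩
        rw [hCv, Finset.mem_image] at hjCv
        obtain ⟨y', hy'N, rfl⟩ := hjCv
        exact ⟨y', ⟨⟨fun h => hne (by rw [h]), hy'N⟩, hmem⟩, rfl⟩
    rw [← himg, Finset.card_image_of_injOn]
    exact Set.InjOn.mono (by intro z hz; simp only [hF, Finset.coe_filter, Set.mem_setOf_eq] at hz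
                             simpa [hN] using (Finset.mem_erase.mp hz.1).2) (hinj v)
  have hFlow : ∀ y ∈ N, t ≤ (F y).card := by
    intro y hy
    rw [hFcard y hy]
    have hsub1 := hAsub y hy
    have hsub2 : Cv.erase (c s(v, y)) ⊆ (Finset.range (3 * t + 1)).erase (c s(v, y)) :=
      Finset.erase_subset_erase _ hCvsub
    have hcvy : c s(v, y) ∈ Finset.range (3 * t + 1) := by
      rw [Finset.mem_range, ← hk]
      exact hlt (by simpa [hN] using hy : G.Adj v y)
    have hU : ((Finset.range (3 * t + 1)).erase (c s(v, y))).card = 3 * t := by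
      rw [Finset.card_erase_of_mem hcvy, Finset.card_range]
      omega
    have hunion : ((A y) ∪ (Cv.erase (c s(v, y)))).card ≤ 3 * t := by
      rw [← hU]
      exact Finset.card_le_card (Finset.union_subset hsub1 hsub2)
    have hCe : (Cv.erase (c s(v, y))).card = 2 * t := by
      rw [Finset.card_erase_of_mem, hCvcard]
      · omega
      · exact Finset.mem_image_of_mem _ (by simpa [hN] using hy)
    have := Finset.card_union_add_card_inter (A y) (Cv.erase (c s(v, y)))
    rw [hAcard y hy, hCe] at this
    omega
  -- the double counting
  set E := N.offDiag.filter (fun p => c s(v, p.2) ∈ A p.1) with hE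
  have hEsum : E.card = ∑ y ∈ N, (F y).card := by
    rw [Finset.card_eq_sum_card_fiberwise (f := Prod.fst) (t := N)
      (fun p hp => (Finset.mem_offDiag.mp (Finset.mem_filter.mp hp).1).1)]
    refine Finset.sum_congr rfl (fun y hy => ?_)
    have himg : E.filter (fun p => p.1 = y) = (F y).image (fun y' => (y, y')) := by
      ext ⟨p1, p2⟩
      simp only [hE, hF, Finset.mem_filter, Finset.mem_offDiag, Finset.mem_erase,
        Finset.mem_image, Prod.mk.injEq]
      constructor
      · rintro ⟨⟨⟨h1, h2, h3⟩, h4⟩, h5⟩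
        subst h5
        exact ⟨p2, ⟨⟨fun h => h3 h.symm, h2⟩, h4⟩, rfl, rfl⟩
      · rintro ⟨y', ⟨⟨hne, hy'N⟩, hmem⟩, rfl, rfl⟩
        exact ⟨⟨⟨hy, hy'N, fun h => hne h.symm⟩, hmem⟩, rfl⟩
    rw [himg, Finset.card_image_of_injective _ (fun a b h => (Prod.ext_iff.mp h).2)]
  -- swap injection: at most one orientation per pair
  have hEle : 2 * E.card ≤ (2 * t + 1) * (2 * t) := by
    have hsub : E ⊆ N.offDiag := Finset.filter_subset _ _
    have hswap : ∀ p ∈ E, Prod.swap p ∈ N.offDiag \ E := by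
      rintro ⟨p1, p2⟩ hp
      rw [hE, Finset.mem_filter, Finset.mem_offDiag] at hp
      obtain ⟨⟨h1, h2, h3⟩, h4⟩ := hp
      rw [Finset.mem_sdiff, Finset.mem_offDiag]
      refine ⟨⟨h2, h1, fun h => h3 h.symm⟩, ?_⟩
      rw [hE, Finset.mem_filter]
      rintro ⟨-, h5⟩
      exact pair p1 h1 p2 h2 h3 h4 h5
    have hinj2 : Set.InjOn (Prod.swap : V × V → V × V) ↑E :=
      fun a _ b _ h => Prod.swap_injective h
    have hcle : E.card ≤ (N.offDiag \ E).card :=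
      Finset.card_le_card_of_injOn (Prod.swap : V × V → V × V) hswap hinj2
    have hd : (N.offDiag \ E).card = N.offDiag.card - E.card := Finset.card_sdiff_of_subset hsub
    have hod : N.offDiag.card = Δ * Δ - Δ := by rw [Finset.offDiag_card, hNcard]
    have hsq : Δ * Δ = (2 * t + 1) * (2 * t) + Δ := by rw [ht]; ring
    have hcard_le : E.card ≤ N.offDiag.card := Finset.card_le_card hsub
    omega
  -- conclude (F x).card = t
  have hFxle : (F x).card ≤ t := by
    have h1 : (N.erase x).card • t ≤ ∑ y ∈ N.erase x, (F y).card :=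
      Finset.card_nsmul_le_sum _ _ _ (fun y hy => hFlow y (Finset.mem_of_mem_erase hy))
    have h2 : (F x).card + ∑ y ∈ N.erase x, (F y).card = ∑ y ∈ N, (F y).card :=
      Finset.add_sum_erase N (fun y => (F y).card) hxN
    have h3 : (N.erase x).card = 2 * t := by
      rw [Finset.card_erase_of_mem hxN, hNcard]; omega
    rw [h3, smul_eq_mul] at h1
    have h4 : ∑ y ∈ N, (F y).card ≤ (2 * t + 1) * t := by
      have : (2 * t + 1) * (2 * t) = 2 * ((2 * t + 1) * t) := by ring
      omega
    have h5 : (2 * t + 1) * t = 2 * t * t + t := by ring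
    omega
  have hFx : ((A x) ∩ (Cv.erase (c s(v, x)))).card = t := by
    have := hFlow x hxN
    have := hFcard x hxN
    omega
  -- A x ∩ Cv has card t
  have hACv : ((A x) ∩ Cv).card = t := by
    have heq : (A x) ∩ Cv = (A x) ∩ (Cv.erase (c s(v, x))) := by
      ext j
      simp only [Finset.mem_inter, Finset.mem_erase]
      constructor
      · rintro ⟨h1, h2⟩
        exact ⟨h1, fun h => hAnotv x hxN (h ▸ h1), h2⟩
      · rintro ⟨h1, -, h2⟩
        exact ⟨h1, h2⟩
    rw [heq, hFx]
  -- A x \ Cv has card t and is contained in range k \ Cv which has card t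
  have hAx : (A x).card = 2 * t := hAcard x hxN
  have hsdA : ((A x) \ Cv).card = t := by
    have := Finset.card_inter_add_card_sdiff (A x) Cv
    omega
  have hsdR : ((Finset.range (3 * t + 1)) \ Cv).card = t := by
    rw [Finset.card_sdiff_of_subset hCvsub, Finset.card_range, hCvcard]
    omega
  have hsub : (A x) \ Cv ⊆ (Finset.range (3 * t + 1)) \ Cv := by
    apply Finset.sdiff_subset_sdiff _ (le_refl _)
    exact (hAsub x hxN).trans (Finset.erase_subset _ _)
  have heq : (A x) \ Cv = (Finset.range (3 * t + 1)) \ Cv :=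
    Finset.eq_of_subset_of_card_le hsub (by omega)
  have hi : i ∈ (A x) \ Cv := by
    rw [heq, Finset.mem_sdiff, Finset.mem_range]
    exact ⟨by omega, hiCv⟩
  have hiA : i ∈ A x := (Finset.mem_sdiff.mp hi).1
  rw [hA, Finset.mem_image] at hiA
  obtain ⟨w, hw, hcw⟩ := hiA
  exact Finset.mem_image.mpr ⟨w, Finset.mem_of_mem_erase hw, hcw⟩
end

section
/- Let Δ ≥ 3 be odd and T_v a Δ-semiregular rooted tree of height two. In any star edge coloring of T_v with ⌊3Δ/2⌋ colors, every color appearing on an edge incident to the root v is used on exactly (Δ−1)/2 edges not incident to v, and every color not appearing at v is used on exactly Δ edges not incident to v. -/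
/-!
Write `Δ = 2m + 1`, so there are `3m + 1` colors: the `2m + 1` colors at the root `v` and `m` others.
The `2m` edges below a child `u` of `v` use at most `m` of the others, hence at least `m` colors
`c(vu')` of other root edges. Call `u'` *seen* by `u` then. By the star condition, `u` and `u'`
cannot see each other (that gives a bicolored path `w u v u' w'`), so "seeing" orients a subgraph
of the complete graph on the `2m + 1` children; in-degrees at least `m` force every in- and
out-degree to be exactly `m`. The out-degree of `u` counts the edges away from `v` colored
`c(vu)`; in-degree exactly `m` leaves `m` edges below `u` for the `m` non-root colors, so each of
them occurs below every child.
-/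

open SimpleGraph Finset

namespace Finset

variable {α : Type*} [DecidableEq α]

theorem card_add_card_le_card_inter_add {s t U : Finset α} (hs : s ⊆ U) (ht : t ⊆ U) :
    #s + #t ≤ #(s ∩ t) + #U := by
  have := card_union_add_card_inter s t
  have := card_le_card (union_subset hs ht)
  omega

theorem mem_of_card_inter_add_le {s t U : Finset α} (hs : s ⊆ U) (ht : t ⊆ U)
    (h : #(s ∩ t) + #U ≤ #s + #t) {x : α} (hx : x ∈ U) (hxt : x ∉ t) : x ∈ s := by
  have := card_union_add_card_inter s t
  have hU : s ∪ t = U := eq_of_subset_of_card_le (union_subset hs ht) (by omega)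
  rw [← hU, mem_union] at hx
  exact hx.resolve_right hxt

/-- In-degrees and out-degrees have the same sum, and `in + out ≤ 2m` at every vertex. -/
theorem card_filter_rel_eq_of_asymm (s : Finset α) (r : α → α → Prop) [DecidableRel r]
    (hr : ∀ a ∈ s, ∀ b ∈ s, r a b → ¬ r b a) {m : ℕ} (hs : #s ≤ 2 * m + 1)
    (hin : ∀ a ∈ s, m ≤ #{b ∈ s | r b a}) {a : α} (ha : a ∈ s) :
    #{b ∈ s | r a b} = m ∧ #{b ∈ s | r b a} = m := by
  have hdeg : ∀ a ∈ s, #{b ∈ s | r a b} + #{b ∈ s | r b a} ≤ 2 * m := by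
    intro a ha
    have hdisj : Disjoint {b ∈ s | r a b} {b ∈ s | r b a} :=
      disjoint_filter.2 fun b hb hab => hr a ha b hb hab
    have hsub : {b ∈ s | r a b} ∪ {b ∈ s | r b a} ⊆ s.erase a := by
      intro b hb
      simp only [mem_union, mem_filter] at hb
      refine mem_erase.2 ⟨?_, by tauto⟩
      rintro rfl
      rcases hb with ⟨-, hb⟩ | ⟨-, hb⟩ <;> exact hr b ha b ha hb hb
    have := card_le_card hsub
    rw [card_union_of_disjoint hdisj, card_erase_of_mem ha] at this
    omega
  have hsum : ∑ a ∈ s, #{b ∈ s | r a b} = ∑ a ∈ s, #{b ∈ s | r b a} :=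
    sum_card_bipartiteAbove_eq_sum_card_bipartiteBelow r
  have hin_eq : ∀ a ∈ s, #{b ∈ s | r b a} = m := by
    have h := sum_le_sum hdeg
    rw [sum_add_distrib, hsum, ← mul_sum] at h
    refine fun a ha => ((sum_eq_sum_iff_of_le hin).1 ?_ a ha).symm
    have := sum_le_sum hin
    omega
  refine ⟨?_, hin_eq a ha⟩
  have hout : ∀ a ∈ s, #{b ∈ s | r a b} ≤ m := fun a ha => by
    have := hdeg a ha
    have := hin_eq a ha
    omega
  refine (sum_eq_sum_iff_of_le hout).1 ?_ a ha
  rw [hsum, sum_congr rfl hin_eq]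

end Finset

namespace SimpleGraph

variable {V : Type*} {G : SimpleGraph V} {v : V}

theorem IsTree.not_adj_of_adj_of_adj (htree : G.IsTree) {a b : V} (ha : G.Adj v a)
    (hb : G.Adj v b) : ¬G.Adj a b := by
  classical
  exact fun hab => htree.isAcyclic.cliqueFree le_rfl _ (is3Clique_triple_iff.2 ⟨ha, hb, hab⟩)

/-- Both ends of an edge away from `v` would be at distance `2` from `v`, but adjacent vertices
of a tree are at different distances from any vertex. -/
theorem IsTree.adj_or_adj_of_dist_le_two (htree : G.IsTree) (hheight : ∀ u, G.dist v u ≤ 2)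
    {a b : V} (hab : G.Adj a b) (ha : a ≠ v) (hb : b ≠ v) : G.Adj v a ∨ G.Adj v b := by
  have hdist : ∀ x, x ≠ v → ¬G.Adj v x → G.dist v x = 2 := by
    intro x hx hnx
    have h0 : G.dist v x ≠ 0 := by
      rw [Ne, (htree.connected v x).dist_eq_zero_iff]
      exact hx.symm
    have h1 : G.dist v x ≠ 1 := by rwa [Ne, dist_eq_one_iff_adj]
    have := hheight x
    omega
  by_contra! h
  exact htree.dist_ne_of_adj v hab (by rw [hdist a ha h.1, hdist b hb h.2])

theorem IsStarEdgeColoring.injOn_neighborSet {c : Sym2 V → ℕ} (hc : IsStarEdgeColoring G c)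
    (u : V) : Set.InjOn (fun w => c s(u, w)) (G.neighborSet u) :=
  fun _ hw _ hw' h => by_contra fun hne => hc.1 hw hw' hne h

variable [Fintype V] [DecidableRel G.Adj] {c : Sym2 V → ℕ} {k : ℕ}

theorem IsStarEdgeColoring.injOn_of_subset_neighborFinset (hc : IsStarEdgeColoring G c)
    {u : V} {s : Finset V} (hs : s ⊆ G.neighborFinset u) :
    Set.InjOn (fun w => c s(u, w)) s :=
  (hc.injOn_neighborSet u).mono fun _ hw => (mem_neighborFinset _ _ _).1 (hs hw)

def incidentColors (G : SimpleGraph V) [DecidableRel G.Adj] (c : Sym2 V → ℕ) (u : V) :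
    Finset ℕ :=
  (G.neighborFinset u).image fun w => c s(u, w)

theorem incidentColors_subset_range (hlt : ∀ ⦃a b : V⦄, G.Adj a b → c s(a, b) < k) (u : V) :
    G.incidentColors c u ⊆ range k := by
  intro i hi
  obtain ⟨w, hw, rfl⟩ := mem_image.1 hi
  exact mem_range.2 (hlt ((mem_neighborFinset _ _ _).1 hw))

theorem IsStarEdgeColoring.card_incidentColors (hc : IsStarEdgeColoring G c) (u : V) :
    #(G.incidentColors c u) = G.degree u := by
  rw [incidentColors, card_image_of_injOn (hc.injOn_of_subset_neighborFinset subset_rfl),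
    card_neighborFinset_eq_degree]

theorem IsStarEdgeColoring.card_filter_color_mem (hc : IsStarEdgeColoring G c) (s : Finset ℕ) :
    #{u ∈ G.neighborFinset v | c s(v, u) ∈ s} = #(s ∩ G.incidentColors c v) := by
  rw [inter_comm, incidentColors, ← filter_mem_eq_inter, filter_image,
    card_image_of_injOn (hc.injOn_of_subset_neighborFinset (filter_subset _ _))]

variable [DecidableEq V]

theorem IsTree.card_filter_notMem_edgeFinset (htree : G.IsTree) (hheight : ∀ u, G.dist v u ≤ 2)
    (p : Sym2 V → Prop) [DecidablePred p] :
    #{e ∈ G.edgeFinset | p e ∧ v ∉ e} =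
      ∑ u ∈ G.neighborFinset v, #{w ∈ G.neighborFinset u \ {v} | p s(u, w)} := by
  rw [← card_sigma]
  symm
  refine card_bij (fun x _ => s(x.1, x.2)) ?_ ?_ ?_
  · rintro ⟨u, w⟩ hx
    simp only [mem_sigma, mem_filter, mem_sdiff, mem_neighborFinset, mem_singleton] at hx
    simp only [mem_filter, mem_edgeFinset, mem_edgeSet, Sym2.mem_iff, not_or]
    exact ⟨hx.2.1.1, hx.2.2, hx.1.ne, Ne.symm hx.2.1.2⟩
  · rintro ⟨u, w⟩ hx ⟨u', w'⟩ hx' heq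
    simp only [mem_sigma, mem_filter, mem_sdiff, mem_neighborFinset] at hx hx'
    rcases Sym2.eq_iff.1 heq with ⟨rfl, rfl⟩ | ⟨rfl, rfl⟩
    · rfl
    · exact absurd hx'.2.1.1 (htree.not_adj_of_adj_of_adj hx'.1 hx.1)
  · intro e he
    induction e using Sym2.ind with
    | _ a b =>
    simp only [mem_filter, mem_edgeFinset, mem_edgeSet, Sym2.mem_iff, not_or] at he
    obtain ⟨hab, hp, hva, hvb⟩ := he
    rcases htree.adj_or_adj_of_dist_le_two hheight hab (Ne.symm hva) (Ne.symm hvb) with h | h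
    · exact ⟨⟨a, b⟩, by simp [h, hab, hp, Ne.symm hvb], rfl⟩
    · exact ⟨⟨b, a⟩, by simp [h, hab.symm, Sym2.eq_swap, hp, Ne.symm hva], Sym2.eq_swap⟩

/-- The colors on the edges from `u` to its children, when the tree is rooted at `v`. -/
def childEdgeColors (G : SimpleGraph V) [DecidableRel G.Adj] (v : V) (c : Sym2 V → ℕ) (u : V) :
    Finset ℕ :=
  (G.neighborFinset u \ {v}).image fun w => c s(u, w)

theorem childEdgeColors_subset_range (hlt : ∀ ⦃a b : V⦄, G.Adj a b → c s(a, b) < k) (u : V) :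
    G.childEdgeColors v c u ⊆ range k :=
  (image_subset_image sdiff_subset).trans (incidentColors_subset_range hlt u)

theorem IsStarEdgeColoring.card_childEdgeColors (hc : IsStarEdgeColoring G c) {u : V}
    (hu : G.Adj v u) : #(G.childEdgeColors v c u) = G.degree u - 1 := by
  rw [childEdgeColors, card_image_of_injOn (hc.injOn_of_subset_neighborFinset sdiff_subset),
    card_sdiff_of_subset (singleton_subset_iff.2 ((mem_neighborFinset _ _ _).2 hu.symm)),
    card_singleton, card_neighborFinset_eq_degree]

theorem IsStarEdgeColoring.color_notMem_childEdgeColors (hc : IsStarEdgeColoring G c) {u : V}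
    (hu : G.Adj v u) : c s(v, u) ∉ G.childEdgeColors v c u := by
  simp only [childEdgeColors, mem_image, mem_sdiff, mem_neighborFinset, mem_singleton]
  rintro ⟨w, ⟨huw, hwv⟩, hcw⟩
  exact hc.1 hu.symm huw (Ne.symm hwv) (by rw [hcw, Sym2.eq_swap])

/-- Otherwise `w - u - v - u' - w'` would be a bicolored path on four edges. -/
theorem IsStarEdgeColoring.notMem_childEdgeColors_of_mem (hc : IsStarEdgeColoring G c)
    (htree : G.IsTree) {u u' : V} (hu : G.Adj v u) (hu' : G.Adj v u')
    (h : c s(v, u') ∈ G.childEdgeColors v c u) : c s(v, u) ∉ G.childEdgeColors v c u' := by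
  obtain rfl | hne := eq_or_ne u u'
  · exact absurd h (hc.color_notMem_childEdgeColors hu)
  simp only [childEdgeColors, mem_image, mem_sdiff, mem_neighborFinset, mem_singleton] at h ⊢
  rintro ⟨w', ⟨huw', hw'v⟩, hcw'⟩
  obtain ⟨w, ⟨huw, hwv⟩, hcw⟩ := h
  refine hc.2 w u v u' w' huw.symm hu.symm hu' huw' huw.ne' hwv ?_ hu.ne' hne hu'.ne ?_ hw'v
    huw'.ne' ⟨by rw [Sym2.eq_swap, hcw], by rw [hcw', Sym2.eq_swap]⟩
  · rintro rfl
    exact htree.not_adj_of_adj_of_adj hu hu' huw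
  · rintro rfl
    exact htree.not_adj_of_adj_of_adj hu' hu huw'

theorem IsTree.card_filter_color_eq_notMem (htree : G.IsTree) (hheight : ∀ u, G.dist v u ≤ 2)
    (hc : IsStarEdgeColoring G c) (i : ℕ) :
    #{e ∈ G.edgeFinset | c e = i ∧ v ∉ e} =
      #{u ∈ G.neighborFinset v | i ∈ G.childEdgeColors v c u} := by
  rw [htree.card_filter_notMem_edgeFinset hheight, card_filter]
  refine sum_congr rfl fun u _ => ?_
  calc #{w ∈ G.neighborFinset u \ {v} | c s(u, w) = i}
      = #(({w ∈ G.neighborFinset u \ {v} | c s(u, w) = i}).image fun w => c s(u, w)) :=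
        (card_image_of_injOn (hc.injOn_of_subset_neighborFinset
          ((filter_subset _ _).trans sdiff_subset))).symm
    _ = #{j ∈ G.childEdgeColors v c u | j = i} := by rw [childEdgeColors, filter_image]
    _ = if i ∈ G.childEdgeColors v c u then 1 else 0 := by
        rw [filter_eq', apply_ite card, card_singleton, card_empty]

theorem IsStarEdgeColoring.card_childEdgeColors_add_degree_le (hc : IsStarEdgeColoring G c)
    (hlt : ∀ ⦃a b : V⦄, G.Adj a b → c s(a, b) < k) (u : V) :
    #(G.childEdgeColors v c u) + G.degree v ≤
      #{u' ∈ G.neighborFinset v | c s(v, u') ∈ G.childEdgeColors v c u} + k := by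
  rw [hc.card_filter_color_mem, ← hc.card_incidentColors, ← card_range k]
  exact card_add_card_le_card_inter_add (childEdgeColors_subset_range hlt u)
    (incidentColors_subset_range hlt v)

theorem IsStarEdgeColoring.mem_childEdgeColors_of_card_le (hc : IsStarEdgeColoring G c)
    (hlt : ∀ ⦃a b : V⦄, G.Adj a b → c s(a, b) < k) {u : V}
    (h : #{u' ∈ G.neighborFinset v | c s(v, u') ∈ G.childEdgeColors v c u} + k ≤
      #(G.childEdgeColors v c u) + G.degree v)
    {i : ℕ} (hi : i < k) (hiv : i ∉ G.incidentColors c v) : i ∈ G.childEdgeColors v c u := by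
  rw [hc.card_filter_color_mem, ← hc.card_incidentColors, ← card_range k] at h
  exact mem_of_card_inter_add_le (childEdgeColors_subset_range hlt u)
    (incidentColors_subset_range hlt v) h (mem_range.2 hi) hiv

end SimpleGraph

theorem count_colors_away_from_root_general {V : Type*} [Fintype V] [DecidableEq V] (G : SimpleGraph V)
    [DecidableRel G.Adj] (v : V) (Δ : ℕ) (hodd : Odd Δ)
    (htree : G.IsTree) (hheight : ∀ u : V, G.dist v u ≤ 2)
    (hdegv : G.degree v = Δ) (hdeg : ∀ u : V, G.Adj v u → G.degree u = Δ)
    (c : Sym2 V → ℕ) (hc : IsStarEdgeColoring G c)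
    (hlt : ∀ ⦃a b : V⦄, G.Adj a b → c s(a, b) < 3 * Δ / 2) :
    (∀ i : ℕ, i ∈ (G.neighborFinset v).image (fun w => c s(v, w)) →
      (G.edgeFinset.filter fun e => c e = i ∧ v ∉ e).card = (Δ - 1) / 2) ∧
    (∀ i : ℕ, i < 3 * Δ / 2 →
      i ∉ (G.neighborFinset v).image (fun w => c s(v, w)) →
      (G.edgeFinset.filter fun e => c e = i ∧ v ∉ e).card = Δ) := by
  obtain ⟨m, rfl⟩ := hodd
  have hk : 3 * (2 * m + 1) / 2 = 3 * m + 1 := by omega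
  rw [hk] at hlt ⊢
  have hcc : ∀ u ∈ G.neighborFinset v, #(G.childEdgeColors v c u) = 2 * m := fun u hu => by
    rw [mem_neighborFinset] at hu
    rw [hc.card_childEdgeColors hu, hdeg u hu]
    omega
  have hin : ∀ u ∈ G.neighborFinset v,
      m ≤ #{u' ∈ G.neighborFinset v | c s(v, u') ∈ G.childEdgeColors v c u} := fun u hu => by
    have := hc.card_childEdgeColors_add_degree_le (v := v) hlt u
    rw [hcc u hu, hdegv] at this
    omega
  have hreg := fun u (hu : u ∈ G.neighborFinset v) => card_filter_rel_eq_of_asymm _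
    (fun u u' => c s(v, u) ∈ G.childEdgeColors v c u')
    (fun a ha b hb => hc.notMem_childEdgeColors_of_mem htree ((mem_neighborFinset _ _ _).1 hb)
      ((mem_neighborFinset _ _ _).1 ha))
    (by rw [card_neighborFinset_eq_degree, hdegv]) hin hu
  refine ⟨fun i hi => ?_, fun i hi hiv => ?_⟩
  · obtain ⟨u₀, hu₀, rfl⟩ := mem_image.1 hi
    rw [htree.card_filter_color_eq_notMem hheight hc, (hreg u₀ hu₀).1]
    omega
  · rw [htree.card_filter_color_eq_notMem hheight hc, filter_true_of_mem,
      card_neighborFinset_eq_degree, hdegv]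
    refine fun u hu => hc.mem_childEdgeColors_of_card_le hlt ?_ hi hiv
    rw [(hreg u hu).2, hcc u hu, hdegv]
    omega

/-- Lemma 4.1(b): every color at the root is used on exactly `(Δ-1)/2` edges not
incident to the root, and every other color on exactly `Δ` such edges. -/
theorem count_colors_away_from_root {V : Type*} [Fintype V] [DecidableEq V] (G : SimpleGraph V)
    [DecidableRel G.Adj] (v : V) (Δ : ℕ) (hΔ3 : 3 ≤ Δ) (hodd : Odd Δ)
    (htree : G.IsTree) (hheight : ∀ u : V, G.dist v u ≤ 2)
    (hdegv : G.degree v = Δ) (hdeg : ∀ u : V, G.Adj v u → G.degree u = Δ)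
    (c : Sym2 V → ℕ) (hc : IsStarEdgeColoring G c)
    (hlt : ∀ ⦃a b : V⦄, G.Adj a b → c s(a, b) < 3 * Δ / 2) :
    (∀ i : ℕ, i ∈ (G.neighborFinset v).image (fun w => c s(v, w)) →
      (G.edgeFinset.filter fun e => c e = i ∧ v ∉ e).card = (Δ - 1) / 2) ∧
    (∀ i : ℕ, i < 3 * Δ / 2 →
      i ∉ (G.neighborFinset v).image (fun w => c s(v, w)) →
      (G.edgeFinset.filter fun e => c e = i ∧ v ∉ e).card = Δ) :=
  count_colors_away_from_root_general G v Δ hodd htree hheight hdegv hdeg c hc hlt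
end

section
/- Let Δ ≥ 3 be odd and T_v a Δ-semiregular rooted tree of height two. In any star edge coloring c of T_v with ⌊3Δ/2⌋ colors, for every two neighbors x, y of the root v, either c(vx) appears on an edge incident to y, or c(vy) appears on an edge incident to x. -/
open SimpleGraph Finset

/-- Lemma 4.1(c): for any two neighbors `x`, `y` of the root, either the color of
`vx` appears at `y` or the color of `vy` appears at `x`. -/
theorem color_of_root_edge_appears {V : Type*} [Fintype V] [DecidableEq V] (G : SimpleGraph V)
    [DecidableRel G.Adj] (v : V) (Δ : ℕ) (hΔ3 : 3 ≤ Δ) (hodd : Odd Δ)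
    (htree : G.IsTree) (hheight : ∀ u : V, G.dist v u ≤ 2)
    (hdegv : G.degree v = Δ) (hdeg : ∀ u : V, G.Adj v u → G.degree u = Δ)
    (c : Sym2 V → ℕ) (hc : IsStarEdgeColoring G c)
    (hlt : ∀ ⦃a b : V⦄, G.Adj a b → c s(a, b) < 3 * Δ / 2)
    (x y : V) (hx : G.Adj v x) (hy : G.Adj v y) (hxy : x ≠ y) :
    (∃ z : V, G.Adj y z ∧ c s(y, z) = c s(v, x)) ∨
    (∃ z : V, G.Adj x z ∧ c s(x, z) = c s(v, y)) := by
  classical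
  by_contra hcon
  push_neg at hcon
  obtain ⟨h1, h2⟩ := hcon
  obtain ⟨m, hm⟩ := hodd
  have hm1 : 1 ≤ m := by omega
  set k : ℕ := 3 * Δ / 2 with hk
  have hkval : k = 3 * m + 1 := by omega
  set γ : V → ℕ := fun u => c s(v, u) with hγ
  set N : Finset V := G.neighborFinset v with hNdef
  set D : V → Finset ℕ :=
    fun w => ((G.neighborFinset w).erase v).image (fun z => c s(w, z)) with hD
  have hmemN : ∀ u : V, u ∈ N ↔ G.Adj v u := fun u => G.mem_neighborFinset v u
  have hNcard : N.card = Δ := hdegv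
  -- triangle-freeness around v
  have htf : ∀ ⦃u w : V⦄, G.Adj v u → G.Adj v w → u ≠ w → ¬G.Adj u w := by
    intro u w hu hw huw hadj
    have hacyc := isAcyclic_iff_path_unique.mp htree.IsAcyclic
    have hp1 : (Walk.cons hadj Walk.nil : G.Walk u w).IsPath := by simp [hadj.ne]
    have hp2 : (Walk.cons hu.symm (Walk.cons hw Walk.nil) : G.Walk u w).IsPath := by
      simp [Walk.isPath_def, hu.ne', hw.ne, huw]
    have heq := hacyc ⟨_, hp1⟩ ⟨_, hp2⟩
    have hl := congrArg (fun p : G.Path u w => p.1.length) heq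
    simp at hl
  -- injectivity of root colors
  have hγinj : ∀ u ∈ N, ∀ w ∈ N, γ u = γ w → u = w := by
    intro u hu w hw hval
    by_contra hne
    exact hc.1 ((hmemN u).mp hu) ((hmemN w).mp hw) hne hval
  have hγnotD : ∀ w ∈ N, γ w ∉ D w := by
    intro w hw hmem
    simp only [hD, Finset.mem_image, Finset.mem_erase, G.mem_neighborFinset] at hmem
    obtain ⟨z, ⟨hzv, hz⟩, hz2⟩ := hmem
    have : c s(w, z) ≠ c s(w, v) := hc.1 hz ((hmemN w).mp hw).symm hzv
    exact this (by rw [hz2, hγ]; exact congrArg c (Sym2.eq_swap))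
  have hDcard : ∀ w ∈ N, (D w).card = Δ - 1 := by
    intro w hw
    have hwadj := (hmemN w).mp hw
    have hinj : Set.InjOn (fun z => c s(w, z)) ((G.neighborFinset w).erase v) := by
      intro a ha b hb hab
      have ha' := (G.mem_neighborFinset w a).mp (Finset.mem_of_mem_erase ha)
      have hb' := (G.mem_neighborFinset w b).mp (Finset.mem_of_mem_erase hb)
      by_contra hne
      exact hc.1 ha' hb' hne hab
    rw [hD]
    rw [Finset.card_image_of_injOn hinj,
      Finset.card_erase_of_mem ((G.mem_neighborFinset w v).mpr hwadj.symm)]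
    rw [card_neighborFinset_eq_degree, hdeg w hwadj]
  have hDsub : ∀ w ∈ N, D w ⊆ Finset.range k := by
    intro w hw α hα
    simp only [hD, Finset.mem_image, Finset.mem_erase, G.mem_neighborFinset] at hα
    obtain ⟨z, ⟨_, hz⟩, hz2⟩ := hα
    rw [Finset.mem_range, ← hz2]
    exact hlt hz
  -- key star constraint
  have hA : ∀ ⦃u w : V⦄, u ∈ N → w ∈ N → u ≠ w → γ u ∈ D w → γ w ∈ D u → False := by
    intro u w hu' hw' huw h1' h2'
    have hu := (hmemN u).mp hu'
    have hw := (hmemN w).mp hw'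
    simp only [hD, Finset.mem_image, Finset.mem_erase, G.mem_neighborFinset] at h1' h2'
    obtain ⟨z, ⟨hzv, hz⟩, hz2⟩ := h1'
    obtain ⟨z', ⟨hz'v, hz'⟩, hz'2⟩ := h2'
    have hnadj : ¬G.Adj u w := htf hu hw huw
    refine hc.2 z w v u z' hz.symm hw.symm hu hz' ?_ hzv ?_ hw.ne' (Ne.symm huw) hu.ne
      ?_ hz'v hz'.ne' ⟨?_, ?_⟩
    · exact hz.ne'
    · intro h; exact hnadj (h ▸ hz).symm
    · intro h; exact hnadj (h ▸ hz')
    · rw [show s(z, w) = s(w, z) from Sym2.eq_swap, hz2]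
    · rw [show s(w, v) = s(v, w) from Sym2.eq_swap, hz'2]
  -- the color sets
  set Γ : Finset ℕ := N.image γ with hΓ
  have hΓcard : Γ.card = Δ := by
    rw [hΓ, Finset.card_image_of_injOn (fun a ha b hb => hγinj a ha b hb), hNcard]
  have hΓsub : Γ ⊆ Finset.range k := by
    intro α hα
    simp only [hΓ, Finset.mem_image] at hα
    obtain ⟨u, hu, rfl⟩ := hα
    exact Finset.mem_range.mpr (hlt ((hmemN u).mp hu))
  set F : V → Finset V := fun w => N.filter (fun u => γ u ∈ D w) with hF
  have hFcard : ∀ w ∈ N, m ≤ (F w).card := by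
    intro w hw
    have himg : D w ∩ Γ = (F w).image γ := by
      ext α
      simp only [Finset.mem_inter, hΓ, hF, Finset.mem_image, Finset.mem_filter]
      constructor
      · rintro ⟨hαD, u, hu, rfl⟩
        exact ⟨u, ⟨hu, hαD⟩, rfl⟩
      · rintro ⟨u, ⟨hu, hαD⟩, rfl⟩
        exact ⟨hαD, u, hu, rfl⟩
    have hcardeq : (D w ∩ Γ).card = (F w).card := by
      rw [himg, Finset.card_image_of_injOn]
      intro a ha b hb
      exact hγinj a (Finset.mem_of_mem_filter a ha) b (Finset.mem_of_mem_filter b hb)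
    have hsplit : (D w ∩ Γ).card + (D w \ Γ).card = (D w).card :=
      Finset.card_inter_add_card_sdiff _ _
    have hsd : (D w \ Γ).card ≤ k - Δ := by
      calc (D w \ Γ).card ≤ (Finset.range k \ Γ).card :=
            Finset.card_le_card (Finset.sdiff_subset_sdiff (hDsub w hw) le_rfl)
        _ = k - Δ := by rw [Finset.card_sdiff_of_subset hΓsub, Finset.card_range, hΓcard]
    have := hDcard w hw
    omega
  -- counting
  set P : Finset ((_ : V) × V) := N.sigma F with hP
  have hPmem : ∀ a b : V, (⟨a, b⟩ : (_ : V) × V) ∈ P ↔ a ∈ N ∧ b ∈ N ∧ γ b ∈ D a := by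
    intro a b
    simp [hP, hF, Finset.mem_sigma, Finset.mem_filter, and_assoc]
  have hPne : ∀ a b : V, (⟨a, b⟩ : (_ : V) × V) ∈ P → a ≠ b := by
    intro a b hab heq
    subst heq
    obtain ⟨ha, _, hD'⟩ := (hPmem a a).mp hab
    exact hγnotD a ha hD'
  have hPcard : Δ * m ≤ P.card := by
    rw [hP, Finset.card_sigma]
    calc Δ * m = ∑ _w ∈ N, m := by rw [Finset.sum_const, smul_eq_mul, hNcard]
      _ ≤ ∑ w ∈ N, (F w).card := Finset.sum_le_sum hFcard
  set I1 : Finset (V × V) := P.image (fun p => (p.1, p.2)) with hI1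
  set I2 : Finset (V × V) := P.image (fun p => (p.2, p.1)) with hI2
  have hI1card : I1.card = P.card := by
    rw [hI1]
    apply Finset.card_image_of_injective
    intro p q hpq
    exact Sigma.ext (congrArg Prod.fst hpq) (heq_of_eq (congrArg Prod.snd hpq))
  have hI2card : I2.card = P.card := by
    rw [hI2]
    apply Finset.card_image_of_injective
    intro p q hpq
    exact Sigma.ext (congrArg Prod.snd hpq) (heq_of_eq (congrArg Prod.fst hpq))
  have hdisj : Disjoint I1 I2 := by
    rw [Finset.disjoint_left]
    rintro ⟨a, b⟩ hab1 hab2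
    simp only [hI1, hI2, Finset.mem_image, Prod.mk.injEq] at hab1 hab2
    obtain ⟨⟨a1, b1⟩, hp1, ha1, hb1⟩ := hab1
    obtain ⟨⟨a2, b2⟩, hp2, ha2, hb2⟩ := hab2
    obtain ⟨ha1N, hb1N, hd1⟩ := (hPmem a1 b1).mp hp1
    have ha1' : a1 = a := ha1
    have hb1' : b1 = b := hb1
    have ha2' : b2 = a := ha2
    have hb2' : a2 = b := hb2
    have ea : a2 = b1 := by rw [hb2', ← hb1']
    have eb : b2 = a1 := by rw [ha2', ← ha1']
    rw [ea, eb] at hp2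
    obtain ⟨_, _, hd2⟩ := (hPmem b1 a1).mp hp2
    exact hA hb1N ha1N (Ne.symm (hPne _ _ hp1)) hd1 hd2
  set D' : Finset (V × V) := N.offDiag \ {(x, y), (y, x)} with hD'
  have hxyN : x ∈ N := (hmemN x).mpr hx
  have hyN : y ∈ N := (hmemN y).mpr hy
  have hnotxy : ∀ a b : V, (⟨a, b⟩ : (_ : V) × V) ∈ P → ¬(a = x ∧ b = y) := by
    rintro a b hab ⟨rfl, rfl⟩
    obtain ⟨_, _, hd⟩ := (hPmem a b).mp hab
    simp only [hD, Finset.mem_image, Finset.mem_erase, G.mem_neighborFinset] at hd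
    obtain ⟨z, ⟨hzv, hz⟩, hz2⟩ := hd
    exact h2 z hz hz2
  have hnotyx : ∀ a b : V, (⟨a, b⟩ : (_ : V) × V) ∈ P → ¬(a = y ∧ b = x) := by
    rintro a b hab ⟨rfl, rfl⟩
    obtain ⟨_, _, hd⟩ := (hPmem a b).mp hab
    simp only [hD, Finset.mem_image, Finset.mem_erase, G.mem_neighborFinset] at hd
    obtain ⟨z, ⟨hzv, hz⟩, hz2⟩ := hd
    exact h1 z hz hz2
  have hsub : I1 ∪ I2 ⊆ D' := by
    rintro ⟨a, b⟩ hab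
    rw [Finset.mem_union] at hab
    rw [hD', Finset.mem_sdiff, Finset.mem_offDiag]
    rcases hab with hab | hab
    · simp only [hI1, Finset.mem_image, Prod.mk.injEq] at hab
      obtain ⟨⟨a1, b1⟩, hp, h2a, h2b⟩ := hab
      have h2a' : a1 = a := h2a
      have h2b' : b1 = b := h2b
      subst h2a' h2b'
      obtain ⟨ha1, hb1, _⟩ := (hPmem _ _).mp hp
      refine ⟨⟨ha1, hb1, hPne _ _ hp⟩, ?_⟩
      simp only [Finset.mem_insert, Finset.mem_singleton, Prod.mk.injEq]
      push_neg
      exact ⟨fun h h' => hnotxy _ _ hp ⟨h, h'⟩, fun h h' => hnotyx _ _ hp ⟨h, h'⟩⟩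
    · simp only [hI2, Finset.mem_image, Prod.mk.injEq] at hab
      obtain ⟨⟨a1, b1⟩, hp, h2a, h2b⟩ := hab
      have h2a' : b1 = a := h2a
      have h2b' : a1 = b := h2b
      subst h2a' h2b'
      obtain ⟨ha1, hb1, _⟩ := (hPmem _ _).mp hp
      refine ⟨⟨hb1, ha1, Ne.symm (hPne _ _ hp)⟩, ?_⟩
      simp only [Finset.mem_insert, Finset.mem_singleton, Prod.mk.injEq]
      push_neg
      exact ⟨fun h h' => hnotyx _ _ hp ⟨h', h⟩, fun h h' => hnotxy _ _ hp ⟨h', h⟩⟩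
  have hpairsub : ({(x, y), (y, x)} : Finset (V × V)) ⊆ N.offDiag := by
    intro p hp
    simp only [Finset.mem_insert, Finset.mem_singleton] at hp
    rcases hp with rfl | rfl
    · exact Finset.mem_offDiag.mpr ⟨hxyN, hyN, hxy⟩
    · exact Finset.mem_offDiag.mpr ⟨hyN, hxyN, Ne.symm hxy⟩
  have hpaircard : ({(x, y), (y, x)} : Finset (V × V)).card = 2 :=
    Finset.card_pair (fun h => hxy (congrArg Prod.fst h))
  have hD'card : D'.card = Δ * Δ - Δ - 2 := by
    rw [hD', Finset.card_sdiff_of_subset hpairsub, hpaircard, Finset.offDiag_card, hNcard]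
  have hfinal : 2 * P.card ≤ Δ * Δ - Δ - 2 := by
    calc 2 * P.card = I1.card + I2.card := by rw [hI1card, hI2card]; ring
      _ = (I1 ∪ I2).card := (Finset.card_union_of_disjoint hdisj).symm
      _ ≤ D'.card := Finset.card_le_card hsub
      _ = Δ * Δ - Δ - 2 := hD'card
  have e1 : Δ * m = 2 * (m * m) + m := by rw [hm]; ring
  have e2 : Δ * Δ = 4 * (m * m) + 4 * m + 1 := by rw [hm]; ring
  rw [e1] at hPcard
  rw [e2] at hfinal
  set q := m * m with hq
  omega
end

section
/- For every odd integer Δ ≥ 3, there exists a cactus graph G with maximum degree Δ such that χ'_s(G) = ⌊3Δ/2⌋ + 1. -/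
open SimpleGraph Finset

/-!
Write `Δ = 2t + 1` and take a star edge coloring with colors `< 3t + 1`. Let `v` be a vertex of
degree `Δ` all of whose neighbours have degree `Δ`. For neighbours `u ≠ w` of `v`, the color of
`vw` cannot be present at `u` while the color of `vu` is present at `w`, as that gives a bicolored
path; a count shows that every `u` sees the colors of at least `t` edges `vw`, so these relations
form a regular tournament and every neighbour of `v` sees every color missing at `v`. On a triangle
`r x y` of such vertices the colors missing at `x` and at `y` are therefore disjoint and present at
`r`, so at most one color is present at all three corners, whereas the tournaments at `r`, `x`, `y`
force two of the three triangle colors to be. Hence `χ'_s ≥ 3t + 2 = ⌊3Δ/2⌋ + 1`.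

The upper bound is an explicit coloring of a triangle with a tree of height two hung from each
corner. The leaf edges below the `i`-th child of a corner reuse the colors of the edges to the
children `i + 1, …, i + s` (mod `2s + 1`, where `Δ = 2s + 3`); two such reuses never close a
bicolored path, because `d + d' ≢ 0` for `1 ≤ d, d' ≤ s`.
-/

section General

variable {V W : Type*} {G : SimpleGraph V} {H : SimpleGraph W}

lemma IsStarEdgeColoring.comap {c : Sym2 W → ℕ} (f : G ↪g H) (hc : IsStarEdgeColoring H c) :
    IsStarEdgeColoring G (c ∘ Sym2.map f) := by
  refine ⟨fun u v w huv huw hvw => hc.1 (f.map_adj_iff.mpr huv) (f.map_adj_iff.mpr huw)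
    (f.injective.ne hvw), ?_⟩
  intro v₀ v₁ v₂ v₃ v₄ h₀₁ h₁₂ h₂₃ h₃₄ h₀₁' h₀₂ h₀₃ h₁₂' h₁₃ h₂₃' h₄₁ h₄₂ h₄₃
  simpa using hc.2 (f v₀) (f v₁) (f v₂) (f v₃) (f v₄) (f.map_adj_iff.mpr h₀₁)
    (f.map_adj_iff.mpr h₁₂) (f.map_adj_iff.mpr h₂₃) (f.map_adj_iff.mpr h₃₄)
    (f.injective.ne h₀₁') (f.injective.ne h₀₂) (f.injective.ne h₀₃) (f.injective.ne h₁₂')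
    (f.injective.ne h₁₃) (f.injective.ne h₂₃') (f.injective.ne h₄₁) (f.injective.ne h₄₂)
    (f.injective.ne h₄₃)

lemma StarColorable.of_embedding {k : ℕ} (f : G ↪g H) (h : StarColorable H k) :
    StarColorable G k := by
  obtain ⟨c, hk, hc⟩ := h
  exact ⟨c ∘ Sym2.map f, fun u v huv => hk (f.map_adj_iff.mpr huv), hc.comap f⟩

lemma SimpleGraph.Iso.starColorable_iff {k : ℕ} (f : G ≃g H) :
    StarColorable G k ↔ StarColorable H k :=
  ⟨.of_embedding f.symm.toEmbedding, .of_embedding f.toEmbedding⟩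

lemma StarColorable.mono_s10 {k m : ℕ} (h : StarColorable G k) (hkm : k ≤ m) : StarColorable G m :=
  let ⟨c, hk, hc⟩ := h
  ⟨c, fun _ _ huv => (hk huv).trans_le hkm, hc⟩

lemma starChromaticIndex_eq_succ_s10 {k : ℕ} (h : StarColorable G (k + 1))
    (h' : ¬ StarColorable G k) : starChromaticIndex G = k + 1 :=
  (Nat.sInf_upward_closed_eq_succ_iff (fun _ _ hkm hk => StarColorable.mono_s10 hk hkm) k).mpr ⟨h, h'⟩

lemma IsCactus.of_embedding (f : G ↪g H) (h : IsCactus H) : IsCactus G := by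
  intro u w p q hp hq e hep heq
  have hinj : Function.Injective (Sym2.map f) := Sym2.map.injective f.injective
  have key := h (p.map f.toHom) (q.map f.toHom) (hp.map f.injective) (hq.map f.injective)
    (e.map f) (by simpa using List.mem_map_of_mem hep) (by simpa using List.mem_map_of_mem heq)
  ext e'
  simpa [Walk.edges_map, hinj.eq_iff] using Set.ext_iff.mp key (e'.map f)

lemma isCactus_of_forall_isCycle_edges_subset (E : Finset (Sym2 V)) (hE : #E ≤ 3)
    (h : ∀ ⦃u⦄ (p : G.Walk u u), p.IsCycle → ∀ e ∈ p.edges, e ∈ E) : IsCactus G := by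
  classical
  suffices ∀ ⦃u⦄ (p : G.Walk u u), p.IsCycle → {e | e ∈ p.edges} = E by
    intro u w p q hp hq _ _ _
    rw [this p hp, this q hq]
  intro u p hp
  have hsub : p.edges.toFinset ⊆ E := fun e he => h p hp e (List.mem_toFinset.mp he)
  have hcard : #E ≤ #p.edges.toFinset := by
    rw [List.toFinset_card_of_nodup hp.edges_nodup, p.length_edges]
    exact hE.trans hp.three_le_length
  ext e
  simp [← Finset.eq_of_subset_of_card_le hsub hcard]

lemma SimpleGraph.Walk.IsCycle.exists_adj_ne {u v : V} {p : G.Walk u u} (hp : p.IsCycle)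
    (hv : v ∈ p.support) :
    ∃ w₁ w₂, w₁ ≠ w₂ ∧ G.Adj v w₁ ∧ G.Adj v w₂ ∧ w₁ ∈ p.support ∧ w₂ ∈ p.support := by
  obtain ⟨w₁, w₂, hne, hw⟩ := Set.ncard_eq_two.mp (hp.ncard_neighborSet_toSubgraph_eq_two hv)
  have hadj : ∀ w ∈ p.toSubgraph.neighborSet v, G.Adj v w ∧ w ∈ p.support := fun w hw' =>
    ⟨p.toSubgraph.adj_sub hw', p.mem_verts_toSubgraph.mp (p.toSubgraph.edge_vert hw'.symm)⟩
  obtain ⟨h₁, h₁'⟩ := hadj w₁ (by simp [hw])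
  obtain ⟨h₂, h₂'⟩ := hadj w₂ (by simp [hw])
  exact ⟨w₁, w₂, hne, h₁, h₂, h₁', h₂'⟩

end General

lemma Finset.forall_card_filter_eq_and_total_of_asymm {α : Type*} [DecidableEq α] {N : Finset α}
    {R : α → α → Prop} [DecidableRel R] {t : ℕ} (hN : #N = 2 * t + 1)
    (hR : ∀ u ∈ N, ∀ w ∈ N, R u w → ¬ R w u) (ht : ∀ u ∈ N, t ≤ #{w ∈ N | R u w}) :
    (∀ u ∈ N, #{w ∈ N | R u w} = t) ∧ ∀ u ∈ N, ∀ w ∈ N, u ≠ w → R u w ∨ R w u := by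
  -- summing `f ≤ g` over `N × N` bounds twice the total out-degree by `(2t + 1) 2t`, which the
  -- lower bounds `ht` already attain, so every inequality involved is an equality
  set f : α → α → ℕ := fun u w => (if R u w then 1 else 0) + if R w u then 1 else 0
  set g : α → α → ℕ := fun u w => if u ≠ w then 1 else 0
  have hfg : ∀ u ∈ N, ∀ w ∈ N, f u w ≤ g u w := by
    intro u hu w hw
    have := hR u hu w hw
    by_cases h : u = w
    · subst h; simp_all [f, g]
    · simp only [f, g]; split_ifs <;> simp_all
  have hf : ∑ u ∈ N, ∑ w ∈ N, f u w = 2 * ∑ u ∈ N, #{w ∈ N | R u w} := by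
    simp only [f, sum_add_distrib]
    rw [sum_comm (f := fun u w => if R w u then 1 else 0)]
    simp only [sum_boole, Nat.cast_id]
    ring
  have hg : ∑ u ∈ N, ∑ w ∈ N, g u w = 2 * ((2 * t + 1) * t) := by
    have : ∀ u ∈ N, ∑ w ∈ N, g u w = 2 * t := fun u hu => by
      simp only [g, sum_boole, filter_ne, Nat.cast_id, card_erase_of_mem hu, hN]
      omega
    rw [sum_congr rfl this, sum_const, hN, smul_eq_mul]
    ring
  have hlow : ∑ _u ∈ N, t ≤ ∑ u ∈ N, #{w ∈ N | R u w} := sum_le_sum ht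
  rw [sum_const, hN, smul_eq_mul] at hlow
  have hle := sum_le_sum fun u hu => sum_le_sum (hfg u hu)
  constructor
  · have := (sum_eq_sum_iff_of_le ht).mp (by rw [sum_const, hN, smul_eq_mul]; omega)
    exact fun u hu => (this u hu).symm
  · intro u hu w hw huw
    have hrow := (sum_eq_sum_iff_of_le fun u hu => sum_le_sum (hfg u hu)).mp
      (by omega) u hu
    have := (sum_eq_sum_iff_of_le (hfg u hu)).mp hrow w hw
    simp only [f, g] at this
    split_ifs at this <;> simp_all

section Colors

variable {V : Type*} {G : SimpleGraph V} [G.LocallyFinite] {c : Sym2 V → ℕ}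

def colorsAt (G : SimpleGraph V) [G.LocallyFinite] (c : Sym2 V → ℕ) (v : V) : Finset ℕ :=
  (G.neighborFinset v).image fun u => c s(v, u)

lemma mem_colorsAt {v : V} {k : ℕ} : k ∈ colorsAt G c v ↔ ∃ u, G.Adj v u ∧ c s(v, u) = k := by
  simp [colorsAt]

lemma mem_colorsAt_left {u v : V} (h : G.Adj u v) : c s(u, v) ∈ colorsAt G c u :=
  mem_colorsAt.mpr ⟨v, h, rfl⟩

lemma mem_colorsAt_right {u v : V} (h : G.Adj u v) : c s(u, v) ∈ colorsAt G c v :=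
  Sym2.eq_swap ▸ mem_colorsAt_left h.symm

lemma colorsAt_subset_range {k : ℕ} (hk : ∀ ⦃u w : V⦄, G.Adj u w → c s(u, w) < k) (v : V) :
    colorsAt G c v ⊆ range k := fun _ h =>
  let ⟨_, hu, hc⟩ := mem_colorsAt.mp h
  mem_range.mpr (hc ▸ hk hu)

lemma IsStarEdgeColoring.card_colorsAt (hc : IsStarEdgeColoring G c) (v : V) :
    #(colorsAt G c v) = G.degree v :=
  card_image_of_injOn fun _ hu _ hw h => by_contra fun hne =>
    hc.1 ((mem_neighborFinset _ _ _).mp hu) ((mem_neighborFinset _ _ _).mp hw) hne h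

lemma IsStarEdgeColoring.card_range_sdiff_colorsAt (hc : IsStarEdgeColoring G c) {k : ℕ}
    (hk : ∀ ⦃u w : V⦄, G.Adj u w → c s(u, w) < k) (v : V) :
    #(range k \ colorsAt G c v) = k - G.degree v := by
  rw [card_sdiff_of_subset (colorsAt_subset_range hk v), card_range, hc.card_colorsAt]

/-- Otherwise `x u v w y` is a bicolored path, where `x` and `y` are the neighbours of `u` and `w`
along which the colors of `vw` and `vu` reappear. -/
lemma IsStarEdgeColoring.not_mem_colorsAt_of_mem_colorsAt (hc : IsStarEdgeColoring G c)
    {v u w : V} (hu : G.Adj v u) (hw : G.Adj v w) (huw : u ≠ w)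
    (h : c s(v, w) ∈ colorsAt G c u) : c s(v, u) ∉ colorsAt G c w := by
  intro h'
  obtain ⟨x, hux, hx⟩ := mem_colorsAt.mp h
  obtain ⟨y, hwy, hy⟩ := mem_colorsAt.mp h'
  have hxv : x ≠ v := by rintro rfl; exact hc.1 hw hu huw.symm (by rw [← hx, Sym2.eq_swap])
  have hyv : y ≠ v := by rintro rfl; exact hc.1 hu hw huw (by rw [← hy, Sym2.eq_swap])
  have hxw : x ≠ w := by
    rintro rfl; exact hc.1 hux.symm hw.symm hu.ne.symm (by rw [Sym2.eq_swap, hx, Sym2.eq_swap])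
  have hyu : y ≠ u := by
    rintro rfl; exact hc.1 hwy.symm hu.symm hw.ne.symm (by rw [Sym2.eq_swap, hy, Sym2.eq_swap])
  refine hc.2 x u v w y hux.symm hu.symm hw hwy hux.ne.symm hxv hxw hu.ne.symm huw hw.ne
    hyu hyv hwy.ne.symm ⟨?_, ?_⟩
  · rw [Sym2.eq_swap, hx]
  · rw [Sym2.eq_swap, hy]

/-- Orienting `u → w` when the color of `vw` is present at `u` gives an asymmetric relation on the
neighbours of `v` with all out-degrees `≥ t`, hence a regular tournament. -/
lemma IsStarEdgeColoring.card_colorsAt_inter_eq_and_total (hc : IsStarEdgeColoring G c) {t : ℕ}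
    (hk : ∀ ⦃u w : V⦄, G.Adj u w → c s(u, w) < 3 * t + 1) {v : V} (hv : G.degree v = 2 * t + 1)
    (hN : ∀ u, G.Adj v u → G.degree u = 2 * t + 1) :
    (∀ u, G.Adj v u → #(colorsAt G c v ∩ colorsAt G c u) = t + 1) ∧
      ∀ u w, G.Adj v u → G.Adj v w → u ≠ w →
        c s(v, w) ∈ colorsAt G c u ∨ c s(v, u) ∈ colorsAt G c w := by
  classical
  set N := G.neighborFinset v
  set S := colorsAt G c
  have hmem : ∀ {u}, u ∈ N ↔ G.Adj v u := mem_neighborFinset _ _ _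
  have hout : ∀ u ∈ N, #{w ∈ N | u ≠ w ∧ c s(v, w) ∈ S u} + 1 = #(S v ∩ S u) := by
    intro u hu
    have hself : u ∈ {w ∈ N | c s(v, w) ∈ S u} :=
      mem_filter.mpr ⟨hu, mem_colorsAt_right (hmem.mp hu)⟩
    rw [show {w ∈ N | u ≠ w ∧ c s(v, w) ∈ S u} = {w ∈ N | c s(v, w) ∈ S u}.erase u by
      ext; simp only [mem_filter, mem_erase]; tauto, card_erase_add_one hself,
      ← filter_mem_eq_inter, show S v = N.image fun w => c s(v, w) from rfl,
      filter_image, card_image_of_injOn]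
    exact fun w₁ hw₁ w₂ hw₂ h => by_contra fun hne =>
      hc.1 (hmem.mp (mem_filter.mp hw₁).1) (hmem.mp (mem_filter.mp hw₂).1) hne h
  have hlow : ∀ u ∈ N, t + 1 ≤ #(S v ∩ S u) := by
    intro u hu
    have hsd : #(S u \ S v) ≤ #(range (3 * t + 1) \ S v) :=
      card_le_card (sdiff_subset_sdiff (colorsAt_subset_range hk u) le_rfl)
    have := card_sdiff_add_card_inter (S u) (S v)
    rw [hc.card_range_sdiff_colorsAt hk, hv] at hsd
    rw [hc.card_colorsAt, hN u (hmem.mp hu), inter_comm] at this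
    omega
  obtain ⟨hreg, htot⟩ := forall_card_filter_eq_and_total_of_asymm
    (R := fun u w => u ≠ w ∧ c s(v, w) ∈ S u) (by rw [card_neighborFinset_eq_degree, hv])
    (fun u hu w hw huw hwu => hc.not_mem_colorsAt_of_mem_colorsAt (hmem.mp hu) (hmem.mp hw) huw.1
      huw.2 hwu.2)
    (fun u hu => by have := hout u hu; have := hlow u hu; omega)
  refine ⟨fun u hu => ?_, fun u w hu hw huw => ?_⟩
  · rw [← hout u (hmem.mpr hu), hreg u (hmem.mpr hu)]
  · exact (htot u (hmem.mpr hu) w (hmem.mpr hw) huw).imp And.right And.right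

lemma IsStarEdgeColoring.range_sdiff_colorsAt_subset (hc : IsStarEdgeColoring G c) {t : ℕ}
    (hk : ∀ ⦃u w : V⦄, G.Adj u w → c s(u, w) < 3 * t + 1) {u v : V} (hv : G.degree v = 2 * t + 1)
    (hu : G.degree u = 2 * t + 1) (h : #(colorsAt G c v ∩ colorsAt G c u) = t + 1) :
    range (3 * t + 1) \ colorsAt G c v ⊆ colorsAt G c u := by
  have hsub : colorsAt G c u \ colorsAt G c v ⊆ range (3 * t + 1) \ colorsAt G c v :=
    sdiff_subset_sdiff (colorsAt_subset_range hk u) le_rfl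
  have hcard := card_sdiff_add_card_inter (colorsAt G c u) (colorsAt G c v)
  rw [inter_comm, h, hc.card_colorsAt, hu] at hcard
  rw [← eq_of_subset_of_card_le hsub (by rw [hc.card_range_sdiff_colorsAt hk, hv]; omega)]
  exact sdiff_subset

section Triangle

variable {t : ℕ} {r x y : V}

/-- The sets of colors missing at `x` and at `y` are disjoint and both present at `r`. -/
lemma IsStarEdgeColoring.card_colorsAt_inter_inter_le_one (hc : IsStarEdgeColoring G c)
    (hk : ∀ ⦃u w : V⦄, G.Adj u w → c s(u, w) < 3 * t + 1) (hrx : G.Adj r x) (hry : G.Adj r y)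
    (hxy : G.Adj x y) (hr : ∀ u, G.Adj r u → G.degree u = 2 * t + 1)
    (hx : ∀ u, G.Adj x u → G.degree u = 2 * t + 1) (hy : ∀ u, G.Adj y u → G.degree u = 2 * t + 1) :
    #(colorsAt G c r ∩ colorsAt G c x ∩ colorsAt G c y) ≤ 1 := by
  set S := colorsAt G c
  set O := fun v => range (3 * t + 1) \ S v
  have hdr := hx r hrx.symm
  have hdx := hr x hrx
  have hdy := hr y hry
  have hx₁ := (hc.card_colorsAt_inter_eq_and_total hk hdx hx).1
  have hy₁ := (hc.card_colorsAt_inter_eq_and_total hk hdy hy).1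
  have hOxy : O x ⊆ S y := hc.range_sdiff_colorsAt_subset hk hdx hdy (hx₁ y hxy)
  have hOxr : O x ⊆ S r := hc.range_sdiff_colorsAt_subset hk hdx hdr (hx₁ r hrx.symm)
  have hOyr : O y ⊆ S r := hc.range_sdiff_colorsAt_subset hk hdy hdr (hy₁ r hry.symm)
  have hdisj : Disjoint (O x) (O y) :=
    disjoint_left.mpr fun _ h h' => (mem_sdiff.mp h').2 (hOxy h)
  have hsub : S r ∩ S x ∩ S y ⊆ S r \ (O x ∪ O y) := by
    intro a ha
    simp only [mem_inter, mem_sdiff, mem_union, O] at ha ⊢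
    tauto
  have := card_le_card hsub
  rw [card_sdiff_of_subset (union_subset hOxr hOyr), card_union_of_disjoint hdisj,
    hc.card_range_sdiff_colorsAt hk, hc.card_range_sdiff_colorsAt hk, hc.card_colorsAt, hdr, hdx,
    hdy] at this
  omega

/-- Two of the three triangle colors are forced, by the tournaments at `r`, `x` and `y`, to be
present at all three corners. -/
lemma not_starColorable_of_triangle (hrx : G.Adj r x) (hry : G.Adj r y)
    (hxy : G.Adj x y) (hr : ∀ u, G.Adj r u → G.degree u = 2 * t + 1)
    (hx : ∀ u, G.Adj x u → G.degree u = 2 * t + 1) (hy : ∀ u, G.Adj y u → G.degree u = 2 * t + 1) :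
    ¬ StarColorable G (3 * t + 1) := by
  rintro ⟨c, hk, hc⟩
  set S := colorsAt G c
  have hcommon : ∀ a, a ∈ S r → a ∈ S x → a ∈ S y → ∀ b, b ∈ S r → b ∈ S x → b ∈ S y → a = b :=
    fun a har hax hay b hbr hbx hby => card_le_one.mp
      (hc.card_colorsAt_inter_inter_le_one hk hrx hry hxy hr hx hy)
      a (mem_inter.mpr ⟨mem_inter.mpr ⟨har, hax⟩, hay⟩)
      b (mem_inter.mpr ⟨mem_inter.mpr ⟨hbr, hbx⟩, hby⟩)
  have hα : c s(r, x) ∈ S r ∧ c s(r, x) ∈ S x := ⟨mem_colorsAt_left hrx, mem_colorsAt_right hrx⟩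
  have hβ : c s(r, y) ∈ S r ∧ c s(r, y) ∈ S y := ⟨mem_colorsAt_left hry, mem_colorsAt_right hry⟩
  have hγ : c s(x, y) ∈ S x ∧ c s(x, y) ∈ S y := ⟨mem_colorsAt_left hxy, mem_colorsAt_right hxy⟩
  have hαβ : c s(r, x) ≠ c s(r, y) := hc.1 hrx hry hxy.ne
  have hαγ : c s(r, x) ≠ c s(x, y) := by
    rw [Sym2.eq_swap]; exact hc.1 hrx.symm hxy hry.ne
  have hβγ : c s(r, y) ≠ c s(x, y) := by
    rw [Sym2.eq_swap, Sym2.eq_swap (a := x)]; exact hc.1 hry.symm hxy.symm hrx.ne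
  have h₁ : c s(r, y) ∈ S x ∨ c s(r, x) ∈ S y :=
    (hc.card_colorsAt_inter_eq_and_total hk (hx r hrx.symm) hr).2 x y hrx hry hxy.ne
  have h₂ : c s(x, y) ∈ S r ∨ c s(r, x) ∈ S y := by
    simpa only [Sym2.eq_swap (a := x) (b := r)] using
      (hc.card_colorsAt_inter_eq_and_total hk (hr x hrx) hx).2 r y hrx.symm hxy hry.ne
  have h₃ : c s(x, y) ∈ S r ∨ c s(r, y) ∈ S x := by
    simpa only [Sym2.eq_swap (a := y)] using
      (hc.card_colorsAt_inter_eq_and_total hk (hr y hry) hy).2 r x hry.symm hxy.symm hrx.ne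
  rcases h₁ with hβx | hαy
  · rcases h₂ with hγr | hαy
    · exact hβγ (hcommon _ hβ.1 hβx hβ.2 _ hγr hγ.1 hγ.2)
    · exact hαβ (hcommon _ hα.1 hα.2 hαy _ hβ.1 hβx hβ.2)
  · rcases h₃ with hγr | hβx
    · exact hαγ (hcommon _ hα.1 hα.2 hαy _ hγr hγ.1 hγ.2)
    · exact hαβ (hcommon _ hα.1 hα.2 hαy _ hβ.1 hβx hβ.2)

end Triangle

end Colors

namespace ExtremalCactus

/-- For `Δ = 2s + 3`, the paper's graph around the triangle `r x y`, cut off at distance two from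
the triangle. -/
inductive Vertex (s : ℕ) where
  | corner (a : Fin 3)
  | child (a : Fin 3) (i : Fin (2 * s + 1))
  | leaf (a : Fin 3) (i : Fin (2 * s + 1)) (ℓ : Fin s ⊕ Option (Fin (s + 1)))
  deriving DecidableEq, Fintype

variable {s : ℕ}

open Vertex

def Vertex.Adj : Vertex s → Vertex s → Prop
  | corner a, corner b => a ≠ b
  | corner a, child b _ | child a _, corner b => a = b
  | child a i, leaf b j _ | leaf a i _, child b j => a = b ∧ i = j
  | _, _ => False

def graph (s : ℕ) : SimpleGraph (Vertex s) where
  Adj := Vertex.Adj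
  symm := ⟨fun u v h => by cases u <;> cases v <;> simp_all [Vertex.Adj, eq_comm]⟩
  loopless := ⟨fun u h => by cases u <;> simp [Vertex.Adj] at h⟩

instance : DecidableRel (graph s).Adj := fun u v => by
  cases u <;> cases v <;> simp only [graph, Vertex.Adj] <;> infer_instance

@[simp] lemma adj_corner_corner {a b : Fin 3} : (graph s).Adj (corner a) (corner b) ↔ a ≠ b :=
  Iff.rfl

lemma adj_corner_iff {a : Fin 3} {v : Vertex s} :
    (graph s).Adj (corner a) v ↔ (∃ b, a ≠ b ∧ v = corner b) ∨ ∃ i, v = child a i := by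
  cases v <;> simp [graph, Vertex.Adj, eq_comm]

lemma adj_child_iff {a : Fin 3} {i : Fin (2 * s + 1)} {v : Vertex s} :
    (graph s).Adj (child a i) v ↔ v = corner a ∨ ∃ ℓ, v = leaf a i ℓ := by
  cases v <;> simp [graph, Vertex.Adj, eq_comm]

lemma adj_leaf_iff {a : Fin 3} {i : Fin (2 * s + 1)} {ℓ} {v : Vertex s} :
    (graph s).Adj (leaf a i ℓ) v ↔ v = child a i := by
  cases v <;> simp [graph, Vertex.Adj, eq_comm]

lemma degree_corner (a : Fin 3) : (graph s).degree (corner a) = 2 * s + 3 := by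
  have : (graph s).neighborFinset (corner a) =
      (univ.erase a).image corner ∪ univ.image (child a) := by
    ext v; simp [adj_corner_iff, eq_comm, and_comm]
  rw [← card_neighborFinset_eq_degree, this,
    card_union_of_disjoint (by simp [Finset.disjoint_left]),
    card_image_of_injective _ (fun _ _ h => by cases h; rfl),
    card_image_of_injective _ (fun _ _ h => by cases h; rfl)]
  simp only [card_erase_of_mem (mem_univ a), card_univ, Fintype.card_fin]
  omega

lemma degree_child (a : Fin 3) (i : Fin (2 * s + 1)) :
    (graph s).degree (child a i) = 2 * s + 3 := by
  have : (graph s).neighborFinset (child a i) = insert (corner a) (univ.image (leaf a i)) := by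
    ext v; simp [adj_child_iff, eq_comm]
  rw [← card_neighborFinset_eq_degree, this, card_insert_of_notMem (by simp),
    card_image_of_injective _ (fun _ _ h => by cases h; rfl)]
  simp only [card_univ, Fintype.card_sum, Fintype.card_fin, Fintype.card_option]
  omega

lemma degree_leaf (a : Fin 3) (i : Fin (2 * s + 1)) ℓ : (graph s).degree (leaf a i ℓ) = 1 := by
  have : (graph s).neighborFinset (leaf a i ℓ) = {child a i} := by
    ext v; simp [adj_leaf_iff]
  rw [← card_neighborFinset_eq_degree, this, card_singleton]

lemma maxDegree_graph : (graph s).maxDegree = 2 * s + 3 := by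
  refine le_antisymm (maxDegree_le_of_forall_degree_le _ _ fun v => ?_)
    (degree_corner (s := s) 0 ▸ degree_le_maxDegree _ _)
  cases v <;> simp [degree_corner, degree_child, degree_leaf]

lemma degree_of_adj_corner {a : Fin 3} {v : Vertex s} (h : (graph s).Adj (corner a) v) :
    (graph s).degree v = 2 * s + 3 := by
  rcases adj_corner_iff.mp h with ⟨b, -, rfl⟩ | ⟨i, rfl⟩
  · exact degree_corner b
  · exact degree_child a i

lemma exists_eq_corner_of_mem_support {u v : Vertex s} {p : (graph s).Walk u u} (hp : p.IsCycle)
    (hv : v ∈ p.support) : ∃ a, v = corner a := by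
  have hleaf : ∀ a i ℓ, leaf a i ℓ ∉ p.support := fun a i ℓ h => by
    obtain ⟨w₁, w₂, hne, h₁, h₂, -⟩ := hp.exists_adj_ne h
    exact hne ((adj_leaf_iff.mp h₁).trans (adj_leaf_iff.mp h₂).symm)
  have hchild : ∀ a i, child a i ∉ p.support := fun a i h => by
    obtain ⟨w₁, w₂, hne, h₁, h₂, hw₁, hw₂⟩ := hp.exists_adj_ne h
    rcases adj_child_iff.mp h₁ with rfl | ⟨ℓ, rfl⟩ <;>
      rcases adj_child_iff.mp h₂ with rfl | ⟨ℓ', rfl⟩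
    exacts [hne rfl, hleaf _ _ _ hw₂, hleaf _ _ _ hw₁, hleaf _ _ _ hw₁]
  cases v with
  | corner a => exact ⟨a, rfl⟩
  | child a i => exact absurd hv (hchild a i)
  | leaf a i ℓ => exact absurd hv (hleaf a i ℓ)

def triangleEdges (s : ℕ) : Finset (Sym2 (Vertex s)) :=
  {s(corner 0, corner 1), s(corner 0, corner 2), s(corner 1, corner 2)}

lemma isCactus_graph : IsCactus (graph s) := by
  refine isCactus_of_forall_isCycle_edges_subset (triangleEdges s) card_le_three ?_
  intro u p hp e he
  induction e with
  | h v w =>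
    obtain ⟨a, rfl⟩ := exists_eq_corner_of_mem_support hp (p.fst_mem_support_of_mem_edges he)
    obtain ⟨b, rfl⟩ := exists_eq_corner_of_mem_support hp (p.snd_mem_support_of_mem_edges he)
    have hab : a ≠ b := p.adj_of_mem_edges he
    fin_cases a <;> fin_cases b <;> simp_all [triangleEdges, Sym2.eq_swap]

/-- For `a ≠ b` this is the third corner, so the triangle color missing at corner `a` is `a`. -/
def triangleColor (a b : Fin 3) : ℕ := 3 - a - b

lemma triangleColor_lt {a b : Fin 3} (h : a ≠ b) : triangleColor a b < 3 := by
  revert a b; decide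

lemma triangleColor_comm (a b : Fin 3) : triangleColor a b = triangleColor b a := by
  revert a b; decide

lemma triangleColor_ne_left {a b : Fin 3} (h : a ≠ b) : triangleColor a b ≠ a := by
  revert a b; decide

lemma triangleColor_injective {a b b' : Fin 3} (hb : a ≠ b) (hb' : a ≠ b')
    (h : triangleColor a b = triangleColor a b') : b = b' := by
  revert a b b'; decide

def shift (d : Fin s) : Fin (2 * s + 1) := ⟨d + 1, by omega⟩

lemma shift_ne_zero (d : Fin s) : shift d ≠ 0 := by
  simp [shift, Fin.ext_iff]

lemma shift_add_shift_ne_zero (d d' : Fin s) : shift d + shift d' ≠ 0 := by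
  have := d.isLt; have := d'.isLt
  simp only [Ne, Fin.ext_iff, Fin.val_add, shift, Fin.val_zero]
  rw [Nat.mod_eq_of_lt (by omega)]
  omega

/-- The leaves below `child a i` come in three kinds, with colors in the disjoint bands
`[3, 2s + 4)`, `{a} ⊆ [0, 3)` and `[2s + 4, 3s + 5)`. -/
def leafColor (a : Fin 3) (i : Fin (2 * s + 1)) : Fin s ⊕ Option (Fin (s + 1)) → ℕ
  | .inl d => 3 + (i + shift d : Fin (2 * s + 1))
  | .inr none => a
  | .inr (some m) => 2 * s + 4 + m

lemma leafColor_inl_lt (a : Fin 3) (i : Fin (2 * s + 1)) (d : Fin s) :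
    3 ≤ leafColor a i (.inl d) ∧ leafColor a i (.inl d) < 2 * s + 4 :=
  ⟨by simp [leafColor], by simp only [leafColor]; have := (i + shift d).isLt; omega⟩

lemma leafColor_lt (a : Fin 3) (i : Fin (2 * s + 1)) ℓ : leafColor a i ℓ < 3 * s + 5 := by
  rcases ℓ with d | _ | m
  · have := leafColor_inl_lt a i d; omega
  all_goals simp only [leafColor]; omega

lemma leafColor_injective (a : Fin 3) (i : Fin (2 * s + 1)) :
    Function.Injective (leafColor a i) := by
  rintro (d | _ | m) (d' | _ | m') h
  · have e : i + shift d = i + shift d' := Fin.ext (by simpa [leafColor] using h)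
    simpa [shift, Fin.ext_iff] using add_left_cancel e
  all_goals first
    | rfl
    | (have := leafColor_inl_lt a i d; simp only [leafColor] at *; omega)
    | (have := leafColor_inl_lt a i d'; simp only [leafColor] at *; omega)
    | (simp only [leafColor] at h; omega)
    | (simp only [leafColor] at h; rw [Fin.ext (by omega : m.val = m'.val)])

lemma leafColor_ne_childColor (a : Fin 3) (i : Fin (2 * s + 1)) ℓ : leafColor a i ℓ ≠ 3 + i := by
  rcases ℓ with d | _ | m
  · intro h
    exact shift_ne_zero d (add_eq_left.mp (Fin.ext (by simpa [leafColor] using h)))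
  · simp only [leafColor]; omega
  · simp only [leafColor]; omega

lemma leafColor_ne_triangleColor {a b : Fin 3} (h : a ≠ b) (i : Fin (2 * s + 1)) ℓ :
    leafColor a i ℓ ≠ triangleColor a b := by
  have := triangleColor_lt h
  rcases ℓ with d | _ | m
  · have := leafColor_inl_lt a i d; omega
  · exact (triangleColor_ne_left h).symm
  · simp only [leafColor]; omega

lemma not_leafColor_eq_childColor_and {a a' : Fin 3} {i i' : Fin (2 * s + 1)} ℓ ℓ' :
    ¬ (leafColor a i ℓ = 3 + i' ∧ leafColor a' i' ℓ' = 3 + i) := by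
  rintro ⟨h, h'⟩
  obtain ⟨d, rfl⟩ : ∃ d, ℓ = .inl d := by
    rcases ℓ with d | _ | m
    · exact ⟨d, rfl⟩
    all_goals simp only [leafColor] at h; omega
  obtain ⟨d', rfl⟩ : ∃ d', ℓ' = .inl d' := by
    rcases ℓ' with d' | _ | m'
    · exact ⟨d', rfl⟩
    all_goals simp only [leafColor] at h'; omega
  have e : i + shift d = i' := Fin.ext (by simpa [leafColor] using h)
  have e' : i' + shift d' = i := Fin.ext (by simpa [leafColor] using h')
  rw [← e, add_assoc] at e'
  exact shift_add_shift_ne_zero d d' (add_eq_left.mp e')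

def edgeColor : Vertex s → Vertex s → ℕ
  | corner a, corner b => triangleColor a b
  | corner _, child _ i | child _ i, corner _ => 3 + i
  | child _ _, leaf a i ℓ | leaf a i ℓ, child _ _ => leafColor a i ℓ
  | _, _ => 0

lemma edgeColor_comm (u v : Vertex s) : edgeColor u v = edgeColor v u := by
  cases u <;> cases v <;> simp [edgeColor, triangleColor_comm]

def coloring (s : ℕ) : Sym2 (Vertex s) → ℕ := Sym2.lift ⟨edgeColor, edgeColor_comm⟩

@[simp] lemma coloring_mk (u v : Vertex s) : coloring s s(u, v) = edgeColor u v := rfl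

lemma coloring_lt {u v : Vertex s} (h : (graph s).Adj u v) : coloring s s(u, v) < 3 * s + 5 := by
  cases u with
  | corner a =>
    rcases adj_corner_iff.mp h with ⟨b, hab, rfl⟩ | ⟨i, rfl⟩
    · have := triangleColor_lt hab; simp only [coloring_mk, edgeColor]; omega
    · simp only [coloring_mk, edgeColor]; omega
  | child a i =>
    rcases adj_child_iff.mp h with rfl | ⟨ℓ, rfl⟩
    · simp only [coloring_mk, edgeColor]; omega
    · exact leafColor_lt a i ℓ
  | leaf a i ℓ =>
    obtain rfl := adj_leaf_iff.mp h
    exact leafColor_lt a i ℓ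

lemma coloring_proper ⦃u v w : Vertex s⦄ (hv : (graph s).Adj u v) (hw : (graph s).Adj u w)
    (hvw : v ≠ w) : coloring s s(u, v) ≠ coloring s s(u, w) := by
  cases u with
  | corner a =>
    rcases adj_corner_iff.mp hv with ⟨b, hab, rfl⟩ | ⟨i, rfl⟩ <;>
      rcases adj_corner_iff.mp hw with ⟨b', hab', rfl⟩ | ⟨i', rfl⟩
    · exact fun h => hvw (congrArg corner (triangleColor_injective hab hab' h))
    · have := triangleColor_lt hab; simp only [coloring_mk, edgeColor]; omega
    · have := triangleColor_lt hab'; simp only [coloring_mk, edgeColor]; omega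
    · simpa [edgeColor, Fin.val_inj] using hvw
  | child a i =>
    rcases adj_child_iff.mp hv with rfl | ⟨ℓ, rfl⟩ <;>
      rcases adj_child_iff.mp hw with rfl | ⟨ℓ', rfl⟩
    · exact absurd rfl hvw
    · exact (leafColor_ne_childColor a i ℓ').symm
    · exact leafColor_ne_childColor a i ℓ
    · exact (leafColor_injective a i).ne fun h => hvw (h ▸ rfl)
  | leaf a i ℓ => exact absurd ((adj_leaf_iff.mp hv).trans (adj_leaf_iff.mp hw).symm) hvw

lemma ne_leaf_of_adj_of_adj {u v w : Vertex s} (hu : (graph s).Adj u v) (hw : (graph s).Adj v w)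
    (huw : u ≠ w) (a : Fin 3) (i : Fin (2 * s + 1)) ℓ : v ≠ leaf a i ℓ := by
  rintro rfl
  exact huw ((adj_leaf_iff.mp hu.symm).trans (adj_leaf_iff.mp hw).symm)

lemma exists_eq_corner_of_path {v₀ v₁ v₂ v₃ v₄ : Vertex s} (h₀₁ : (graph s).Adj v₀ v₁)
    (h₁₂ : (graph s).Adj v₁ v₂) (h₂₃ : (graph s).Adj v₂ v₃) (h₃₄ : (graph s).Adj v₃ v₄)
    (h₀₂ : v₀ ≠ v₂) (h₁₃ : v₁ ≠ v₃) (h₄₂ : v₄ ≠ v₂) : ∃ b, v₂ = corner b := by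
  cases v₂ with
  | corner b => exact ⟨b, rfl⟩
  | child a i =>
    rcases adj_child_iff.mp h₁₂.symm with rfl | ⟨ℓ, rfl⟩
    · rcases adj_child_iff.mp h₂₃ with rfl | ⟨ℓ', rfl⟩
      · exact absurd rfl h₁₃
      · exact absurd rfl (ne_leaf_of_adj_of_adj h₂₃ h₃₄ h₄₂.symm a i ℓ')
    · exact absurd rfl (ne_leaf_of_adj_of_adj h₀₁ h₁₂ h₀₂ a i ℓ)
  | leaf a i ℓ => exact absurd rfl (ne_leaf_of_adj_of_adj h₁₂ h₂₃ h₁₃ a i ℓ)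

lemma eq_leaf_of_adj_child {a : Fin 3} {i : Fin (2 * s + 1)} {v : Vertex s}
    (h : (graph s).Adj (child a i) v) (hv : v ≠ corner a) : ∃ ℓ, v = leaf a i ℓ :=
  (adj_child_iff.mp h).resolve_left hv

lemma not_bicolored_of_child {b : Fin 3} {i : Fin (2 * s + 1)} {v₀ v₃ v₄ : Vertex s}
    (h₀ : (graph s).Adj v₀ (child b i)) (h₀₂ : v₀ ≠ corner b) (h₃ : (graph s).Adj (corner b) v₃)
    (h₁₃ : child b i ≠ v₃) (h₃₄ : (graph s).Adj v₃ v₄) (h₄₂ : v₄ ≠ corner b) :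
    ¬ (coloring s s(v₀, child b i) = coloring s s(corner b, v₃) ∧
      coloring s s(child b i, corner b) = coloring s s(v₃, v₄)) := by
  rintro ⟨hA, hB⟩
  obtain ⟨ℓ, rfl⟩ := eq_leaf_of_adj_child h₀.symm h₀₂
  rcases adj_corner_iff.mp h₃ with ⟨c, hbc, rfl⟩ | ⟨i', rfl⟩
  · exact leafColor_ne_triangleColor hbc i ℓ hA
  · obtain ⟨ℓ', rfl⟩ := eq_leaf_of_adj_child h₃₄ h₄₂
    exact not_leafColor_eq_childColor_and ℓ ℓ' ⟨hA, hB.symm⟩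

lemma coloring_isStarEdgeColoring : IsStarEdgeColoring (graph s) (coloring s) := by
  refine ⟨coloring_proper, ?_⟩
  rintro v₀ v₁ v₂ v₃ v₄ h₀₁ h₁₂ h₂₃ h₃₄ - h₀₂ h₀₃ - h₁₃ - - h₄₂ - ⟨hA, hB⟩
  obtain ⟨b, rfl⟩ := exists_eq_corner_of_path h₀₁ h₁₂ h₂₃ h₃₄ h₀₂ h₁₃ h₄₂
  rcases adj_corner_iff.mp h₁₂.symm with ⟨a, hba, rfl⟩ | ⟨i, rfl⟩
  · rcases adj_corner_iff.mp h₂₃ with ⟨c, hbc, rfl⟩ | ⟨i, rfl⟩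
    · rcases adj_corner_iff.mp h₀₁.symm with ⟨d, had, rfl⟩ | ⟨i, rfl⟩
      · -- `v₀, v₁, v₂, v₃` would be four distinct corners
        simp only [ne_eq, corner.injEq] at *
        omega
      · have := triangleColor_lt hbc
        simp only [coloring_mk, edgeColor] at hA
        omega
    · refine not_bicolored_of_child h₃₄.symm h₄₂ h₁₂.symm h₁₃.symm h₀₁.symm h₀₂ ⟨?_, ?_⟩
      · rw [Sym2.eq_swap, ← hB, Sym2.eq_swap]
      · rw [Sym2.eq_swap, ← hA, Sym2.eq_swap]
  · exact not_bicolored_of_child h₀₁ h₀₂ h₂₃ h₁₃ h₃₄ h₄₂ ⟨hA, hB⟩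

lemma starColorable_graph (s : ℕ) : StarColorable (graph s) (3 * s + 5) :=
  ⟨coloring s, fun _ _ => coloring_lt, coloring_isStarEdgeColoring⟩

lemma not_starColorable_graph (s : ℕ) : ¬ StarColorable (graph s) (3 * s + 4) :=
  not_starColorable_of_triangle (t := s + 1) (r := .corner 0) (x := .corner 1) (y := .corner 2)
    (by simp) (by simp) (by simp) (fun _ => degree_of_adj_corner)
    (fun _ => degree_of_adj_corner) (fun _ => degree_of_adj_corner)

end ExtremalCactus

/-- For every odd `Δ ≥ 3` there exists a cactus with maximum degree `Δ` and star
chromatic index exactly `⌊3Δ/2⌋ + 1`. -/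
theorem exists_cactus_with_extremal_starChromaticIndex (Δ : ℕ) (hΔ3 : 3 ≤ Δ)
    (hodd : Odd Δ) :
    ∃ (n : ℕ) (G : SimpleGraph (Fin n)) (_ : DecidableRel G.Adj),
      IsCactus G ∧ G.maxDegree = Δ ∧
      starChromaticIndex G = 3 * Δ / 2 + 1 := by
  classical
  obtain ⟨s, rfl⟩ : ∃ s, Δ = 2 * s + 3 := by
    obtain ⟨m, rfl⟩ := hodd
    exact ⟨m - 1, by omega⟩
  let e := (ExtremalCactus.graph s).overFinIso rfl
  refine ⟨_, _, inferInstance, ExtremalCactus.isCactus_graph.of_embedding e.symm.toEmbedding, ?_, ?_⟩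
  · rw [← e.maxDegree_eq, ExtremalCactus.maxDegree_graph]
  · rw [show 3 * (2 * s + 3) / 2 + 1 = 3 * s + 4 + 1 by omega]
    exact starChromaticIndex_eq_succ_s10 (e.starColorable_iff.mp (ExtremalCactus.starColorable_graph s))
      (e.starColorable_iff.not.mp (ExtremalCactus.not_starColorable_graph s))
end

section
/- If T is a tree with maximum degree Δ, then χ'_s(T) ≤ ⌊3Δ/2⌋. -/
open SimpleGraph Finset

/-!
Root the tree and colour, level by level, the edges from each vertex to its children with
`Δ + ⌊Δ/2⌋ = ⌊3Δ/2⌋` colours; `col x` denotes the colour of the edge from `x` to its parent.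
A path with four edges in a rooted tree climbs and then descends, so up to reversal a
bichromatic one either
* descends along `v₁v₂, v₂v₃, v₃v₄` with `col v₄ = col v₂`, while `col v₃` occurs at `v₁`; or
* turns at `v₂`, with `col v₀ = col v₃` and `col v₄ = col v₁` for children `v₀` of `v₁` and `v₄`
  of `v₃`.
The first is excluded by forbidding `col v₂` below `v₃` whenever `col v₃` occurs at `v₁`; the
second by a tournament on every set of siblings, where the children of `y` avoid the colour of
each sibling that `y` beats. In a near-regular tournament on `m ≤ Δ - 1` siblings every vertex
beats at most `⌊m/2⌋` of them. All colours forbidden below a vertex occur at its parent, so at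
least `⌊Δ/2⌋` colours are fresh there; spending them on the siblings of largest out-degree keeps
every forbidden set small enough for the children that still have to be coloured.
-/

namespace CircularTournament

/-- In the circular tournament on `range m`, vertex `i` beats the next `arcLength m i` vertices
cyclically. -/
def arcLength (m i : ℕ) : ℕ := if i < m / 2 then m / 2 else (m - 1) / 2

def arc (m i : ℕ) : Finset ℕ := (Icc 1 (arcLength m i)).image fun k => (i + k) % m

theorem card_arc_le (m i : ℕ) : #(arc m i) ≤ arcLength m i :=
  card_image_le.trans (by simp)

theorem arc_subset_range {m : ℕ} (hm : 0 < m) (i : ℕ) : arc m i ⊆ range m := by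
  intro j hj
  obtain ⟨k, -, rfl⟩ := mem_image.1 hj
  exact mem_range.2 (Nat.mod_lt _ hm)

theorem mem_arc_or_mem_arc {m i j : ℕ} (hi : i < m) (hj : j < m) (hij : i ≠ j) :
    j ∈ arc m i ∨ i ∈ arc m j := by
  wlog hlt : i < j generalizing i j
  · exact (this hj hi hij.symm (by omega)).symm
  simp only [arc, mem_image, mem_Icc]
  by_cases hnear : j - i ≤ arcLength m i
  · exact .inl ⟨j - i, ⟨by omega, hnear⟩, by rw [Nat.add_sub_cancel' hlt.le, Nat.mod_eq_of_lt hj]⟩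
  · refine .inr ⟨m - (j - i), ⟨by omega, ?_⟩, ?_⟩
    · simp only [arcLength] at hnear ⊢
      split_ifs at hnear ⊢ <;> omega
    · rw [show j + (m - (j - i)) = i + m by omega, Nat.add_mod_right, Nat.mod_eq_of_lt hi]

end CircularTournament

theorem exists_injOn_range_fresh_first (A S : Finset ℕ) :
    ∃ g : ℕ → ℕ, Set.InjOn g (range #A) ∧ (∀ i < #A, g i ∈ A) ∧ ∀ i < #(A \ S), g i ∉ S := by
  set L := (A \ S).toList ++ (A ∩ S).toList
  have hlen : L.length = #A := by simp [L, card_sdiff_add_card_inter]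
  have hnodup : L.Nodup := List.nodup_append.2 ⟨nodup_toList _, nodup_toList _, by
    simp only [mem_toList, mem_sdiff, mem_inter]
    rintro a ⟨-, ha⟩ b ⟨-, hb⟩ rfl
    exact ha hb⟩
  refine ⟨fun i => L.getD i 0, ?_, ?_, ?_⟩
  · intro i hi j hj hij
    simp only [coe_range, Set.mem_Iio] at hi hj
    rw [← hlen] at hi hj
    simp only [List.getD_eq_getElem _ _ hi, List.getD_eq_getElem _ _ hj] at hij
    exact (hnodup.getElem_inj_iff).1 hij
  · intro i hi
    rw [← hlen] at hi
    have := List.getElem_mem hi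
    simp only [List.getD_eq_getElem _ _ hi]
    simp only [L, List.mem_append, mem_toList, mem_sdiff, mem_inter] at this
    tauto
  · intro i hi
    have hi' : i < (A \ S).toList.length := by simpa using hi
    simp only [L, List.getD_append _ _ _ _ hi', List.getD_eq_getElem _ _ hi']
    exact (mem_sdiff.1 (mem_toList.1 (List.getElem_mem hi'))).2

theorem Finset.exists_bijOn_range {α : Type*} (s : Finset α) :
    ∃ f : α → ℕ, Set.BijOn f s (range #s) := by
  classical
  refine ⟨fun x => if hx : x ∈ s then s.equivFin ⟨x, hx⟩ else 0, ?_, ?_, ?_⟩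
  · intro x hx
    simp [dif_pos (mem_coe.1 hx)]
  · intro x hx y hy hxy
    simp only [dif_pos (mem_coe.1 hx), dif_pos (mem_coe.1 hy), Fin.val_inj,
      EmbeddingLike.apply_eq_iff_eq, Subtype.mk.injEq] at hxy
    exact hxy
  · intro i hi
    have hi : i < #s := by simpa using hi
    refine ⟨s.equivFin.symm ⟨i, hi⟩, (s.equivFin.symm ⟨i, hi⟩).2, ?_⟩
    simp

/-- `c` colours `s` injectively from `A`, and `b x` is the set of colours of the elements that `x`
beats in a tournament on `s`; a colour from `S` costs one unit of the budget `q`. -/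
structure IsTournamentColoring {α : Type*} [DecidableEq α] (s : Finset α) (A S : Finset ℕ)
    (q : ℕ) (c : α → ℕ) (b : α → Finset ℕ) : Prop where
  injOn : Set.InjOn c s
  mem : ∀ x ∈ s, c x ∈ A
  mem_or_mem : ∀ x ∈ s, ∀ y ∈ s, x ≠ y → c y ∈ b x ∨ c x ∈ b y
  subset_image : ∀ x ∈ s, b x ⊆ s.image c
  card_add_le : ∀ x ∈ s, #(b x) + (if c x ∈ S then 1 else 0) ≤ q

open CircularTournament in
theorem exists_isTournamentColoring {α : Type*} [DecidableEq α] (s : Finset α) {q : ℕ}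
    {A S : Finset ℕ} (hA : #s ≤ #A)
    (hS : (#s ≤ 2 * q + 1 ∧ #s ≤ #(A \ S)) ∨ (#s ≤ 2 * q ∧ q ≤ #(A \ S))) :
    ∃ (c : α → ℕ) (b : α → Finset ℕ), IsTournamentColoring s A S q c b := by
  obtain ⟨idx, hidx⟩ := s.exists_bijOn_range
  obtain ⟨g, hinj, hgA, hfresh⟩ := exists_injOn_range_fresh_first A S
  have hlt : ∀ x ∈ s, idx x < #s := fun x hx => by simpa using hidx.mapsTo hx
  have hbudget : ∀ i < #s, arcLength #s i + (if g i ∈ S then 1 else 0) ≤ q := fun i hi => by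
    unfold arcLength
    by_cases hi' : i < #(A \ S)
    · rw [if_neg (hfresh i hi')]
      split_ifs <;> omega
    · split_ifs <;> omega
  refine ⟨g ∘ idx, fun x => (arc #s (idx x)).image g,
    ⟨(hinj.mono (coe_subset.2 (range_subset_range.2 hA))).comp hidx.injOn hidx.mapsTo,
      fun x hx => hgA _ ((hlt x hx).trans_le hA), fun x hx y hy hxy => ?_, fun x hx => ?_,
      fun x hx => ?_⟩⟩
  · have hne : idx x ≠ idx y := fun h => hxy (hidx.injOn hx hy h)
    exact (mem_arc_or_mem_arc (hlt x hx) (hlt y hy) hne).imp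
      (mem_image_of_mem g) (mem_image_of_mem g)
  · intro a ha
    obtain ⟨j, hj, rfl⟩ := mem_image.1 ha
    obtain ⟨y, hy, rfl⟩ := hidx.surjOn (arc_subset_range (card_pos.2 ⟨x, hx⟩) _ hj)
    exact mem_image_of_mem _ hy
  · exact (Nat.add_le_add_right (card_image_le.trans (card_arc_le _ _)) _).trans
      (hbudget _ (hlt x hx))

/-- `parent root` is a junk value. -/
structure Rooting (V : Type*) where
  root : V
  parent : V → V
  depth : V → ℕ
  depth_parent : ∀ v ≠ root, depth (parent v) + 1 = depth v

namespace Rooting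

variable {V : Type*}

def Orients (R : Rooting V) (G : SimpleGraph V) : Prop :=
  ∀ a b, G.Adj a b ↔ (b ≠ R.root ∧ R.parent b = a) ∨ (a ≠ R.root ∧ R.parent a = b)

variable {R : Rooting V} {G : SimpleGraph V}

theorem Orients.adj_parent (hR : R.Orients G) {v : V} (hv : v ≠ R.root) :
    G.Adj (R.parent v) v :=
  (hR _ _).2 (.inl ⟨hv, rfl⟩)

theorem parent_parent_ne {v : V} (hv : v ≠ R.root) (hp : R.parent v ≠ R.root) :
    R.parent (R.parent v) ≠ v := by
  intro h
  have h₁ := R.depth_parent v hv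
  have h₂ := R.depth_parent _ hp
  rw [h] at h₂
  omega

section Labelling

variable [DecidableEq V]

variable (R) in
/-- Exactly one endpoint of an edge of the tree is the parent of the other, so exactly one
summand is nonzero: an edge gets the colour of its lower endpoint. -/
def edgeColor (col : V → ℕ) : Sym2 V → ℕ :=
  Sym2.lift ⟨fun a b => (if b ≠ R.root ∧ R.parent b = a then col b else 0) +
    (if a ≠ R.root ∧ R.parent a = b then col a else 0), fun _ _ => add_comm _ _⟩

theorem edgeColor_parent (col : V → ℕ) {v : V} (hv : v ≠ R.root) :
    R.edgeColor col s(R.parent v, v) = col v := by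
  have : ¬(R.parent v ≠ R.root ∧ R.parent (R.parent v) = v) :=
    fun h => parent_parent_ne hv h.1 h.2
  simp [edgeColor, hv, this]

theorem edgeColor_parent' (col : V → ℕ) {v : V} (hv : v ≠ R.root) :
    R.edgeColor col s(v, R.parent v) = col v := by
  rw [Sym2.eq_swap, edgeColor_parent col hv]

variable [Fintype V]

variable (R) in
def children (w : V) : Finset V := {x | x ≠ R.root ∧ R.parent x = w}

@[simp]
theorem mem_children {w x : V} : x ∈ R.children w ↔ x ≠ R.root ∧ R.parent x = w := by
  simp [children]

variable (R) in
def degree (w : V) : ℕ := #(R.children w) + if w = R.root then 0 else 1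

theorem depth_eq_of_mem_children {w y : V} (hy : y ∈ R.children w) :
    R.depth y = R.depth w + 1 := by
  obtain ⟨hy', rfl⟩ := R.mem_children.1 hy
  exact (R.depth_parent y hy').symm

variable (R) in
def colorsAt (col : V → ℕ) (u : V) : Finset ℕ :=
  (R.children u).image col ∪ if u = R.root then ∅ else {col u}

variable (R) in
/-- The colours whose use on a child of `w` forces one more forbidden colour on the
grandchildren of `w`. -/
def surcharge (col : V → ℕ) (w : V) : Finset ℕ :=
  if w = R.root then ∅ else R.colorsAt col (R.parent w)

variable (R) in
def forbidden (col : V → ℕ) (beat : V → Finset ℕ) (w : V) : Finset ℕ :=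
  if w = R.root then ∅ else
    insert (col w) (beat w) ∪ if col w ∈ R.surcharge col (R.parent w) then {col (R.parent w)} else ∅

variable (R) in
/-- `beat x` is the set of colours of the siblings of `x` that `x` beats. -/
structure GoodAt (K : ℕ) (col : V → ℕ) (beat : V → Finset ℕ) (x : V) : Prop where
  lt : col x < K
  ne_of_sibling : ∀ y ∈ R.children (R.parent x), y ≠ x → col y ≠ col x
  mem_beat_or_mem_beat : ∀ y ∈ R.children (R.parent x), y ≠ x → col y ∈ beat x ∨ col x ∈ beat y
  notMem_forbidden : col x ∉ R.forbidden col beat (R.parent x)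
  beat_subset : beat x ⊆ (R.children (R.parent x)).image col
  card_le : #(R.children x) + #(R.forbidden col beat x) ≤ K

variable {K : ℕ} {col col' : V → ℕ} {beat beat' : V → Finset ℕ} {x : V}

theorem GoodAt.ne_parent (h : R.GoodAt K col beat x) (hx : R.parent x ≠ R.root) :
    col x ≠ col (R.parent x) := by
  have := h.notMem_forbidden
  rw [forbidden, if_neg hx] at this
  exact fun heq => this (mem_union_left _ (heq ▸ mem_insert_self _ _))

theorem GoodAt.notMem_beat_parent (h : R.GoodAt K col beat x) (hx : R.parent x ≠ R.root) :
    col x ∉ beat (R.parent x) := by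
  have := h.notMem_forbidden
  rw [forbidden, if_neg hx] at this
  exact fun hmem => this (mem_union_left _ (mem_insert_of_mem hmem))

theorem GoodAt.ne_parent_parent (h : R.GoodAt K col beat x) (hx : R.parent x ≠ R.root)
    (hx' : R.parent (R.parent x) ≠ R.root)
    (hmem : col (R.parent x) ∈ R.colorsAt col (R.parent (R.parent (R.parent x)))) :
    col x ≠ col (R.parent (R.parent x)) := by
  have := h.notMem_forbidden
  rw [forbidden, if_neg hx, surcharge, if_neg hx', if_pos hmem] at this
  exact fun heq => this (mem_union_right _ (heq ▸ mem_singleton_self _))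

theorem Orients.edgeColor_mem_colorsAt (hR : R.Orients G) (col : V → ℕ) {a b : V}
    (h : G.Adj a b) : R.edgeColor col s(a, b) ∈ R.colorsAt col a := by
  rcases (hR a b).1 h with ⟨hb, rfl⟩ | ⟨ha, rfl⟩
  · rw [edgeColor_parent col hb]
    exact mem_union_left _ (mem_image_of_mem col (R.mem_children.2 ⟨hb, rfl⟩))
  · rw [edgeColor_parent' col ha, colorsAt, if_neg ha]
    exact mem_union_right _ (mem_singleton_self _)

theorem Orients.edgeColor_lt (hR : R.Orients G) (hgood : ∀ x ≠ R.root, R.GoodAt K col beat x)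
    {u v : V} (h : G.Adj u v) : R.edgeColor col s(u, v) < K := by
  rcases (hR u v).1 h with ⟨hv, rfl⟩ | ⟨hu, rfl⟩
  · exact edgeColor_parent col hv ▸ (hgood v hv).lt
  · exact edgeColor_parent' col hu ▸ (hgood u hu).lt

theorem Orients.not_bichromatic_of_descending (hR : R.Orients G)
    (hgood : ∀ x ≠ R.root, R.GoodAt K col beat x) {v₀ v₁ v₂ v₃ v₄ : V}
    (h₀₁ : G.Adj v₀ v₁) (h₃₄ : G.Adj v₃ v₄) (hv₂ : v₂ ≠ R.root) (hp₂ : R.parent v₂ = v₁)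
    (hv₃ : v₃ ≠ R.root) (hp₃ : R.parent v₃ = v₂) (h₄₂ : v₄ ≠ v₂)
    (e₁ : R.edgeColor col s(v₀, v₁) = R.edgeColor col s(v₂, v₃))
    (e₂ : R.edgeColor col s(v₁, v₂) = R.edgeColor col s(v₃, v₄)) : False := by
  obtain ⟨hv₄, hp₄⟩ : v₄ ≠ R.root ∧ R.parent v₄ = v₃ := by
    rcases (hR _ _).1 h₃₄ with h | ⟨-, h⟩
    · exact h
    · exact absurd (h.symm.trans hp₃) h₄₂
  have hmem := hR.edgeColor_mem_colorsAt col h₀₁.symm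
  subst hp₄ hp₃ hp₂
  rw [Sym2.eq_swap, e₁, edgeColor_parent col hv₃] at hmem
  rw [edgeColor_parent col hv₂, edgeColor_parent col hv₄] at e₂
  exact (hgood v₄ hv₄).ne_parent_parent hv₃ hv₂ hmem e₂.symm

theorem Orients.not_bichromatic_of_valley (hR : R.Orients G)
    (hgood : ∀ x ≠ R.root, R.GoodAt K col beat x) {v₀ v₁ v₂ v₃ v₄ : V}
    (h₀₁ : G.Adj v₀ v₁) (h₃₄ : G.Adj v₃ v₄) (hv₁ : v₁ ≠ R.root) (hp₁ : R.parent v₁ = v₂)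
    (hv₃ : v₃ ≠ R.root) (hp₃ : R.parent v₃ = v₂) (h₀₂ : v₀ ≠ v₂) (h₁₃ : v₁ ≠ v₃)
    (h₄₂ : v₄ ≠ v₂)
    (e₁ : R.edgeColor col s(v₀, v₁) = R.edgeColor col s(v₂, v₃))
    (e₂ : R.edgeColor col s(v₁, v₂) = R.edgeColor col s(v₃, v₄)) : False := by
  obtain ⟨hv₀, hp₀⟩ : v₀ ≠ R.root ∧ R.parent v₀ = v₁ := by
    rcases (hR _ _).1 h₀₁ with ⟨-, h⟩ | h
    · exact absurd (h.symm.trans hp₁) h₀₂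
    · exact h
  obtain ⟨hv₄, hp₄⟩ : v₄ ≠ R.root ∧ R.parent v₄ = v₃ := by
    rcases (hR _ _).1 h₃₄ with h | ⟨-, h⟩
    · exact h
    · exact absurd (h.symm.trans hp₃) h₄₂
  have hsib : v₃ ∈ R.children (R.parent v₁) := R.mem_children.2 ⟨hv₃, hp₃.trans hp₁.symm⟩
  subst hp₀ hp₄ hp₁
  rw [edgeColor_parent' col hv₀, ← hp₃, edgeColor_parent col hv₃] at e₁
  rw [edgeColor_parent' col hv₁, edgeColor_parent col hv₄] at e₂
  rcases (hgood _ hv₁).mem_beat_or_mem_beat _ hsib h₁₃.symm with h | h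
  · exact (hgood v₀ hv₀).notMem_beat_parent hv₁ (e₁ ▸ h)
  · exact (hgood v₄ hv₄).notMem_beat_parent hv₃ (e₂ ▸ h)

theorem Orients.isStarEdgeColoring (hR : R.Orients G)
    (hgood : ∀ x ≠ R.root, R.GoodAt K col beat x) : IsStarEdgeColoring G (R.edgeColor col) := by
  refine ⟨fun u v w huv huw hvw => ?_,
    fun v₀ v₁ v₂ v₃ v₄ h₀₁ h₁₂ h₂₃ h₃₄ _ h₀₂ _ _ h₁₃ _ _ h₄₂ _ ⟨e₁, e₂⟩ => ?_⟩
  · rcases (hR _ _).1 huv with ⟨hv, rfl⟩ | ⟨hu, rfl⟩ <;>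
      rcases (hR _ _).1 huw with ⟨hw, hpw⟩ | ⟨hu', hpu⟩
    · rw [edgeColor_parent col hv, ← hpw, edgeColor_parent col hw]
      exact ((hgood v hv).ne_of_sibling w (R.mem_children.2 ⟨hw, hpw⟩) hvw.symm).symm
    · rw [edgeColor_parent col hv, ← hpu, edgeColor_parent' col hu']
      exact (hgood v hv).ne_parent hu'
    · rw [edgeColor_parent' col hu, ← hpw, edgeColor_parent col hw]
      exact ((hgood w hw).ne_parent (hpw ▸ hu)).symm
    · exact (hvw hpu).elim
  · rcases (hR _ _).1 h₁₂ with ⟨hv₂, hp₂⟩ | ⟨hv₁, hp₁⟩ <;>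
      rcases (hR _ _).1 h₂₃ with ⟨hv₃, hp₃⟩ | ⟨hv₂, hp₂'⟩
    · exact hR.not_bichromatic_of_descending hgood h₀₁ h₃₄ hv₂ hp₂ hv₃ hp₃ h₄₂ e₁ e₂
    · exact h₁₃ (hp₂.symm.trans hp₂')
    · exact hR.not_bichromatic_of_valley hgood h₀₁ h₃₄ hv₁ hp₁ hv₃ hp₃ h₀₂ h₁₃ h₄₂ e₁ e₂
    · exact hR.not_bichromatic_of_descending hgood h₃₄.symm h₀₁.symm hv₂ hp₂' hv₁ hp₁ h₀₂
        (by rw [Sym2.eq_swap (a := v₄), Sym2.eq_swap (a := v₂), e₂])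
        (by rw [Sym2.eq_swap (a := v₃), Sym2.eq_swap (a := v₁), e₁])

theorem card_colorsAt_le (col : V → ℕ) (u : V) : #(R.colorsAt col u) ≤ R.degree u := by
  unfold colorsAt degree
  split_ifs
  · simpa using card_image_le
  · exact (card_union_le _ _).trans (by simpa using card_image_le)

theorem card_forbidden_le (col : V → ℕ) (beat : V → Finset ℕ) (x : V) :
    #(R.forbidden col beat x) ≤
      #(beat x) + (if col x ∈ R.surcharge col (R.parent x) then 1 else 0) + 1 := by
  have := card_insert_le (col x) (beat x)
  by_cases hx : x = R.root
  · simp [forbidden, hx]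
  · rw [forbidden, if_neg hx]
    split_ifs
    · exact (card_union_le _ _).trans (by rw [card_singleton]; omega)
    · rw [union_empty]
      omega

theorem forbidden_subset_colorsAt (hx : x ≠ R.root)
    (hbeat : beat x ⊆ (R.children (R.parent x)).image col) :
    R.forbidden col beat x ⊆ R.colorsAt col (R.parent x) := by
  have hcol : col x ∈ R.colorsAt col (R.parent x) :=
    mem_union_left _ (mem_image_of_mem _ (R.mem_children.2 ⟨hx, rfl⟩))
  rw [forbidden, if_neg hx]
  refine union_subset (insert_subset hcol (hbeat.trans subset_union_left)) ?_
  split_ifs with h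
  · rw [surcharge] at h
    split_ifs at h with hp
    · simp at h
    · rw [singleton_subset_iff, colorsAt, if_neg hp]
      exact mem_union_right _ (mem_singleton_self _)
  · exact empty_subset _

theorem colorsAt_congr {u : V} (h : ∀ y, R.depth y ≤ R.depth u + 1 → col' y = col y) :
    R.colorsAt col' u = R.colorsAt col u := by
  unfold colorsAt
  rw [image_congr fun y hy => h y (R.depth_eq_of_mem_children hy).le, h u (Nat.le_succ _)]

theorem surcharge_congr {w : V} (h : ∀ y, R.depth y ≤ R.depth w → col' y = col y) :
    R.surcharge col' w = R.surcharge col w := by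
  unfold surcharge
  split_ifs with hw
  · rfl
  · exact colorsAt_congr fun y hy => h y (R.depth_parent w hw ▸ hy)

theorem forbidden_congr {w : V} (hcol : ∀ y, R.depth y ≤ R.depth w → col' y = col y)
    (hbeat : ∀ y, R.depth y ≤ R.depth w → beat' y = beat y) :
    R.forbidden col' beat' w = R.forbidden col beat w := by
  by_cases hw : w = R.root
  · simp [forbidden, hw]
  · have hp : R.depth (R.parent w) ≤ R.depth w := R.depth_parent w hw ▸ Nat.le_succ _
    rw [forbidden, forbidden, if_neg hw, if_neg hw, hcol w le_rfl, hbeat w le_rfl,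
      hcol _ hp, surcharge_congr fun y hy => hcol y (hy.trans hp)]

theorem GoodAt.congr (h : R.GoodAt K col beat x) (hx : x ≠ R.root)
    (hcol : ∀ y, R.depth y ≤ R.depth x → col' y = col y)
    (hbeat : ∀ y, R.depth y ≤ R.depth x → beat' y = beat y) : R.GoodAt K col' beat' x := by
  have hp : R.depth (R.parent x) ≤ R.depth x := R.depth_parent x hx ▸ Nat.le_succ _
  have hsib : ∀ y ∈ R.children (R.parent x), R.depth y ≤ R.depth x := fun y hy =>
    ((R.depth_eq_of_mem_children hy).trans (R.depth_parent x hx)).le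
  refine ⟨hcol x le_rfl ▸ h.lt, fun y hy hyx => ?_, fun y hy hyx => ?_, ?_, ?_, ?_⟩
  · rw [hcol y (hsib y hy), hcol x le_rfl]
    exact h.ne_of_sibling y hy hyx
  · rw [hcol y (hsib y hy), hcol x le_rfl, hbeat y (hsib y hy), hbeat x le_rfl]
    exact h.mem_beat_or_mem_beat y hy hyx
  · rw [hcol x le_rfl, forbidden_congr (fun y hy => hcol y (hy.trans hp))
      (fun y hy => hbeat y (hy.trans hp))]
    exact h.notMem_forbidden
  · rw [hbeat x le_rfl, image_congr fun y hy => hcol y (hsib y hy)]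
    exact h.beat_subset
  · rw [forbidden_congr hcol hbeat]
    exact h.card_le

variable {Δ : ℕ}

theorem exists_isTournamentColoring_children
    (hdeg : ∀ w, R.degree w ≤ Δ) {w : V}
    (hw : w ≠ R.root → R.GoodAt (Δ + Δ / 2) col beat w) :
    ∃ c b, IsTournamentColoring (R.children w) (range (Δ + Δ / 2) \ R.forbidden col beat w)
      (R.surcharge col w) (Δ / 2) c b := by
  have hd := hdeg w
  by_cases hr : w = R.root
  · rw [degree, if_pos hr] at hd
    apply exists_isTournamentColoring
    all_goals simp only [forbidden, surcharge, if_pos hr, sdiff_empty, card_range]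
    all_goals omega
  · rw [degree, if_neg hr] at hd
    have hgood := hw hr
    have hA := le_card_sdiff (R.forbidden col beat w) (range (Δ + Δ / 2))
    have hS := le_card_sdiff (R.colorsAt col (R.parent w)) (range (Δ + Δ / 2))
    have hC := (card_colorsAt_le col (R.parent w)).trans (hdeg _)
    have hF := hgood.card_le
    rw [card_range] at hA hS
    apply exists_isTournamentColoring
    · omega
    · rw [surcharge, if_neg hr, sdiff_sdiff_left,
        sup_eq_right.2 (forbidden_subset_colorsAt hr hgood.beat_subset)]
      omega

theorem goodAt_of_isTournamentColoring
    (hdeg : ∀ w, R.degree w ≤ Δ) (hx : x ≠ R.root)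
    {c : V → ℕ} {b : V → Finset ℕ}
    (hc : IsTournamentColoring (R.children (R.parent x))
      (range (Δ + Δ / 2) \ R.forbidden col beat (R.parent x)) (R.surcharge col (R.parent x))
      (Δ / 2) c b)
    (hcol : ∀ y, R.depth y ≤ R.depth (R.parent x) → col' y = col y)
    (hbeat : ∀ y, R.depth y ≤ R.depth (R.parent x) → beat' y = beat y)
    (hcol' : ∀ y ∈ R.children (R.parent x), col' y = c y)
    (hbeat' : ∀ y ∈ R.children (R.parent x), beat' y = b y) :
    R.GoodAt (Δ + Δ / 2) col' beat' x := by
  have hxw : x ∈ R.children (R.parent x) := R.mem_children.2 ⟨hx, rfl⟩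
  have hA := hc.mem x hxw
  rw [mem_sdiff, mem_range] at hA
  refine ⟨hcol' x hxw ▸ hA.1, fun y hy hyx => ?_, fun y hy hyx => ?_, ?_, ?_, ?_⟩
  · rw [hcol' y hy, hcol' x hxw]
    exact fun h => hyx (hc.injOn hy hxw h)
  · rw [hcol' y hy, hcol' x hxw, hbeat' y hy, hbeat' x hxw]
    exact hc.mem_or_mem x hxw y hy (Ne.symm hyx)
  · rw [hcol' x hxw, forbidden_congr hcol hbeat]
    exact hA.2
  · rw [hbeat' x hxw, image_congr hcol']
    exact hc.subset_image x hxw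
  · have h₁ := R.card_forbidden_le col' beat' x
    rw [surcharge_congr hcol, hcol' x hxw, hbeat' x hxw] at h₁
    have h₂ := hc.card_add_le x hxw
    have h₃ := hdeg x
    rw [degree, if_neg hx] at h₃
    omega

theorem exists_goodAt_of_depth_le
    (hdeg : ∀ w, R.degree w ≤ Δ) (n : ℕ) :
    ∃ (col : V → ℕ) (beat : V → Finset ℕ),
      ∀ x ≠ R.root, R.depth x ≤ n → R.GoodAt (Δ + Δ / 2) col beat x := by
  induction n with
  | zero => exact ⟨0, fun _ => ∅, fun x hx h => absurd h (by have := R.depth_parent x hx; omega)⟩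
  | succ n ih =>
    obtain ⟨col, beat, hgood⟩ := ih
    have hlocal : ∀ w, ∃ (c : V → ℕ) (b : V → Finset ℕ), R.depth w = n →
        IsTournamentColoring (R.children w) (range (Δ + Δ / 2) \ R.forbidden col beat w)
          (R.surcharge col w) (Δ / 2) c b := fun w => by
      by_cases hw : R.depth w = n
      · obtain ⟨c, b, h⟩ := exists_isTournamentColoring_children hdeg fun hr => hgood w hr hw.le
        exact ⟨c, b, fun _ => h⟩
      · exact ⟨0, fun _ => ∅, fun h => absurd h hw⟩
    choose c b hcb using hlocal
    let col' x := if R.depth x = n + 1 then c (R.parent x) x else col x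
    let beat' x := if R.depth x = n + 1 then b (R.parent x) x else beat x
    have hcol : ∀ y, R.depth y ≤ n → col' y = col y := fun y hy => if_neg (by omega)
    have hbeat : ∀ y, R.depth y ≤ n → beat' y = beat y := fun y hy => if_neg (by omega)
    refine ⟨col', beat', fun x hx hxn => ?_⟩
    by_cases hxn' : R.depth x ≤ n
    · exact (hgood x hx hxn').congr hx (fun y hy => hcol y (hy.trans hxn'))
        (fun y hy => hbeat y (hy.trans hxn'))
    · have hd : R.depth (R.parent x) = n := by have := R.depth_parent x hx; omega
      have hnew : ∀ y ∈ R.children (R.parent x), R.depth y = n + 1 ∧ R.parent y = R.parent x :=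
        fun y hy => ⟨hd ▸ R.depth_eq_of_mem_children hy, (R.mem_children.1 hy).2⟩
      refine goodAt_of_isTournamentColoring hdeg hx (hcb _ hd) (hd ▸ hcol) (hd ▸ hbeat)
        (fun y hy => ?_) (fun y hy => ?_)
      · simp only [col', if_pos (hnew y hy).1, (hnew y hy).2]
      · simp only [beat', if_pos (hnew y hy).1, (hnew y hy).2]

theorem exists_goodAt (hdeg : ∀ w, R.degree w ≤ Δ) :
    ∃ (col : V → ℕ) (beat : V → Finset ℕ), ∀ x ≠ R.root, R.GoodAt (Δ + Δ / 2) col beat x := by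
  obtain ⟨col, beat, h⟩ := exists_goodAt_of_depth_le hdeg (univ.sup R.depth)
  exact ⟨col, beat, fun x hx => h x hx (le_sup (mem_univ x))⟩

theorem Orients.degree_le [DecidableRel G.Adj] (hR : R.Orients G) (w : V) :
    R.degree w ≤ G.degree w := by
  rw [degree, ← card_neighborFinset_eq_degree]
  have hsub : R.children w ⊆ G.neighborFinset w := fun x hx => by
    obtain ⟨hx', rfl⟩ := R.mem_children.1 hx
    exact (mem_neighborFinset _ _ _).2 (hR.adj_parent hx')
  split_ifs with hw
  · simpa using card_le_card hsub
  · have hnotMem : R.parent w ∉ R.children w := fun h =>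
      parent_parent_ne hw (R.mem_children.1 h).1 (R.mem_children.1 h).2
    rw [← card_insert_of_notMem hnotMem]
    exact card_le_card (insert_subset ((mem_neighborFinset _ _ _).2 (hR.adj_parent hw).symm) hsub)

theorem Orients.starColorable [DecidableRel G.Adj] (hR : R.Orients G)
    (hΔ : ∀ v, G.degree v ≤ Δ) : StarColorable G (Δ + Δ / 2) := by
  obtain ⟨col, beat, hgood⟩ := exists_goodAt fun w => (hR.degree_le w).trans (hΔ w)
  exact ⟨R.edgeColor col, fun u v h => hR.edgeColor_lt hgood h, hR.isStarEdgeColoring hgood⟩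

end Labelling

end Rooting

namespace SimpleGraph.IsTree

variable {V : Type*} {G : SimpleGraph V}

theorem exists_adj_dist_add_one (ht : G.IsTree) (r : V) {v : V} (hv : v ≠ r) :
    ∃ u, G.Adj u v ∧ G.dist r u + 1 = G.dist r v := by
  obtain ⟨p, hp⟩ := ht.connected.exists_walk_length_eq_dist v r
  cases p with
  | nil => exact absurd rfl hv
  | cons h p =>
    refine ⟨_, h.symm, ?_⟩
    have h₁ : G.dist r _ ≤ p.length := dist_comm ▸ G.dist_le p
    rw [Walk.length_cons, dist_comm] at hp
    rcases ht.dist_eq_dist_add_one_of_adj r h with h₂ | h₂ <;> omega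

theorem eq_of_adj_of_dist_add_one (ht : G.IsTree) (r : V) {u u' v : V} (hu : G.Adj u v)
    (hu' : G.Adj u' v) (hd : G.dist r u + 1 = G.dist r v) (hd' : G.dist r u' + 1 = G.dist r v) :
    u = u' := by
  classical
  obtain ⟨q, hq, -⟩ := (ht.connected r v).exists_path_of_dist
  have key : ∀ u, G.Adj u v → G.dist r u + 1 = G.dist r v → u = q.penultimate := by
    intro u hu hd
    obtain ⟨p, hp, hpl⟩ := (ht.connected r u).exists_path_of_dist
    refine ht.isAcyclic.eq_penultimate_of_adj_end hq hu.symm ?_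
    by_contra hnot
    have hv := ht.isAcyclic.mem_support_of_ne_mem_support_of_adj_of_isPath hp hq hu hnot
    have := (G.dist_le (p.takeUntil v hv)).trans (p.length_takeUntil_le_length hv)
    omega
  exact (key u hu hd).trans (key u' hu' hd').symm

theorem exists_rooting_orients (ht : G.IsTree) : ∃ R : Rooting V, R.Orients G := by
  obtain ⟨r⟩ := ht.connected.nonempty
  have hpar : ∀ v, ∃ u, v ≠ r → G.Adj u v ∧ G.dist r u + 1 = G.dist r v := fun v => by
    by_cases hv : v = r
    · exact ⟨v, fun h => absurd hv h⟩
    · obtain ⟨u, hu⟩ := ht.exists_adj_dist_add_one r hv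
      exact ⟨u, fun _ => hu⟩
  choose par hpar using hpar
  refine ⟨⟨r, par, G.dist r, fun v hv => (hpar v hv).2⟩, fun a b => ⟨fun h => ?_, ?_⟩⟩
  · have hne : ∀ {v}, G.dist r v ≠ 0 → v ≠ r := fun h hv => h (hv ▸ dist_self)
    rcases ht.dist_eq_dist_add_one_of_adj r h with hab | hab
    · have ha : a ≠ r := hne (by omega)
      exact .inr ⟨ha, ht.eq_of_adj_of_dist_add_one r (hpar a ha).1 h.symm (hpar a ha).2 hab.symm⟩
    · have hb : b ≠ r := hne (by omega)
      exact .inl ⟨hb, ht.eq_of_adj_of_dist_add_one r (hpar b hb).1 h (hpar b hb).2 hab.symm⟩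
  · rintro (⟨hb, rfl⟩ | ⟨ha, rfl⟩)
    · exact (hpar b hb).1
    · exact (hpar a ha).1.symm

end SimpleGraph.IsTree

/-- If `T` is a tree with maximum degree `Δ`, then `χ'ₛ(T) ≤ ⌊3Δ/2⌋`. -/
theorem starChromaticIndex_tree_le {V : Type*} [Fintype V] (G : SimpleGraph V)
    [DecidableRel G.Adj] (Δ : ℕ) (hΔ : ∀ v : V, G.degree v ≤ Δ)
    (htree : G.IsTree) :
    starChromaticIndex G ≤ 3 * Δ / 2 := by
  classical
  obtain ⟨R, hR⟩ := htree.exists_rooting_orients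
  calc starChromaticIndex G ≤ Δ + Δ / 2 := Nat.sInf_le (hR.starColorable hΔ)
    _ ≤ 3 * Δ / 2 := by omega
end
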